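/- arXiv:1902.04197 — 5 statements merged into one kernel-verified Lean document; each statement's English description precedes it below -/
import Mathlib

section
/- Suppose (g^k)_{k∈ℕ} is a sequence of continuous functions on ℝ^d which converges locally uniformly to g, and (μ^k)_{k∈ℕ} is a sequence of Borel probability measures on ℝ^d converging narrowly to μ. Assume there is h: ℝ^d → [0,∞) with compact sublevel sets which is uniformly integrable with respect to (μ^k)_{k∈ℕ} and satisfies |g^k| ≤ h (pointwise) for each k ∈ ℕ. Then lim_{k→∞} ∫_{ℝ^d} g^k dμ^k = ∫_{ℝ^d} g dμ. -/
open MeasureTheory Real Filter Set Topology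

private lemma clamp_lip (R a b : ℝ) :
    |max (-R) (min a R) - max (-R) (min b R)| ≤ |a - b| := by
  simp only [max_def, min_def]
  split_ifs <;> rw [abs_sub_le_iff] <;> constructor <;>
    linarith [le_abs_self (a - b), neg_abs_le (a - b)]

private lemma clamp_dist (R c a : ℝ) (hR : 0 ≤ R) (hac : |a| ≤ c) :
    |a - max (-R) (min a R)| ≤ max (c - R) 0 := by
  obtain ⟨h1, h2⟩ := abs_le.1 hac
  simp only [max_def, min_def]
  split_ifs <;> rw [abs_sub_le_iff] <;> constructor <;> linarith

private lemma aux_lsc_liminf {Ω : Type*} [MeasurableSpace Ω] [TopologicalSpace Ω]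
    [OpensMeasurableSpace Ω]
    {μ : Measure Ω} {μs : ℕ → Measure Ω} {f : Ω → ℝ} (f_mble : Measurable f)
    (f_nn : 0 ≤ f) (f_open : ∀ t : ℝ, IsOpen {x | t < f x})
    (h_opens : ∀ G, IsOpen G → μ G ≤ atTop.liminf (fun i => μs i G)) :
    ∫⁻ x, ENNReal.ofReal (f x) ∂μ ≤ atTop.liminf (fun i => ∫⁻ x, ENNReal.ofReal (f x) ∂(μs i)) := by
  simp_rw [lintegral_eq_lintegral_meas_lt _ (Eventually.of_forall f_nn) f_mble.aemeasurable]
  calc  ∫⁻ (t : ℝ) in Set.Ioi 0, μ {a | t < f a}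
      ≤ ∫⁻ (t : ℝ) in Set.Ioi 0, atTop.liminf (fun i ↦ (μs i) {a | t < f a}) :=
        lintegral_mono (fun t ↦ h_opens _ (f_open t))
    _ ≤ atTop.liminf (fun i ↦ ∫⁻ (t : ℝ) in Set.Ioi 0, (μs i) {a | t < f a}) :=
        lintegral_liminf_le (fun n ↦ Antitone.measurable (fun s t hst ↦
            measure_mono (fun ω hω ↦ lt_of_le_of_lt hst hω)))

private lemma abs_int_le {Ω : Type*} [MeasurableSpace Ω] (ν : MeasureTheory.Measure Ω) (u : Ω → ℝ) :
    |∫ x, u x ∂ν| ≤ ∫ x, |u x| ∂ν := by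
  simpa [Real.norm_eq_abs] using MeasureTheory.norm_integral_le_integral_norm (μ := ν) u

noncomputable section

/-- Lemma 2.1: convergence of integrals of a locally uniformly convergent
sequence of continuous functions against a narrowly convergent sequence of
probability measures, under a uniform integrability domination hypothesis. -/
theorem narrow_convergence_of_dominated
    {d : ℕ}
    (μk : ℕ → Measure (EuclideanSpace ℝ (Fin d)))
    (μ : Measure (EuclideanSpace ℝ (Fin d)))
    [∀ k, IsProbabilityMeasure (μk k)] [IsProbabilityMeasure μ]
    -- narrow convergence μ^k → μ
    (hnarrow : ∀ f : EuclideanSpace ℝ (Fin d) → ℝ, Continuous f →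
      (∃ M, ∀ x, |f x| ≤ M) →
      Tendsto (fun k => ∫ x, f x ∂μk k) atTop (𝓝 (∫ x, f x ∂μ)))
    (g : ℕ → EuclideanSpace ℝ (Fin d) → ℝ) (glim : EuclideanSpace ℝ (Fin d) → ℝ)
    (hgcont : ∀ k, Continuous (g k))
    -- g^k → g locally uniformly
    (hgconv : TendstoLocallyUniformly g glim atTop)
    (h : EuclideanSpace ℝ (Fin d) → ℝ)
    (hnonneg : ∀ x, 0 ≤ h x)
    -- compact sublevel sets
    (hsublevel : ∀ R : ℝ, IsCompact {x | h x ≤ R})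
    (hint : ∀ k, Integrable h (μk k))
    -- uniform integrability of h with respect to (μ^k)
    (hui : ∀ ε > 0, ∃ R : ℝ, ∀ k, ∫ x in {x | R ≤ h x}, h x ∂μk k ≤ ε)
    -- domination |g^k| ≤ h
    (hdom : ∀ k x, |g k x| ≤ h x) :
    Tendsto (fun k => ∫ x, g k x ∂μk k) atTop (𝓝 (∫ x, glim x ∂μ)) := by

  have hlsc : LowerSemicontinuous h :=
    lowerSemicontinuous_iff_isClosed_preimage.2 fun y => (hsublevel y).isClosed
  have mh : Measurable h := hlsc.measurable
  have hglim_cont : Continuous glim := hgconv.continuous (Eventually.of_forall hgcont).frequently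
  have hglim_le : ∀ x, |glim x| ≤ h x := by
    intro x
    have hx : Tendsto (fun k => g k x) atTop (𝓝 (glim x)) :=
      (tendstoLocallyUniformlyOn_univ.2 hgconv).tendsto_at (mem_univ x)
    exact le_of_tendsto ((continuous_abs.tendsto _).comp hx)
      (Eventually.of_forall fun k => hdom k x)
  -- probability measure convergence and open-sets portmanteau
  let P : ℕ → ProbabilityMeasure (EuclideanSpace ℝ (Fin d)) := fun k => ⟨μk k, inferInstance⟩
  let Q : ProbabilityMeasure (EuclideanSpace ℝ (Fin d)) := ⟨μ, inferInstance⟩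
  have hP : Tendsto P atTop (𝓝 Q) := by
    refine ProbabilityMeasure.tendsto_iff_forall_integral_tendsto.mpr fun f => ?_
    exact hnarrow f f.continuous ⟨‖f‖, fun x => by
      simpa [Real.norm_eq_abs] using f.norm_coe_le_norm x⟩
  have h_opens : ∀ G, IsOpen G → μ G ≤ atTop.liminf (fun i => μk i G) := by
    intro G hG
    exact ProbabilityMeasure.le_liminf_measure_open_of_tendsto hP hG
  -- ε setup
  rw [Metric.tendsto_nhds]
  intro ε hε
  set δ := ε / 6 with hδdef
  have hδ : 0 < δ := by positivity
  obtain ⟨R₀, hR₀⟩ := hui δ hδ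
  set R := max R₀ 0 with hRdef
  have hRnn : 0 ≤ R := le_max_right _ _
  have hsubset : ∀ c : ℝ, R ≤ c → (∀ k, ∫ x in {x | c ≤ h x}, h x ∂μk k ≤ δ) := by
    intro c hc k
    refine (setIntegral_mono_set ((hint k).integrableOn) (ae_of_all _ hnonneg) ?_).trans (hR₀ k)
    exact HasSubset.Subset.eventuallyLE fun x hx => le_trans (le_trans (le_max_left _ _) hc) hx
  have hR : ∀ k, ∫ x in {x | R ≤ h x}, h x ∂μk k ≤ δ := hsubset R le_rfl
  set S := 2 * R + 1 with hSdef
  have hS0 : (0:ℝ) < S := by positivity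
  have hStail : ∀ k, ∫ x in {x | S ≤ h x}, h x ∂μk k ≤ δ := hsubset S (by linarith)
  -- the function f = (h - R)⁺
  set f : EuclideanSpace ℝ (Fin d) → ℝ := fun x => max (h x - R) 0 with hfdef
  have f_nn : ∀ x, 0 ≤ f x := fun x => le_max_right _ _
  have f_mble : Measurable f := (mh.sub measurable_const).max measurable_const
  have hmeasRset : MeasurableSet {x : EuclideanSpace ℝ (Fin d) | R ≤ h x} := measurableSet_le measurable_const mh
  have f_le : ∀ x, f x ≤ indicator {x | R ≤ h x} h x := by
    intro x
    by_cases hx : x ∈ {x : EuclideanSpace ℝ (Fin d) | R ≤ h x}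
    · rw [indicator_of_mem hx]
      simp only [mem_setOf_eq] at hx
      exact max_le (by linarith) (hnonneg x)
    · rw [indicator_of_notMem hx]
      simp only [mem_setOf_eq] at hx
      push_neg at hx
      exact max_le (by linarith) le_rfl
  have f_int : ∀ k, Integrable f (μk k) := by
    intro k
    refine (hint k).mono f_mble.aestronglyMeasurable (ae_of_all _ fun x => ?_)
    rw [Real.norm_eq_abs, Real.norm_eq_abs, abs_of_nonneg (f_nn x), abs_of_nonneg (hnonneg x)]
    exact max_le (by linarith [hnonneg x]) (hnonneg x)
  have hfk : ∀ k, ∫ x, f x ∂μk k ≤ δ := by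
    intro k
    calc ∫ x, f x ∂μk k ≤ ∫ x, indicator {x | R ≤ h x} h x ∂μk k :=
          integral_mono (f_int k) ((hint k).indicator hmeasRset) f_le
      _ = ∫ x in {x | R ≤ h x}, h x ∂μk k := integral_indicator hmeasRset
      _ ≤ δ := hR k
  have f_open : ∀ t : ℝ, IsOpen {x : EuclideanSpace ℝ (Fin d) | t < f x} := by
    intro t
    rcases lt_or_ge t 0 with ht | ht
    · have : {x : EuclideanSpace ℝ (Fin d) | t < f x} = univ := eq_univ_of_forall fun x => lt_of_lt_of_le ht (f_nn x)
      rw [this]; exact isOpen_univ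
    · have : {x : EuclideanSpace ℝ (Fin d) | t < f x} = {x : EuclideanSpace ℝ (Fin d) | h x ≤ t + R}ᶜ := by
        ext x
        simp only [mem_setOf_eq, mem_compl_iff, not_le, hfdef, lt_max_iff]
        constructor
        · rintro (hlt | hlt) <;> linarith
        · intro hlt; left; linarith
      rw [this]
      exact (hsublevel (t + R)).isClosed.isOpen_compl
  have hlint : ∫⁻ x, ENNReal.ofReal (f x) ∂μ ≤ ENNReal.ofReal δ := by
    refine (aux_lsc_liminf f_mble f_nn f_open h_opens).trans ?_
    have hbd : ∀ k, ∫⁻ x, ENNReal.ofReal (f x) ∂μk k ≤ ENNReal.ofReal δ := by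
      intro k
      rw [← ofReal_integral_eq_lintegral_ofReal (f_int k) (ae_of_all _ f_nn)]
      exact ENNReal.ofReal_le_ofReal (hfk k)
    calc atTop.liminf (fun i => ∫⁻ x, ENNReal.ofReal (f x) ∂μk i)
        ≤ atTop.liminf (fun _ => ENNReal.ofReal δ) :=
          liminf_le_liminf (Eventually.of_forall hbd)
      _ = ENNReal.ofReal δ := liminf_const _
  have f_int_μ : Integrable f μ := by
    refine ⟨f_mble.aestronglyMeasurable, ?_⟩
    rw [hasFiniteIntegral_iff_ofReal (ae_of_all _ f_nn)]
    exact lt_of_le_of_lt hlint ENNReal.ofReal_lt_top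
  have hfμ : ∫ x, f x ∂μ ≤ δ := by
    rw [integral_eq_lintegral_of_nonneg_ae (ae_of_all _ f_nn) f_mble.aestronglyMeasurable]
    calc (∫⁻ x, ENNReal.ofReal (f x) ∂μ).toReal ≤ (ENNReal.ofReal δ).toReal :=
          ENNReal.toReal_mono ENNReal.ofReal_ne_top hlint
      _ = δ := ENNReal.toReal_ofReal hδ.le
  have h_int_μ : Integrable h μ := by
    refine ((integrable_const R).add f_int_μ).mono mh.aestronglyMeasurable (ae_of_all _ fun x => ?_)
    have hb : h x ≤ R + f x := by
      rcases le_total (h x) R with hx | hx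
      · linarith [f_nn x]
      · have : f x = h x - R := max_eq_left (by linarith)
        linarith
    simpa [Real.norm_eq_abs, abs_of_nonneg (hnonneg x),
      abs_of_nonneg (add_nonneg hRnn (f_nn x))] using hb
  have glim_int : Integrable glim μ := by
    refine h_int_μ.mono hglim_cont.aestronglyMeasurable (ae_of_all _ fun x => ?_)
    rw [Real.norm_eq_abs, Real.norm_eq_abs, abs_of_nonneg (hnonneg x)]
    exact hglim_le x
  have gk_int : ∀ k, Integrable (g k) (μk k) := by
    intro k
    refine (hint k).mono (hgcont k).aestronglyMeasurable (ae_of_all _ fun x => ?_)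
    rw [Real.norm_eq_abs, Real.norm_eq_abs, abs_of_nonneg (hnonneg x)]
    exact hdom k x
  -- truncation
  set T : ℝ → ℝ := fun t => max (-R) (min t R) with hTdef
  have Tcont : Continuous T := continuous_const.max (continuous_id.min continuous_const)
  have Tbdd : ∀ t, |T t| ≤ R := fun t =>
    abs_le.2 ⟨le_max_left _ _, max_le (by linarith) (min_le_right _ _)⟩
  have Tint : ∀ (q : EuclideanSpace ℝ (Fin d) → ℝ), Continuous q → ∀ (ν : Measure (EuclideanSpace ℝ (Fin d))), IsProbabilityMeasure ν →
      Integrable (fun x => T (q x)) ν := by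
    intro q hq ν hν
    refine (integrable_const R).mono ((Tcont.comp hq).aestronglyMeasurable)
      (ae_of_all _ fun x => ?_)
    rw [Real.norm_eq_abs, Real.norm_eq_abs, abs_of_nonneg hRnn]
    exact Tbdd _
  have Tg_int : ∀ k, Integrable (fun x => T (g k x)) (μk k) := fun k =>
    Tint _ (hgcont k) _ inferInstance
  have Tglim_int_k : ∀ k, Integrable (fun x => T (glim x)) (μk k) := fun k =>
    Tint _ hglim_cont _ inferInstance
  have Tglim_int : Integrable (fun x => T (glim x)) μ := Tint _ hglim_cont _ inferInstance
  -- uniform convergence on the compact K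
  set K := {x : EuclideanSpace ℝ (Fin d) | h x ≤ S} with hKdef
  have hKm : MeasurableSet K := measurableSet_le mh measurable_const
  have hunif : ∀ᶠ k in atTop, ∀ x ∈ K, dist (glim x) (g k x) < δ :=
    Metric.tendstoUniformlyOn_iff.1
      ((tendstoLocallyUniformly_iff_forall_isCompact.1 hgconv) K (hsublevel S)) δ hδ
  -- tail measure bound
  have hmeasS : MeasurableSet {x : EuclideanSpace ℝ (Fin d) | S ≤ h x} := measurableSet_le measurable_const mh
  have htailmeas : ∀ k, ((μk k) {x | S ≤ h x}).toReal ≤ δ / S := by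
    intro k
    have h1 : S * ((μk k) {x | S ≤ h x}).toReal ≤ ∫ x in {x | S ≤ h x}, h x ∂μk k := by
      have := setIntegral_mono_on
        (integrableOn_const (measure_ne_top _ _) enorm_ne_top)
        ((hint k).integrableOn) hmeasS (fun x hx => hx)
      rwa [setIntegral_const, smul_eq_mul, mul_comm] at this
    rw [le_div_iff₀ hS0]
    linarith [hStail k]
  -- term 3
  have hterm3 : ∀ᶠ k in atTop, |(∫ x, T (glim x) ∂μk k) - ∫ x, T (glim x) ∂μ| < δ := by
    have h3 := hnarrow (fun x => T (glim x)) (Tcont.comp hglim_cont) ⟨R, fun x => Tbdd _⟩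
    have := Metric.tendsto_nhds.1 h3 δ hδ
    simpa [Real.dist_eq] using this
  -- assemble
  filter_upwards [hunif, hterm3] with k hk1 hk3
  rw [Real.dist_eq]
  have e1 : |(∫ x, g k x ∂μk k) - ∫ x, T (g k x) ∂μk k| ≤ δ := by
    rw [← integral_sub (gk_int k) (Tg_int k)]
    calc |∫ x, (g k x - T (g k x)) ∂μk k| ≤ ∫ x, |g k x - T (g k x)| ∂μk k :=
          abs_int_le _ _
      _ ≤ ∫ x, f x ∂μk k :=
          integral_mono ((gk_int k).sub (Tg_int k)).abs (f_int k)
            (fun x => clamp_dist R (h x) (g k x) hRnn (hdom k x))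
      _ ≤ δ := hfk k
  have e4 : |(∫ x, T (glim x) ∂μ) - ∫ x, glim x ∂μ| ≤ δ := by
    rw [abs_sub_comm, ← integral_sub glim_int Tglim_int]
    calc |∫ x, (glim x - T (glim x)) ∂μ| ≤ ∫ x, |glim x - T (glim x)| ∂μ :=
          abs_int_le _ _
      _ ≤ ∫ x, f x ∂μ :=
          integral_mono (glim_int.sub Tglim_int).abs f_int_μ
            (fun x => clamp_dist R (h x) (glim x) hRnn (hglim_le x))
      _ ≤ δ := hfμ
  have e2 : |(∫ x, T (g k x) ∂μk k) - ∫ x, T (glim x) ∂μk k| ≤ δ + δ := by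
    rw [← integral_sub (Tg_int k) (Tglim_int_k k)]
    have ptwise : ∀ x, |T (g k x) - T (glim x)| ≤ δ + indicator Kᶜ (fun _ => 2 * R) x := by
      intro x
      by_cases hx : x ∈ K
      · rw [indicator_of_notMem (notMem_compl_iff.2 ?_)]
        · have := hk1 x hx
          rw [Real.dist_eq, abs_sub_comm] at this
          linarith [clamp_lip R (g k x) (glim x)]
        · exact hx
      · rw [indicator_of_mem (mem_compl hx)]
        have h1 := Tbdd (g k x)
        have h2 := Tbdd (glim x)
        calc |T (g k x) - T (glim x)| ≤ |T (g k x)| + |T (glim x)| := abs_sub _ _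
          _ ≤ δ + 2 * R := by linarith
    have hind_int : Integrable (fun x => δ + indicator Kᶜ (fun _ => 2 * R) x) (μk k) :=
      (integrable_const δ).add ((integrable_const (2 * R)).indicator hKm.compl)
    calc |∫ x, (T (g k x) - T (glim x)) ∂μk k|
        ≤ ∫ x, |T (g k x) - T (glim x)| ∂μk k := abs_int_le _ _
      _ ≤ ∫ x, (δ + indicator Kᶜ (fun _ => 2 * R) x) ∂μk k :=
          integral_mono ((Tg_int k).sub (Tglim_int_k k)).abs hind_int ptwise
      _ = δ + 2 * R * ((μk k) Kᶜ).toReal := by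
          rw [integral_add (integrable_const δ) ((integrable_const (2 * R)).indicator hKm.compl),
            integral_const, integral_indicator hKm.compl, setIntegral_const, probReal_univ]
          simp [mul_comm, Measure.real]
      _ ≤ δ + δ := by
          have hsub : ((μk k) Kᶜ).toReal ≤ ((μk k) {x | S ≤ h x}).toReal := by
            refine ENNReal.toReal_mono (measure_ne_top _ _) (measure_mono ?_)
            intro x hx
            simp only [hKdef, mem_compl_iff, mem_setOf_eq, not_le] at hx
            exact le_of_lt hx
          have := htailmeas k
          have hfin : 2 * R * ((μk k) Kᶜ).toReal ≤ δ := by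
            calc 2 * R * ((μk k) Kᶜ).toReal ≤ 2 * R * (δ / S) := by
                  apply mul_le_mul_of_nonneg_left (hsub.trans this) (by linarith)
              _ ≤ S * (δ / S) := by
                  apply mul_le_mul_of_nonneg_right (by linarith) (by positivity)
              _ = δ := by field_simp
          linarith
  have t1 := abs_sub_le (∫ x, g k x ∂μk k) (∫ x, T (g k x) ∂μk k) (∫ x, glim x ∂μ)
  have t2 := abs_sub_le (∫ x, T (g k x) ∂μk k) (∫ x, T (glim x) ∂μk k) (∫ x, glim x ∂μ)
  have t3 := abs_sub_le (∫ x, T (glim x) ∂μk k) (∫ x, T (glim x) ∂μ) (∫ x, glim x ∂μ)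
  have : ε = 6 * δ := by rw [hδdef]; ring
  linarith


end
end

section
/- Let x₁,…,x_N ∈ ℝ be distinct, m₁,…,m_N > 0 with Σᵢ mᵢ = 1, v₁,…,v_N ∈ ℝ, and let W satisfy the stated hypotheses. Then there exist continuous, piecewise C² paths γ₁,…,γ_N: [0,∞) → ℝ with the following properties: (i) for each i = 1,…,N and all but finitely many t ∈ (0,∞), γ̈ᵢ(t) = −Σ_{j=1}^N mⱼ W'(γᵢ(t) − γⱼ(t)); (ii) γᵢ(0) = xᵢ and γ̇ᵢ(0+) = vᵢ for each i; (iii) for all i, j and 0 ≤ s ≤ t, γᵢ(s) = γⱼ(s) implies γᵢ(t) = γⱼ(t); (iv) if t > 0, {i₁,…,i_k} ⊂ {1,…,N}, and γ_{i₁}(t) = … = γ_{i_k}(t) ≠ γᵢ(t) for every i ∉ {i₁,…,i_k}, then γ̇_{i_j}(t+) = (m_{i₁} γ̇_{i₁}(t−) + … + m_{i_k} γ̇_{i_k}(t−))/(m_{i₁} + … + m_{i_k}) for j = 1,…,k. -/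
open MeasureTheory Real Filter Set Topology intervalIntegral BoundedContinuousFunction

noncomputable section

/-- Hypotheses on the interaction potential `W`: continuously differentiable,
even, derivative of at most linear growth, and semiconvex with constant `c`. -/
def WHyp (W : ℝ → ℝ) (c : ℝ) : Prop :=
  ContDiff ℝ 1 W ∧ (∀ x, W x = W (-x)) ∧
  (∃ K : ℝ, ∀ x, |deriv W x| ≤ K * (1 + |x|)) ∧
  0 < c ∧ ConvexOn ℝ Set.univ (fun x => W x + c / 2 * x ^ 2)

/-- Sticky particle trajectories: `γ i` is the path of the `i`-th particle,
`rd i t` and `ld i t` are the right and left derivatives `γ̇ᵢ(t+)`, `γ̇ᵢ(t−)`.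
The conditions encode: continuity and piecewise-C² regularity with Newton's
equations (a) holding away from finitely many (collision) times, initial
conditions (b), stickiness (c), and perfectly inelastic collisions (d). -/
def StickyTrajectories (N : ℕ) (x m v : Fin N → ℝ) (W : ℝ → ℝ)
    (γ rd ld : Fin N → ℝ → ℝ) : Prop :=
  (∀ i, ContinuousOn (γ i) (Ici (0:ℝ))) ∧
  -- one-sided derivatives
  (∀ i, ∀ t : ℝ, 0 ≤ t → HasDerivWithinAt (γ i) (rd i t) (Ici t) t) ∧
  (∀ i, ∀ t : ℝ, 0 < t → HasDerivWithinAt (γ i) (ld i t) (Iic t) t) ∧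
  -- (a) Newton's equations away from finitely many times
  (∃ F : Finset ℝ, ∀ i, ∀ t : ℝ, 0 < t → t ∉ F →
      HasDerivAt (γ i) (rd i t) t ∧
      HasDerivAt (rd i) (-∑ j, m j * deriv W (γ i t - γ j t)) t) ∧
  -- (b) initial conditions
  (∀ i, γ i 0 = x i) ∧ (∀ i, rd i 0 = v i) ∧
  -- (c) stickiness
  (∀ i j, ∀ s t : ℝ, 0 ≤ s → s ≤ t → γ i s = γ j s → γ i t = γ j t) ∧
  -- (d) perfectly inelastic collisions: momentum averaging
  (∀ t : ℝ, 0 < t → ∀ I : Finset (Fin N), I.Nonempty →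
      (∀ i ∈ I, ∀ j ∈ I, γ i t = γ j t) →
      (∀ i, i ∉ I → ∀ j ∈ I, γ i t ≠ γ j t) →
      ∀ j ∈ I, rd j t = (∑ i ∈ I, m i * ld i t) / ∑ i ∈ I, m i)

namespace StickyAux


/-- Inf-convolution Lipschitz approximation of a continuous function of linear growth. -/
theorem lip_approx (h : ℝ → ℝ) (hc : Continuous h) (K : ℝ) (hK : 1 ≤ K)
    (hg : ∀ x, |h x| ≤ K * (1 + |x|)) :
    ∃ hs : ℕ → ℝ → ℝ,
      (∀ n : ℕ, ∀ x y : ℝ, |hs n x - hs n y| ≤ (K + n) * |x - y|) ∧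
      (∀ n x, |hs n x| ≤ K * (1 + |x|)) ∧
      (∀ R ε : ℝ, 0 < ε → ∃ N₀ : ℕ, ∀ n ≥ N₀, ∀ x : ℝ, |x| ≤ R → |hs n x - h x| ≤ ε) := by
  have hK0 : 0 < K := lt_of_lt_of_le one_pos hK
  set hs : ℕ → ℝ → ℝ := fun n x => ⨅ y : ℝ, (h y + (K + n) * |x - y|) with hhs
  have hcn : ∀ n : ℕ, K ≤ K + n := fun n => le_add_of_nonneg_right (Nat.cast_nonneg n)
  have key : ∀ (n : ℕ) (x y : ℝ), -(K * (1 + |x|)) ≤ h y + (K + n) * |x - y| := by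
    intro n x y
    have h1 : -(K * (1 + |y|)) ≤ h y := neg_le_of_abs_le (hg y)
    have h2 : |y| ≤ |x| + |x - y| := by
      have := abs_sub_abs_le_abs_sub y x
      have h3 : |y - x| = |x - y| := abs_sub_comm _ _
      linarith
    nlinarith [abs_nonneg (x - y), hcn n, abs_nonneg x, abs_nonneg y]
  have hbdd : ∀ (n : ℕ) (x : ℝ), BddBelow (Set.range fun y => h y + (K + n) * |x - y|) :=
    fun n x => ⟨-(K * (1 + |x|)), by rintro z ⟨y, rfl⟩; exact key n x y⟩
  have hle : ∀ (n : ℕ) (x : ℝ), hs n x ≤ h x := by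
    intro n x
    have := ciInf_le (hbdd n x) x
    simpa using this
  have hlb : ∀ (n : ℕ) (x : ℝ), -(K * (1 + |x|)) ≤ hs n x := fun n x =>
    le_ciInf (key n x)
  refine ⟨hs, ?_, ?_, ?_⟩
  · -- Lipschitz
    intro n x y
    have main : ∀ a b : ℝ, hs n a ≤ hs n b + (K + n) * |a - b| := by
      intro a b
      rw [← sub_le_iff_le_add]
      refine le_ciInf fun z => ?_
      rw [sub_le_iff_le_add]
      calc hs n a ≤ h z + (K + n) * |a - z| := ciInf_le (hbdd n a) z
        _ ≤ h z + (K + n) * (|b - z| + |a - b|) := by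
            have : |a - z| ≤ |a - b| + |b - z| := abs_sub_le a b z
            have hc0 : (0:ℝ) ≤ K + n := le_trans hK0.le (hcn n)
            nlinarith
        _ = h z + (K + n) * |b - z| + (K + n) * |a - b| := by ring
    rw [abs_sub_le_iff]
    constructor
    · have := main x y; linarith
    · have := main y x; rw [abs_sub_comm] at this; linarith
  · -- growth
    intro n x
    rw [abs_le]
    refine ⟨hlb n x, le_trans (hle n x) ?_⟩
    exact le_of_abs_le (hg x)
  · -- convergence
    intro R ε hε
    set R' : ℝ := max R 1 with hR'
    have hR1 : 1 ≤ R' := le_max_right _ _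
    have hcomp : IsCompact (Icc (-(R' + 1)) (R' + 1)) := isCompact_Icc
    have huc := hcomp.uniformContinuousOn_of_continuous hc.continuousOn
    rw [Metric.uniformContinuousOn_iff] at huc
    obtain ⟨δ, hδ, hδ'⟩ := huc ε hε
    set d : ℝ := min (δ/2) 1 with hd
    have hd0 : 0 < d := lt_min (half_pos hδ) one_pos
    have hdδ : d < δ := lt_of_le_of_lt (min_le_left _ _) (half_lt_self hδ)
    set N₀ : ℕ := ⌈2 * K * (1 + R') / d⌉₊ with hN₀
    refine ⟨N₀, fun n hn x hx => ?_⟩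
    have hxR' : |x| ≤ R' := le_trans hx (le_max_left _ _)
    have hnd : 2 * K * (1 + R') ≤ n * d := by
      have h1 : (2 * K * (1 + R') / d) ≤ (N₀ : ℝ) := Nat.le_ceil _
      have h2 : (N₀ : ℝ) ≤ n := Nat.cast_le.mpr hn
      rw [div_le_iff₀ hd0] at h1
      nlinarith
    have lower : h x - ε ≤ hs n x := by
      refine le_ciInf fun y => ?_
      rcases le_or_gt |x - y| d with hcase | hcase
      · -- close: use uniform continuity
        have hxmem : x ∈ Icc (-(R' + 1)) (R' + 1) := by
          rw [mem_Icc]; rw [abs_le] at hxR'; constructor <;> linarith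
        have hymem : y ∈ Icc (-(R' + 1)) (R' + 1) := by
          have : |y| ≤ |x| + |x - y| := by
            have := abs_sub_abs_le_abs_sub y x
            have h3 : |y - x| = |x - y| := abs_sub_comm _ _
            linarith
          have hdy : |y| ≤ R' + 1 := by
            have : d ≤ 1 := min_le_right _ _
            linarith
          rw [mem_Icc]; rw [abs_le] at hdy; constructor <;> linarith
        have hdist : dist x y < δ := by rw [Real.dist_eq]; exact lt_of_le_of_lt hcase hdδ
        have hcl := hδ' x hxmem y hymem hdist
        rw [Real.dist_eq] at hcl
        have habs : h x - h y ≤ ε := le_of_lt (lt_of_abs_lt hcl)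
        have hnn : (0:ℝ) ≤ (K + n) * |x - y| :=
          mul_nonneg (le_trans hK0.le (hcn n)) (abs_nonneg _)
        linarith
      · -- far: crude lower bound dominates
        have h1 : -(K * (1 + |x|)) + (n : ℝ) * |x - y| ≤ h y + (K + n) * |x - y| := by
          have := key 0 x y
          have hn0 : (0:ℝ) ≤ n := Nat.cast_nonneg n
          push_cast at this ⊢
          nlinarith [abs_nonneg (x - y)]
        have h2 : (n:ℝ) * d ≤ (n:ℝ) * |x - y| :=
          mul_le_mul_of_nonneg_left hcase.le (Nat.cast_nonneg n)
        have h3 : h x ≤ K * (1 + R') := by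
          refine le_trans (le_of_abs_le (hg x)) ?_
          nlinarith
        have h4 : K * (1 + |x|) ≤ K * (1 + R') := by nlinarith
        linarith
    have upper := hle n x
    rw [abs_le]; constructor <;> linarith



variable {E : Type*} [NormedAddCommGroup E] [NormedSpace ℝ E] [CompleteSpace E]

/-- Existence of a local solution of fixed duration for a globally Lipschitz field. -/
theorem lip_chunk (V : E → E) (L : ℝ) (hL : 0 ≤ L)
    (hlip : ∀ a b : E, ‖V a - V b‖ ≤ L * ‖a - b‖) (a : ℝ) (s₀ : E) :
    ∃ y : ℝ → E, y a = s₀ ∧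
      ∀ t ∈ Icc a (a + 1/(L+1)), HasDerivWithinAt y (V (y t)) (Icc a (a + 1/(L+1))) t := by
  have hL1 : (0:ℝ) < L + 1 := by linarith
  set δ : ℝ := 1/(L+1) with hδdef
  have hδ : 0 < δ := by positivity
  set R : ℝ := ‖V s₀‖ + 1 with hR
  have hR0 : 0 < R := by positivity
  set C : ℝ := (L+1) * R with hC
  have hpl : IsPicardLindelof (fun _ : ℝ => V) (tmin := a) (tmax := a + δ)
      ⟨a, le_refl a, by linarith⟩ s₀ (Real.toNNReal R) 0 (Real.toNNReal C) (Real.toNNReal L) := by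
    constructor
    · intro t _
      rw [lipschitzOnWith_iff_dist_le_mul]
      intro x _ y _
      rw [dist_eq_norm, dist_eq_norm]
      rw [Real.coe_toNNReal L hL]
      exact hlip x y
    · intro x _; exact continuousOn_const
    · intro t _ x hx
      rw [Real.coe_toNNReal R hR0.le] at hx
      rw [Real.coe_toNNReal C (by positivity)]
      have h1 : ‖V x‖ ≤ ‖V s₀‖ + ‖V x - V s₀‖ := by
        have := norm_sub_norm_le (V x) (V s₀); linarith
      have h2 : ‖V x - V s₀‖ ≤ L * ‖x - s₀‖ := hlip x s₀
      have h3 : ‖x - s₀‖ ≤ R := by rwa [Metric.mem_closedBall, dist_eq_norm] at hx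
      have h4 : L * ‖x - s₀‖ ≤ L * R := mul_le_mul_of_nonneg_left h3 hL
      calc ‖V x‖ ≤ ‖V s₀‖ + L * R := by linarith
        _ ≤ C := by rw [hC, hR]; ring_nf; nlinarith
    · have : max (a + δ - a) (a - a) = δ := by
        rw [add_sub_cancel_left, sub_self]; exact max_eq_left hδ.le
      show (Real.toNNReal C : ℝ) * max (a + δ - a) (a - a) ≤ (Real.toNNReal R : ℝ) - ((0 : NNReal) : ℝ)
      rw [NNReal.coe_zero, sub_zero, Real.coe_toNNReal C (by positivity), Real.coe_toNNReal R hR0.le]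
      apply le_of_eq
      rw [this, hC, hδdef]
      rw [mul_one_div]
      rw [mul_comm]
      rw [mul_div_assoc]
      rw [div_self (ne_of_gt hL1)]
      rw [mul_one]
  obtain ⟨α, hα0, hαd⟩ := hpl.exists_eq_forall_mem_Icc_hasDerivWithinAt₀
  exact ⟨α, hα0, hαd⟩

/-- Chaining local solutions of uniform duration into a global forward solution. -/
theorem chain (V : E → E) (δ : ℝ) (hδ : 0 < δ)
    (H : ∀ a : ℝ, ∀ s : E, ∃ y : ℝ → E, y a = s ∧
        ∀ t ∈ Icc a (a + δ), HasDerivWithinAt y (V (y t)) (Icc a (a + δ)) t)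
    (t₀ : ℝ) (s₀ : E) :
    ∃ y : ℝ → E, y t₀ = s₀ ∧ ContinuousOn y (Ici t₀) ∧
      HasDerivWithinAt y (V s₀) (Ici t₀) t₀ ∧
      ∀ t, t₀ < t → HasDerivAt y (V (y t)) t := by
  choose sol hsol0 hsolD using H
  set S : ℕ → E := fun n => Nat.rec s₀ (fun k s => sol (t₀ + k * δ) s (t₀ + k * δ + δ)) n
    with hS
  have hS0 : S 0 = s₀ := rfl
  have hSsucc : ∀ k : ℕ, S (k+1) = sol (t₀ + k*δ) (S k) (t₀ + k*δ + δ) := fun k => rfl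
  set yk : ℕ → ℝ → E := fun k => sol (t₀ + k*δ) (S k) with hyk
  set KK : ℝ → ℕ := fun t => ⌊(t - t₀)/δ⌋₊ with hKK
  set Y : ℝ → E := fun t => yk (KK t) t with hY
  have hKeq : ∀ (t : ℝ) (k : ℕ), t₀ + k*δ ≤ t → t < t₀ + k*δ + δ → KK t = k := by
    intro t k h1 h2
    have h0 : (0:ℝ) ≤ (t - t₀)/δ := by
      apply div_nonneg _ hδ.le
      have : (0:ℝ) ≤ k*δ := by positivity
      linarith
    rw [hKK]
    rw [Nat.floor_eq_iff h0]
    constructor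
    · rw [le_div_iff₀ hδ]; linarith
    · rw [div_lt_iff₀ hδ]; push_cast; linarith
  have hKmem : ∀ t : ℝ, t₀ ≤ t → t₀ + (KK t)*δ ≤ t ∧ t < t₀ + (KK t)*δ + δ := by
    intro t ht
    have h0 : (0:ℝ) ≤ (t - t₀)/δ := div_nonneg (by linarith) hδ.le
    have h1 : ((KK t : ℕ) : ℝ) ≤ (t - t₀)/δ := Nat.floor_le h0
    have h2 : (t - t₀)/δ < (KK t) + 1 := Nat.lt_floor_add_one _
    rw [le_div_iff₀ hδ] at h1
    rw [div_lt_iff₀ hδ] at h2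
    constructor
    · linarith
    · nlinarith
  have hyk0 : ∀ k : ℕ, yk k (t₀ + k*δ) = S k := fun k => hsol0 _ _
  have hagree : ∀ (k : ℕ) (t : ℝ), t₀ + k*δ ≤ t → t ≤ t₀ + k*δ + δ → Y t = yk k t := by
    intro k t h1 h2
    rcases lt_or_eq_of_le h2 with h2' | h2'
    · show yk (KK t) t = yk k t
      rw [hKeq t k h1 h2']
    · have hk1 : KK t = k + 1 := by
        apply hKeq
        · push_cast; nlinarith
        · push_cast; nlinarith
      show yk (KK t) t = yk k t
      rw [hk1]
      have e1 : t = t₀ + ((k:ℝ)+1)*δ := by nlinarith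
      have e2 : t₀ + ((k:ℝ)+1)*δ = t₀ + (k:ℝ)*δ + δ := by ring
      have e3 : yk (k+1) t = S (k+1) := by
        have := hyk0 (k+1)
        push_cast at this
        rw [e1]; exact this
      rw [e3, hSsucc k, e1, e2]
  have claim1 : ∀ (k : ℕ) (t : ℝ), t₀ + k*δ ≤ t → t ≤ t₀ + k*δ + δ →
      HasDerivWithinAt Y (V (Y t)) (Icc (t₀ + k*δ) (t₀ + k*δ + δ)) t := by
    intro k t h1 h2
    have hD := hsolD (t₀ + k*δ) (S k) t ⟨h1, by linarith⟩
    have hYt : Y t = yk k t := hagree k t h1 h2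
    have : HasDerivWithinAt (yk k) (V (Y t)) (Icc (t₀ + k*δ) (t₀ + k*δ + δ)) t := by
      rw [hYt]; exact hD
    exact this.congr (fun s hs => hagree k s hs.1 hs.2) hYt
  have hY0 : Y t₀ = s₀ := by
    have : Y t₀ = yk 0 t₀ := hagree 0 t₀ (by simp [hδ.le]) (by simp; linarith)
    rw [this]
    have := hyk0 0
    simpa [hS0] using this
  have hder : ∀ t, t₀ < t → HasDerivAt Y (V (Y t)) t := by
    intro t ht
    obtain ⟨hm1, hm2⟩ := hKmem t ht.le
    set k := KK t with hkdef
    rcases lt_or_eq_of_le hm1 with hlt | heq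
    · exact (claim1 k t hm1 hm2.le).hasDerivAt (Icc_mem_nhds hlt hm2)
    · have hk0 : k ≠ 0 := by
        intro h0
        rw [h0] at heq
        push_cast at heq
        simp at heq
        linarith
      obtain ⟨m, hm⟩ := Nat.exists_eq_succ_of_ne_zero hk0
      have ht_eq : t = t₀ + m*δ + δ := by
        rw [hm] at heq
        push_cast at heq
        linarith
      have hleft : HasDerivWithinAt Y (V (Y t)) (Iic t) t := by
        have h := claim1 m t (by rw [ht_eq]; linarith) (le_of_eq ht_eq)
        apply h.mono_of_mem_nhdsWithin
        rw [ht_eq]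
        exact Icc_mem_nhdsLE (by linarith)
      have hright : HasDerivWithinAt Y (V (Y t)) (Ici t) t := by
        have h := claim1 k t hm1 (by linarith)
        apply h.mono_of_mem_nhdsWithin
        rw [← heq]
        exact Icc_mem_nhdsGE (by linarith)
      have hu := hleft.union hright
      rw [Iic_union_Ici] at hu
      rw [hasDerivWithinAt_univ] at hu
      exact hu
  have hder0 : HasDerivWithinAt Y (V s₀) (Ici t₀) t₀ := by
    have h := claim1 0 t₀ (by simp [hδ.le]) (by simp; linarith)
    rw [hY0] at h
    apply h.mono_of_mem_nhdsWithin
    have h4 : t₀ + ((0:ℕ):ℝ)*δ = t₀ := by push_cast; ring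
    rw [h4]
    exact Icc_mem_nhdsGE (by linarith)
  refine ⟨Y, hY0, ?_, hder0, hder⟩
  intro t ht
  rcases eq_or_lt_of_le (show t₀ ≤ t from ht) with h | h
  · subst h
    exact hder0.continuousWithinAt
  · exact (hder t h).continuousAt.continuousWithinAt


/-- Global forward solutions for globally Lipschitz fields. -/
theorem global_lip (V : E → E) (L : ℝ) (hL : 0 ≤ L)
    (hlip : ∀ a b : E, ‖V a - V b‖ ≤ L * ‖a - b‖) (t₀ : ℝ) (s₀ : E) :
    ∃ y : ℝ → E, y t₀ = s₀ ∧ ContinuousOn y (Ici t₀) ∧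
      HasDerivWithinAt y (V s₀) (Ici t₀) t₀ ∧
      ∀ t, t₀ < t → HasDerivAt y (V (y t)) t := by
  have hL1 : (0:ℝ) < L + 1 := by linarith
  exact chain V (1/(L+1)) (by positivity) (fun a s => lip_chunk V L hL hlip a s) t₀ s₀

variable [ProperSpace E]

/-- Peano-type existence on a unit time interval, by Lipschitz approximation and
Arzelà–Ascoli compactness. -/
theorem peano_chunk (V : E → E) (hVc : Continuous V) (A : ℝ) (hA : 1 ≤ A)
    (hgrow : ∀ z, ‖V z‖ ≤ A + A * ‖z‖)
    (Vs : ℕ → E → E)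
    (hVsl : ∀ n, ∃ L : ℝ, 0 ≤ L ∧ ∀ a b : E, ‖Vs n a - Vs n b‖ ≤ L * ‖a - b‖)
    (hVsg : ∀ n z, ‖Vs n z‖ ≤ A + A * ‖z‖)
    (hVscv : ∀ R ε : ℝ, 0 < ε → ∃ N₀, ∀ n ≥ N₀, ∀ z : E, ‖z‖ ≤ R → ‖Vs n z - V z‖ ≤ ε)
    (a : ℝ) (s₀ : E) :
    ∃ y : ℝ → E, y a = s₀ ∧
      ∀ t ∈ Icc a (a + 1), HasDerivWithinAt y (V (y t)) (Icc a (a + 1)) t := by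
  have hA0 : (0:ℝ) < A := lt_of_lt_of_le one_pos hA
  have hab : a ≤ a + 1 := by linarith
  -- approximate solutions
  have hex : ∀ n : ℕ, ∃ y : ℝ → E, y a = s₀ ∧ ContinuousOn y (Ici a) ∧
      HasDerivWithinAt y (Vs n s₀) (Ici a) a ∧ ∀ t, a < t → HasDerivAt y (Vs n (y t)) t := by
    intro n
    obtain ⟨L, hL0, hLl⟩ := hVsl n
    exact global_lip (Vs n) L hL0 hLl a s₀
  choose y hy0 hycont hyda hydt using hex
  have hVscont : ∀ n, Continuous (Vs n) := by
    intro n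
    obtain ⟨L, hL0, hLl⟩ := hVsl n
    refine (LipschitzWith.of_dist_le_mul (K := Real.toNNReal L) fun p q => ?_).continuous
    rw [dist_eq_norm, dist_eq_norm, Real.coe_toNNReal L hL0]
    exact hLl p q
  have hIcc : ∀ n, ∀ t ∈ Icc a (a+1), HasDerivWithinAt (y n) (Vs n (y n t)) (Icc a (a+1)) t := by
    intro n t ht
    rcases eq_or_lt_of_le ht.1 with h | h
    · subst h
      rw [hy0 n]
      exact (hyda n).mono Icc_subset_Ici_self
    · exact (hydt n t h).hasDerivWithinAt
  have hIci : ∀ n, ∀ t ∈ Ico a (a+1), HasDerivWithinAt (y n) (Vs n (y n t)) (Ici t) t := by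
    intro n t ht
    rcases eq_or_lt_of_le ht.1 with h | h
    · subst h
      rw [hy0 n]
      exact hyda n
    · exact (hydt n t h).hasDerivWithinAt
  -- a priori bound
  set B0 : ℝ := gronwallBound ‖s₀‖ A A 1 with hB0def
  have hgbmono : ∀ x ∈ Icc (0:ℝ) 1, gronwallBound ‖s₀‖ A A x ≤ B0 := by
    intro x hx
    rw [hB0def, gronwallBound_of_K_ne_0 hA0.ne']
    simp only
    have he : Real.exp (A * x) ≤ Real.exp (A * 1) :=
      Real.exp_le_exp.2 (by nlinarith [hx.2])
    have he0 : (0:ℝ) < Real.exp (A * x) := Real.exp_pos _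
    have hd : A / A = 1 := div_self hA0.ne'
    rw [hd]
    nlinarith [norm_nonneg s₀]
  have hB0 : ∀ n, ∀ t ∈ Icc a (a+1), ‖y n t‖ ≤ B0 := by
    intro n t ht
    have key := norm_le_gronwallBound_of_norm_deriv_right_le (f := y n)
      (f' := fun s => Vs n (y n s)) (δ := ‖s₀‖) (K := A) (ε := A) (a := a) (b := a+1)
      ((hycont n).mono Icc_subset_Ici_self) (fun s hs => hIci n s hs)
      (by rw [hy0 n]) (fun s _ => by
        have := hVsg n (y n s)
        linarith)
    have := key t ht
    refine le_trans this (hgbmono (t - a) ⟨by linarith [ht.1], by linarith [ht.2]⟩)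
  have hB0nn : 0 ≤ B0 := le_trans (norm_nonneg _) (hB0 0 a ⟨le_rfl, hab⟩)
  set B1 : ℝ := A + A * B0 with hB1def
  have hB1pos : 0 < B1 := by positivity
  have hLipy : ∀ n, ∀ t ∈ Icc a (a+1), ∀ s ∈ Icc a (a+1), ‖y n t - y n s‖ ≤ B1 * |t - s| := by
    intro n t ht s hs
    have := (convex_Icc a (a+1)).norm_image_sub_le_of_norm_hasDerivWithin_le
      (f := y n) (f' := fun u => Vs n (y n u)) (C := B1)
      (fun u hu => hIcc n u hu)
      (fun u hu => by
        have h1 := hVsg n (y n u)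
        have h2 := hB0 n u hu
        rw [hB1def]; nlinarith)
      hs ht
    rwa [Real.norm_eq_abs] at this
  -- Arzelà–Ascoli
  haveI : CompactSpace (Icc a (a+1)) := isCompact_iff_compactSpace.mp isCompact_Icc
  set fb : ℕ → (Icc a (a+1) →ᵇ E) := fun n =>
    BoundedContinuousFunction.mkOfCompact ⟨(Icc a (a+1)).restrict (y n),
      ((hycont n).mono Icc_subset_Ici_self).restrict⟩ with hfbdef
  have hfbapp : ∀ n (x : Icc a (a+1)), fb n x = y n x.1 := by
    intro n x
    rw [hfbdef]
    rfl
  set 𝒜 : Set (Icc a (a+1) →ᵇ E) := {f | (∀ x, f x ∈ Metric.closedBall (0:E) B0) ∧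
      ∀ x z, dist (f x) (f z) ≤ B1 * dist x z} with h𝒜def
  have hcomp : IsCompact (closure 𝒜) := by
    apply BoundedContinuousFunction.arzela_ascoli (Metric.closedBall (0:E) B0)
      (isCompact_closedBall _ _) 𝒜 (fun f x hf => hf.1 x)
    apply Metric.equicontinuous_of_continuity_modulus (fun d => B1 * d)
    · have : Continuous (fun d : ℝ => B1 * d) := continuous_const.mul continuous_id
      simpa using this.tendsto 0
    · intro x z i
      exact i.2.2 x z
  have hmem : ∀ n, fb n ∈ 𝒜 := by
    intro n
    constructor
    · intro x
      rw [Metric.mem_closedBall, dist_zero_right, hfbapp]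
      exact hB0 n x.1 x.2
    · intro x z
      rw [hfbapp, hfbapp, dist_eq_norm, Subtype.dist_eq, Real.dist_eq]
      exact hLipy n x.1 x.2 z.1 z.2
  obtain ⟨f, hfcl, φ, hφ, hconv⟩ := hcomp.tendsto_subseq (fun n => subset_closure (hmem n))
  have hdconv : Tendsto (fun k => dist (fb (φ k)) f) atTop (𝓝 0) := by
    rwa [tendsto_iff_dist_tendsto_zero] at hconv
  have hfb2 : ∀ (x : Icc a (a+1)) (k : ℕ), dist (y (φ k) x.1) (f x) ≤ dist (fb (φ k)) f := by
    intro x k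
    have := BoundedContinuousFunction.dist_coe_le_dist (f := fb (φ k)) (g := f) x
    rwa [hfbapp] at this
  have hptconv : ∀ x : Icc a (a+1), Tendsto (fun k => y (φ k) x.1) atTop (𝓝 (f x)) := by
    intro x
    rw [tendsto_iff_dist_tendsto_zero]
    exact squeeze_zero (fun k => dist_nonneg) (fun k => hfb2 x k) hdconv
  have hfB0 : ∀ x, ‖f x‖ ≤ B0 := by
    intro x
    refine le_of_tendsto (hptconv x).norm (Eventually.of_forall fun k => hB0 _ _ x.2)
  set yy : ℝ → E := fun t => f (projIcc a (a+1) hab t) with hyydef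
  have hyycont : Continuous yy := f.continuous.comp continuous_projIcc
  have hyyeq : ∀ (t : ℝ) (ht : t ∈ Icc a (a+1)), yy t = f ⟨t, ht⟩ := by
    intro t ht
    rw [hyydef]
    simp only [projIcc_of_mem hab ht]
  have hyyB0 : ∀ t, ‖yy t‖ ≤ B0 := fun t => hfB0 _
  -- integral identity for approximations
  have hint : ∀ n, ∀ t ∈ Icc a (a+1), y n t = s₀ + ∫ s in a..t, Vs n (y n s) := by
    intro n t ht
    have hsub : Icc a t ⊆ Ici a := fun s hs => hs.1
    have hinteg : IntervalIntegrable (fun s => Vs n (y n s)) volume a t := by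
      apply ContinuousOn.intervalIntegrable
      rw [uIcc_of_le ht.1]
      exact (hVscont n).comp_continuousOn ((hycont n).mono hsub)
    have h1 := intervalIntegral.integral_eq_sub_of_hasDeriv_right_of_le ht.1
      ((hycont n).mono hsub)
      (fun s hs => (hydt n s hs.1).hasDerivWithinAt)
      hinteg
    rw [h1, hy0 n]
    abel
  have hVyycont : Continuous (fun s => V (yy s)) := hVc.comp hyycont
  -- limit integral identity
  have hlim : ∀ (t : ℝ) (ht : t ∈ Icc a (a+1)), f ⟨t, ht⟩ = s₀ + ∫ s in a..t, V (yy s) := by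
    intro t ht
    have htd1 : Tendsto (fun k => y (φ k) t) atTop (𝓝 (f ⟨t, ht⟩)) := hptconv ⟨t, ht⟩
    have htd2 : Tendsto (fun k => y (φ k) t) atTop (𝓝 (s₀ + ∫ s in a..t, V (yy s))) := by
      have heqf : (fun k => y (φ k) t) = fun k => s₀ + ∫ s in a..t, Vs (φ k) (y (φ k) s) :=
        funext fun k => hint (φ k) t ht
      rw [heqf]
      apply Tendsto.const_add
      rw [Metric.tendsto_atTop]
      intro ε hε
      have hε4 : 0 < ε/4 := by linarith
      -- uniform continuity of V on the closed ball of radius B0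
      have hucV := (isCompact_closedBall (0:E) B0).uniformContinuousOn_of_continuous
        hVc.continuousOn
      rw [Metric.uniformContinuousOn_iff] at hucV
      obtain ⟨δV, hδV0, hδV⟩ := hucV (ε/4) hε4
      obtain ⟨N₁, hN₁⟩ := hVscv B0 (ε/4) hε4
      have hev1 : ∀ᶠ k in atTop, dist (fb (φ k)) f < δV :=
        (tendsto_order.1 hdconv).2 δV hδV0
      have hev2 : ∀ᶠ k in atTop, N₁ ≤ φ k :=
        (hφ.tendsto_atTop).eventually_ge_atTop N₁
      obtain ⟨N, hN⟩ := (hev1.and hev2).exists_forall_of_atTop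
      refine ⟨N, fun k hk => ?_⟩
      obtain ⟨hk1, hk2⟩ := hN k hk
      -- pointwise bound on the integrand difference
      have hpt : ∀ s ∈ Set.uIoc a t, ‖Vs (φ k) (y (φ k) s) - V (yy s)‖ ≤ ε/2 := by
        intro s hs
        have hsmem : s ∈ Icc a (a+1) := by
          rw [uIoc_of_le ht.1] at hs
          exact ⟨hs.1.le, le_trans hs.2 ht.2⟩
        have hb1 : ‖y (φ k) s‖ ≤ B0 := hB0 _ _ hsmem
        have hb2 : ‖yy s‖ ≤ B0 := hyyB0 s
        have hd12 : dist (y (φ k) s) (yy s) < δV := by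
          rw [hyyeq s hsmem]
          exact lt_of_le_of_lt (hfb2 ⟨s, hsmem⟩ k) hk1
        have hterm1 : ‖Vs (φ k) (y (φ k) s) - V (y (φ k) s)‖ ≤ ε/4 :=
          hN₁ (φ k) hk2 _ hb1
        have hterm2 : dist (V (y (φ k) s)) (V (yy s)) < ε/4 :=
          hδV _ (by rwa [Metric.mem_closedBall, dist_zero_right])
            _ (by rwa [Metric.mem_closedBall, dist_zero_right]) hd12
        rw [dist_eq_norm] at hterm2
        calc ‖Vs (φ k) (y (φ k) s) - V (yy s)‖
            ≤ ‖Vs (φ k) (y (φ k) s) - V (y (φ k) s)‖ + ‖V (y (φ k) s) - V (yy s)‖ := by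
              have := norm_sub_le_norm_sub_add_norm_sub (Vs (φ k) (y (φ k) s))
                (V (y (φ k) s)) (V (yy s))
              linarith
          _ ≤ ε/2 := by linarith
      have hinteg1 : IntervalIntegrable (fun s => Vs (φ k) (y (φ k) s)) volume a t := by
        apply ContinuousOn.intervalIntegrable
        rw [uIcc_of_le ht.1]
        exact (hVscont (φ k)).comp_continuousOn ((hycont (φ k)).mono fun s hs => hs.1)
      have hinteg2 : IntervalIntegrable (fun s => V (yy s)) volume a t :=
        hVyycont.intervalIntegrable a t
      rw [dist_eq_norm, ← intervalIntegral.integral_sub hinteg1 hinteg2]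
      have hbnd := intervalIntegral.norm_integral_le_of_norm_le_const
        (C := ε/2) (f := fun s => Vs (φ k) (y (φ k) s) - V (yy s)) (a := a) (b := t) hpt
      have habs : |t - a| ≤ 1 := by rw [abs_of_nonneg (by linarith [ht.1])]; linarith [ht.2]
      calc ‖∫ s in a..t, (Vs (φ k) (y (φ k) s) - V (yy s))‖ ≤ ε/2 * |t - a| := hbnd
        _ ≤ ε/2 * 1 := by nlinarith
        _ < ε := by linarith
    exact tendsto_nhds_unique htd1 htd2
  -- construct the solution as an integral
  set Z : ℝ → E := fun t => s₀ + ∫ s in a..t, V (yy s) with hZdef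
  have hZa : Z a = s₀ := by rw [hZdef]; simp
  have hZd : ∀ t : ℝ, HasDerivAt Z (V (yy t)) t := by
    intro t
    have h1 : IntervalIntegrable (fun s => V (yy s)) volume a t :=
      hVyycont.intervalIntegrable a t
    have h2 := intervalIntegral.integral_hasDerivAt_right h1
      (hVyycont.stronglyMeasurableAtFilter volume (𝓝 t)) hVyycont.continuousAt
    exact h2.const_add s₀
  have hZy : ∀ (t : ℝ) (ht : t ∈ Icc a (a+1)), Z t = yy t := by
    intro t ht
    rw [hyyeq t ht, hlim t ht]
  refine ⟨Z, hZa, fun t ht => ?_⟩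
  have h3 := (hZd t).hasDerivWithinAt (s := Icc a (a+1))
  rwa [← hZy t ht] at h3

/-- Peano-type global forward existence. -/
theorem peano_Ici (V : E → E) (hVc : Continuous V) (A : ℝ) (hA : 1 ≤ A)
    (hgrow : ∀ z, ‖V z‖ ≤ A + A * ‖z‖)
    (Vs : ℕ → E → E)
    (hVsl : ∀ n, ∃ L : ℝ, 0 ≤ L ∧ ∀ a b : E, ‖Vs n a - Vs n b‖ ≤ L * ‖a - b‖)
    (hVsg : ∀ n z, ‖Vs n z‖ ≤ A + A * ‖z‖)
    (hVscv : ∀ R ε : ℝ, 0 < ε → ∃ N₀, ∀ n ≥ N₀, ∀ z : E, ‖z‖ ≤ R → ‖Vs n z - V z‖ ≤ ε)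
    (t₀ : ℝ) (s₀ : E) :
    ∃ y : ℝ → E, y t₀ = s₀ ∧ ContinuousOn y (Ici t₀) ∧
      HasDerivWithinAt y (V s₀) (Ici t₀) t₀ ∧
      ∀ t, t₀ < t → HasDerivAt y (V (y t)) t :=
  chain V 1 one_pos
    (fun a s => peano_chunk V hVc A hA hgrow Vs hVsl hVsg hVscv a s) t₀ s₀

section System

variable {N : ℕ}

/-- The (modified) interaction force field. -/
def Gf (m : Fin N → ℝ) (r : Fin N → Fin N) (h : ℝ → ℝ) (u : Fin N → ℝ) : Fin N → ℝ :=
  fun i => -∑ j, m j * h (u i - u (r j))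

/-- The first-order vector field on phase space. -/
def Vf (m : Fin N → ℝ) (r : Fin N → Fin N) (h : ℝ → ℝ) :
    (Fin N → ℝ) × (Fin N → ℝ) → (Fin N → ℝ) × (Fin N → ℝ) :=
  fun z => (z.2, Gf m r h z.1)

variable {m : Fin N → ℝ} {r : Fin N → Fin N}

theorem G_abs_le (hm : ∀ i, 0 ≤ m i) (hsum : ∑ i, m i = 1)
    {h : ℝ → ℝ} {u : Fin N → ℝ} {C : ℝ}
    (hC : ∀ i j : Fin N, |h (u i - u (r j))| ≤ C) (i : Fin N) :
    |Gf m r h u i| ≤ C := by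
  have h1 : |Gf m r h u i| = |∑ j, m j * h (u i - u (r j))| := by
    rw [Gf, abs_neg]
  rw [h1]
  calc |∑ j, m j * h (u i - u (r j))| ≤ ∑ j, |m j * h (u i - u (r j))| :=
        Finset.abs_sum_le_sum_abs _ _
    _ = ∑ j, m j * |h (u i - u (r j))| := by
        refine Finset.sum_congr rfl fun j _ => ?_
        rw [abs_mul, abs_of_nonneg (hm j)]
    _ ≤ ∑ j, m j * C :=
        Finset.sum_le_sum fun j _ => mul_le_mul_of_nonneg_left (hC i j) (hm j)
    _ = C := by rw [← Finset.sum_mul, hsum, one_mul]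

theorem G_sub_abs_le (hm : ∀ i, 0 ≤ m i) (hsum : ∑ i, m i = 1)
    {h₁ h₂ : ℝ → ℝ} {u₁ u₂ : Fin N → ℝ} {C : ℝ}
    (hC : ∀ i j : Fin N, |h₁ (u₁ i - u₁ (r j)) - h₂ (u₂ i - u₂ (r j))| ≤ C) (i : Fin N) :
    |Gf m r h₁ u₁ i - Gf m r h₂ u₂ i| ≤ C := by
  have hCeq : (∑ j, m j * (h₁ (u₁ i - u₁ (r j)) - h₂ (u₂ i - u₂ (r j))))
      = (∑ j, m j * h₁ (u₁ i - u₁ (r j))) - ∑ j, m j * h₂ (u₂ i - u₂ (r j)) := by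
    rw [← Finset.sum_sub_distrib]
    exact Finset.sum_congr rfl fun j _ => by ring
  have h1 : Gf m r h₁ u₁ i - Gf m r h₂ u₂ i
      = -∑ j, m j * (h₁ (u₁ i - u₁ (r j)) - h₂ (u₂ i - u₂ (r j))) := by
    simp only [Gf]
    rw [hCeq]
    ring
  rw [h1, abs_neg]
  calc |∑ j, m j * (h₁ (u₁ i - u₁ (r j)) - h₂ (u₂ i - u₂ (r j)))|
      ≤ ∑ j, |m j * (h₁ (u₁ i - u₁ (r j)) - h₂ (u₂ i - u₂ (r j)))| :=
        Finset.abs_sum_le_sum_abs _ _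
    _ ≤ ∑ j, m j * C := by
        refine Finset.sum_le_sum fun j _ => ?_
        rw [abs_mul, abs_of_nonneg (hm j)]
        exact mul_le_mul_of_nonneg_left (hC i j) (hm j)
    _ = C := by rw [← Finset.sum_mul, hsum, one_mul]

theorem V_growth (hm : ∀ i, 0 ≤ m i) (hsum : ∑ i, m i = 1)
    {h : ℝ → ℝ} {K : ℝ} (hK : 1 ≤ K) (hg : ∀ x, |h x| ≤ K * (1 + |x|))
    (z : (Fin N → ℝ) × (Fin N → ℝ)) :
    ‖Vf m r h z‖ ≤ (2*K + 1) + (2*K + 1) * ‖z‖ := by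
  have hK0 : (0:ℝ) < K := lt_of_lt_of_le one_pos hK
  have hz1 : ‖z.1‖ ≤ ‖z‖ := norm_fst_le z
  have hz2 : ‖z.2‖ ≤ ‖z‖ := norm_snd_le z
  have hz0 : (0:ℝ) ≤ ‖z‖ := norm_nonneg z
  rw [Vf, Prod.norm_def]
  apply max_le
  · simp only
    nlinarith
  · simp only
    have hGb : ∀ i, |Gf m r h z.1 i| ≤ K * (1 + 2 * ‖z‖) := by
      intro i
      apply G_abs_le hm hsum _ i
      intro i' j
      refine le_trans (hg _) ?_
      have h1 : |z.1 i' - z.1 (r j)| ≤ |z.1 i'| + |z.1 (r j)| := abs_sub _ _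
      have h2 : |z.1 i'| ≤ ‖z.1‖ := by
        have := norm_le_pi_norm z.1 i'
        rwa [Real.norm_eq_abs] at this
      have h3 : |z.1 (r j)| ≤ ‖z.1‖ := by
        have := norm_le_pi_norm z.1 (r j)
        rwa [Real.norm_eq_abs] at this
      nlinarith
    have : ‖Gf m r h z.1‖ ≤ K * (1 + 2 * ‖z‖) := by
      rw [pi_norm_le_iff_of_nonneg (by nlinarith)]
      intro i
      rw [Real.norm_eq_abs]
      exact hGb i
    nlinarith

theorem V_lip (hm : ∀ i, 0 ≤ m i) (hsum : ∑ i, m i = 1)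
    {h : ℝ → ℝ} {L : ℝ} (hL : 0 ≤ L) (hl : ∀ x y, |h x - h y| ≤ L * |x - y|)
    (z₁ z₂ : (Fin N → ℝ) × (Fin N → ℝ)) :
    ‖Vf m r h z₁ - Vf m r h z₂‖ ≤ (2*L + 1) * ‖z₁ - z₂‖ := by
  have hz1 : ‖z₁.1 - z₂.1‖ ≤ ‖z₁ - z₂‖ := by
    have := norm_fst_le (z₁ - z₂); rwa [Prod.fst_sub] at this
  have hz2 : ‖z₁.2 - z₂.2‖ ≤ ‖z₁ - z₂‖ := by
    have := norm_snd_le (z₁ - z₂); rwa [Prod.snd_sub] at this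
  have hz0 : (0:ℝ) ≤ ‖z₁ - z₂‖ := norm_nonneg _
  have hVsub : Vf m r h z₁ - Vf m r h z₂ = (z₁.2 - z₂.2, Gf m r h z₁.1 - Gf m r h z₂.1) := by
    rw [Vf, Vf, Prod.mk_sub_mk]
  rw [hVsub, Prod.norm_def]
  apply max_le
  · simp only
    nlinarith
  · simp only
    have hGb : ∀ i, |Gf m r h z₁.1 i - Gf m r h z₂.1 i| ≤ L * (2 * ‖z₁ - z₂‖) := by
      intro i
      apply G_sub_abs_le hm hsum _ i
      intro i' j
      refine le_trans (hl _ _) ?_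
      have e1 : (z₁.1 i' - z₁.1 (r j)) - (z₂.1 i' - z₂.1 (r j))
          = (z₁.1 i' - z₂.1 i') - (z₁.1 (r j) - z₂.1 (r j)) := by ring
      rw [e1]
      have h1 : |(z₁.1 i' - z₂.1 i') - (z₁.1 (r j) - z₂.1 (r j))|
          ≤ |z₁.1 i' - z₂.1 i'| + |z₁.1 (r j) - z₂.1 (r j)| := abs_sub _ _
      have h2 : |z₁.1 i' - z₂.1 i'| ≤ ‖z₁.1 - z₂.1‖ := by
        have := norm_le_pi_norm (z₁.1 - z₂.1) i'
        rwa [Real.norm_eq_abs, Pi.sub_apply] at this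
      have h3 : |z₁.1 (r j) - z₂.1 (r j)| ≤ ‖z₁.1 - z₂.1‖ := by
        have := norm_le_pi_norm (z₁.1 - z₂.1) (r j)
        rwa [Real.norm_eq_abs, Pi.sub_apply] at this
      nlinarith
    have : ‖Gf m r h z₁.1 - Gf m r h z₂.1‖ ≤ L * (2 * ‖z₁ - z₂‖) := by
      rw [pi_norm_le_iff_of_nonneg (by nlinarith)]
      intro i
      rw [Real.norm_eq_abs, Pi.sub_apply]
      exact hGb i
    nlinarith

theorem V_diff (hm : ∀ i, 0 ≤ m i) (hsum : ∑ i, m i = 1)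
    {h₁ h₂ : ℝ → ℝ} {R ε : ℝ} (hε : 0 ≤ ε)
    (hd : ∀ x : ℝ, |x| ≤ 2*R → |h₁ x - h₂ x| ≤ ε)
    (z : (Fin N → ℝ) × (Fin N → ℝ)) (hz : ‖z‖ ≤ R) :
    ‖Vf m r h₁ z - Vf m r h₂ z‖ ≤ ε := by
  have hVsub : Vf m r h₁ z - Vf m r h₂ z = (0, Gf m r h₁ z.1 - Gf m r h₂ z.1) := by
    rw [Vf, Vf, Prod.mk_sub_mk, sub_self]
  rw [hVsub, Prod.norm_def]
  apply max_le
  · simp [hε]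
  · simp only
    have hGb : ∀ i, |Gf m r h₁ z.1 i - Gf m r h₂ z.1 i| ≤ ε := by
      intro i
      apply G_sub_abs_le hm hsum _ i
      intro i' j
      apply hd
      have h2 : |z.1 i'| ≤ ‖z.1‖ := by
        have := norm_le_pi_norm z.1 i'; rwa [Real.norm_eq_abs] at this
      have h3 : |z.1 (r j)| ≤ ‖z.1‖ := by
        have := norm_le_pi_norm z.1 (r j); rwa [Real.norm_eq_abs] at this
      have h4 : ‖z.1‖ ≤ R := le_trans (norm_fst_le z) hz
      have h1 : |z.1 i' - z.1 (r j)| ≤ |z.1 i'| + |z.1 (r j)| := abs_sub _ _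
      linarith
    have : ‖Gf m r h₁ z.1 - Gf m r h₂ z.1‖ ≤ ε := by
      rw [pi_norm_le_iff_of_nonneg hε]
      intro i
      rw [Real.norm_eq_abs, Pi.sub_apply]
      exact hGb i
    exact this

theorem V_continuous (h : ℝ → ℝ) (hc : Continuous h) :
    Continuous (Vf m r h) := by
  refine continuous_snd.prodMk ?_
  refine continuous_pi fun i => ?_
  refine Continuous.neg ?_
  refine continuous_finset_sum _ fun j _ => ?_
  refine continuous_const.mul (hc.comp ?_)
  exact ((continuous_apply i).comp continuous_fst).sub
    ((continuous_apply (r j)).comp continuous_fst)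

end System

section Sticky

variable {N : ℕ}

theorem leg_sol (m : Fin N → ℝ) (hm : ∀ i, 0 ≤ m i) (hsum : ∑ i, m i = 1)
    (r : Fin N → Fin N) (h : ℝ → ℝ) (hc : Continuous h)
    (K : ℝ) (hK : 1 ≤ K) (hg : ∀ x, |h x| ≤ K * (1 + |x|))
    (t₀ : ℝ) (s₀ : (Fin N → ℝ) × (Fin N → ℝ)) :
    ∃ y : ℝ → (Fin N → ℝ) × (Fin N → ℝ), y t₀ = s₀ ∧ ContinuousOn y (Ici t₀) ∧
      HasDerivWithinAt y (Vf m r h s₀) (Ici t₀) t₀ ∧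
      ∀ t, t₀ < t → HasDerivAt y (Vf m r h (y t)) t := by
  obtain ⟨hs, hlip, hgr, hcv⟩ := lip_approx h hc K hK hg
  refine peano_Ici (Vf m r h) (V_continuous h hc) (2*K+1) (by linarith)
    (fun z => V_growth hm hsum hK hg z) (fun n => Vf m r (hs n)) ?_ ?_ ?_ t₀ s₀
  · intro n
    refine ⟨2*(K+n)+1, by positivity, fun a b => ?_⟩
    exact V_lip hm hsum (by positivity) (fun x y' => hlip n x y') a b
  · intro n z
    exact V_growth hm hsum hK (fun x => hgr n x) z
  · intro R ε hε
    obtain ⟨N₀, hN₀⟩ := hcv (2*R) ε hε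
    exact ⟨N₀, fun n hn z hz => V_diff hm hsum hε.le (fun x hx => hN₀ n hn x hx) z hz⟩

theorem proj1_hasDerivAt {y : ℝ → (Fin N → ℝ) × (Fin N → ℝ)}
    {d : (Fin N → ℝ) × (Fin N → ℝ)} {t : ℝ} (i : Fin N) (h : HasDerivAt y d t) :
    HasDerivAt (fun s => (y s).1 i) (d.1 i) t := by
  have := ((ContinuousLinearMap.proj (R := ℝ) (φ := fun _ : Fin N => ℝ) i).comp
    (ContinuousLinearMap.fst ℝ (Fin N → ℝ) (Fin N → ℝ))).hasFDerivAt.comp_hasDerivAt t h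
  exact this

theorem proj2_hasDerivAt {y : ℝ → (Fin N → ℝ) × (Fin N → ℝ)}
    {d : (Fin N → ℝ) × (Fin N → ℝ)} {t : ℝ} (i : Fin N) (h : HasDerivAt y d t) :
    HasDerivAt (fun s => (y s).2 i) (d.2 i) t := by
  have := ((ContinuousLinearMap.proj (R := ℝ) (φ := fun _ : Fin N => ℝ) i).comp
    (ContinuousLinearMap.snd ℝ (Fin N → ℝ) (Fin N → ℝ))).hasFDerivAt.comp_hasDerivAt t h
  exact this

theorem proj1_hasDerivWithinAt {y : ℝ → (Fin N → ℝ) × (Fin N → ℝ)}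
    {d : (Fin N → ℝ) × (Fin N → ℝ)} {s : Set ℝ} {t : ℝ} (i : Fin N)
    (h : HasDerivWithinAt y d s t) :
    HasDerivWithinAt (fun u => (y u).1 i) (d.1 i) s t := by
  have := ((ContinuousLinearMap.proj (R := ℝ) (φ := fun _ : Fin N => ℝ) i).comp
    (ContinuousLinearMap.fst ℝ (Fin N → ℝ) (Fin N → ℝ))).hasFDerivAt.comp_hasDerivWithinAt t h
  exact this

/-- The invariant carried by the recursive sticky-particle construction. -/
def Good (N : ℕ) (m : Fin N → ℝ) (W : ℝ → ℝ) (t₀ : ℝ) (p v : Fin N → ℝ)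
    (γ rd ld : Fin N → ℝ → ℝ) (F : Finset ℝ) : Prop :=
  (∀ i, ContinuousOn (γ i) (Ici t₀)) ∧
  (∀ i, ∀ t : ℝ, t₀ ≤ t → HasDerivWithinAt (γ i) (rd i t) (Ici t) t) ∧
  (∀ i, ∀ t : ℝ, t₀ < t → HasDerivWithinAt (γ i) (ld i t) (Iic t) t) ∧
  (∀ i, ∀ t : ℝ, t₀ < t → t ∉ F →
      HasDerivAt (γ i) (rd i t) t ∧
      HasDerivAt (rd i) (-∑ j, m j * deriv W (γ i t - γ j t)) t) ∧
  (∀ i, γ i t₀ = p i) ∧ (∀ i, rd i t₀ = v i) ∧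
  (∀ i j, ∀ s t : ℝ, t₀ ≤ s → s ≤ t → γ i s = γ j s → γ i t = γ j t) ∧
  (∀ t : ℝ, t₀ < t → ∀ I : Finset (Fin N), I.Nonempty →
      (∀ i ∈ I, ∀ j ∈ I, γ i t = γ j t) →
      (∀ i, i ∉ I → ∀ j ∈ I, γ i t ≠ γ j t) →
      ∀ j ∈ I, rd j t = (∑ i ∈ I, m i * ld i t) / ∑ i ∈ I, m i)

theorem good_exists (m : Fin N → ℝ) (W : ℝ → ℝ)
    (hm : ∀ i, 0 < m i) (hsum : ∑ i, m i = 1)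
    (hc : Continuous (deriv W)) (K : ℝ) (hK : 1 ≤ K)
    (hg : ∀ x, |deriv W x| ≤ K * (1 + |x|)) :
    ∀ n : ℕ, ∀ (t₀ : ℝ) (p v : Fin N → ℝ),
      (Finset.univ.image p).card ≤ n → (∀ i j, p i = p j → v i = v j) →
      ∃ γ rd ld F, Good N m W t₀ p v γ rd ld F := by
  intro n
  induction n with
  | zero =>
    intro t₀ p v hcard _
    have hN : ∀ i : Fin N, False := by
      intro i
      have : 0 < (Finset.univ.image p).card :=
        Finset.card_pos.2 ⟨p i, Finset.mem_image_of_mem p (Finset.mem_univ i)⟩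
      omega
    refine ⟨0, 0, 0, ∅, ?_, ?_, ?_, ?_, ?_, ?_, ?_, ?_⟩
    · exact fun i => absurd (hN i) not_false
    · exact fun i => absurd (hN i) not_false
    · exact fun i => absurd (hN i) not_false
    · exact fun i => absurd (hN i) not_false
    · exact fun i => absurd (hN i) not_false
    · exact fun i => absurd (hN i) not_false
    · exact fun i => absurd (hN i) not_false
    · intro t _ I hI _ _
      obtain ⟨i, _⟩ := hI
      exact absurd (hN i) not_false
  | succ n IH =>
    intro t₀ p v hcard hcompat
    classical
    -- representative of each initial cluster
    have hfib : ∀ i : Fin N, i ∈ Finset.univ.filter (fun j => p j = p i) := by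
      intro i; simp
    set r : Fin N → Fin N := fun i =>
      (Finset.univ.filter (fun j => p j = p i)).min' ⟨i, hfib i⟩ with hrdef
    have hrmem : ∀ i, r i ∈ Finset.univ.filter (fun j => p j = p i) := fun i =>
      Finset.min'_mem _ _
    have hrfib : ∀ i, p (r i) = p i := fun i => (Finset.mem_filter.1 (hrmem i)).2
    have hreq : ∀ i j, p i = p j → r i = r j := by
      intro i j hij
      apply le_antisymm
      · apply Finset.min'_le
        refine Finset.mem_filter.2 ⟨Finset.mem_univ _, ?_⟩
        rw [hrfib j]; exact hij.symm
      · apply Finset.min'_le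
        refine Finset.mem_filter.2 ⟨Finset.mem_univ _, ?_⟩
        rw [hrfib i]; exact hij
    have hreq' : ∀ i j, r i = r j → p i = p j := by
      intro i j hij; rw [← hrfib i, hij, hrfib j]
    -- the leg solution
    obtain ⟨y, hy0, hycont, hyd0, hydt⟩ :=
      leg_sol m (fun i => (hm i).le) hsum r (deriv W) hc K hK hg t₀ (p, v)
    set γleg : Fin N → ℝ → ℝ := fun i t => (y t).1 (r i) with hγlegdef
    set wleg : Fin N → ℝ → ℝ := fun i t => (y t).2 (r i) with hwlegdef
    have hγleg0 : ∀ i, γleg i t₀ = p i := by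
      intro i; rw [hγlegdef]; simp only; rw [hy0]; exact hrfib i
    have hwleg0 : ∀ i, wleg i t₀ = v i := by
      intro i; rw [hwlegdef]; simp only; rw [hy0]; exact hcompat _ _ (hrfib i)
    have hγcont : ∀ i, ContinuousOn (γleg i) (Ici t₀) := by
      intro i
      exact ((continuous_apply (r i)).comp continuous_fst).comp_continuousOn hycont
    have hγd : ∀ i t, t₀ < t → HasDerivAt (γleg i) (wleg i t) t := by
      intro i t ht
      exact proj1_hasDerivAt (r i) (hydt t ht)
    have hwd : ∀ i t, t₀ < t → HasDerivAt (wleg i) (Gf m r (deriv W) ((y t).1) (r i)) t := by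
      intro i t ht
      exact proj2_hasDerivAt (r i) (hydt t ht)
    have hγd0 : ∀ i, HasDerivWithinAt (γleg i) (v i) (Ici t₀) t₀ := by
      intro i
      have h1 := proj1_hasDerivWithinAt (r i) hyd0
      have h2 : (Vf m r (deriv W) (p, v)).1 (r i) = v i := by
        rw [show (Vf m r (deriv W) (p, v)).1 = v from rfl]
        exact hcompat _ _ (hrfib i)
      rwa [h2] at h1
    have hGfval : ∀ (t : ℝ) (i : Fin N), Gf m r (deriv W) ((y t).1) (r i)
        = -∑ j, m j * deriv W (γleg i t - γleg j t) := by
      intro t i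
      simp only [hγlegdef, Gf]
    -- the collision set
    set D : Set ℝ := {t | t₀ ≤ t ∧ ∃ i j : Fin N, p i ≠ p j ∧ γleg i t = γleg j t} with hDdef
    have hDclosed : IsClosed D := by
      have hDeq : D = ⋃ q : Fin N × Fin N,
          (if p q.1 = p q.2 then (∅ : Set ℝ)
           else (Ici t₀ ∩ (fun t => γleg q.1 t - γleg q.2 t) ⁻¹' {0})) := by
        ext t
        simp only [hDdef, mem_setOf_eq, mem_iUnion]
        constructor
        · rintro ⟨ht, i, j, hij, heq⟩
          refine ⟨(i, j), ?_⟩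
          rw [if_neg hij]
          exact ⟨ht, by simp [heq]⟩
        · rintro ⟨q, hq⟩
          by_cases hpq : p q.1 = p q.2
          · rw [if_pos hpq] at hq; exact absurd hq (notMem_empty t)
          · rw [if_neg hpq] at hq
            obtain ⟨h1, h2⟩ := hq
            refine ⟨h1, q.1, q.2, hpq, ?_⟩
            simpa [sub_eq_zero] using h2
      rw [hDeq]
      refine isClosed_iUnion_of_finite fun q => ?_
      split_ifs with hpq
      · exact isClosed_empty
      · exact ContinuousOn.preimage_isClosed_of_isClosed
          ((hγcont q.1).sub (hγcont q.2)) isClosed_Ici isClosed_singleton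
    rcases Set.eq_empty_or_nonempty D with hDe | hDne
    · -- no collision ever: the leg is global
      have hDe' : ∀ t, t ∉ D := fun t ht => by rw [hDe] at ht; exact ht
      refine ⟨γleg, wleg, wleg, ∅, hγcont, ?_, ?_, ?_, hγleg0, hwleg0, ?_, ?_⟩
      · intro i t ht
        rcases eq_or_lt_of_le ht with h | h
        · subst h
          rw [hwleg0 i]
          exact hγd0 i
        · exact (hγd i t h).hasDerivWithinAt
      · intro i t ht; exact (hγd i t ht).hasDerivWithinAt
      · intro i t ht _
        refine ⟨hγd i t ht, ?_⟩
        have := hwd i t ht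
        rwa [hGfval t i] at this
      · intro i j s t hs hst heq
        by_cases hpij : p i = p j
        · have hr : r i = r j := hreq i j hpij
          simp only [hγlegdef]
          rw [hr]
        · exact absurd (show s ∈ D from ⟨hs, i, j, hpij, heq⟩) (hDe' s)
      · intro t ht I hI h1 h2 j hj
        have hIr : ∀ i ∈ I, r i = r j := by
          intro i hi
          by_contra hne
          have hpij : p i ≠ p j := fun hp => hne (hreq i j hp)
          exact hDe' t ⟨ht.le, i, j, hpij, h1 i hi j hj⟩
        have hld : ∀ i ∈ I, wleg i t = wleg j t := by
          intro i hi
          simp only [hwlegdef]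
          rw [hIr i hi]
        have hSpos : 0 < ∑ i ∈ I, m i := Finset.sum_pos (fun i _ => hm i) hI
        have hsum2 : (∑ i ∈ I, m i * wleg i t) = (∑ i ∈ I, m i) * wleg j t := by
          rw [Finset.sum_mul]
          exact Finset.sum_congr rfl fun i hi => by rw [hld i hi]
        rw [hsum2, mul_div_cancel_left₀ _ hSpos.ne']
    · -- there is a collision
      have hbdd : BddBelow D := ⟨t₀, fun t ht => ht.1⟩
      set T : ℝ := sInf D with hTdef
      have hTD : T ∈ D := hDclosed.csInf_mem hDne hbdd
      have hTle : t₀ ≤ T := hTD.1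
      have hTgt : t₀ < T := by
        rcases lt_or_eq_of_le hTle with h | h
        · exact h
        · exfalso
          obtain ⟨_, i, j, hij, heq⟩ := hTD
          rw [← h, hγleg0 i, hγleg0 j] at heq
          exact hij heq
      have hpre : ∀ t, t₀ ≤ t → t < T → ∀ i j : Fin N, p i ≠ p j → γleg i t ≠ γleg j t :=
        fun t h1 h2 i j hij heq => absurd (csInf_le hbdd ⟨h1, i, j, hij, heq⟩) (not_le.2 h2)
      -- new initial data at the collision time T
      set p₁ : Fin N → ℝ := fun i => γleg i T with hp₁def
      set fib : Fin N → Finset (Fin N) :=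
        fun i => Finset.univ.filter (fun k => p₁ k = p₁ i) with hfibdef
      set v₁ : Fin N → ℝ :=
        fun i => (∑ k ∈ fib i, m k * wleg k T) / (∑ k ∈ fib i, m k) with hv₁def
      have hp₁r : ∀ i j, p i = p j → p₁ i = p₁ j := by
        intro i j hij
        simp only [hp₁def, hγlegdef]
        rw [hreq i j hij]
      have hfibeq : ∀ i j, p₁ i = p₁ j → fib i = fib j := by
        intro i j hij
        simp only [hfibdef]
        ext k
        simp only [Finset.mem_filter]
        rw [hij]
      have hcompat₁ : ∀ i j, p₁ i = p₁ j → v₁ i = v₁ j := by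
        intro i j hij
        simp only [hv₁def]
        rw [hfibeq i j hij]
      -- cardinality decreases at a collision
      have hcard₁ : (Finset.univ.image p₁).card ≤ n := by
        set q : ℝ → ℝ := fun z => if hz : ∃ i, p i = z then p₁ (Classical.choose hz) else 0
          with hqdef
        have hq : ∀ i, q (p i) = p₁ i := by
          intro i
          have hz : ∃ k, p k = p i := ⟨i, rfl⟩
          simp only [hqdef, dif_pos hz]
          exact hp₁r _ _ (Classical.choose_spec hz)
        have himg : Finset.univ.image p₁ = (Finset.univ.image p).image q := by
          rw [Finset.image_image]
          exact Finset.image_congr fun i _ => (hq i).symm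
        obtain ⟨_, i0, j0, hij0, hcol⟩ := hTD
        by_contra hgt
        push_neg at hgt
        have hle2 : (Finset.univ.image p₁).card ≤ (Finset.univ.image p).card := by
          rw [himg]; exact Finset.card_image_le
        have heq2 : ((Finset.univ.image p).image q).card = (Finset.univ.image p).card := by
          rw [← himg]; omega
        have hinj := Finset.injOn_of_card_image_eq heq2
        refine hij0 (hinj (Finset.mem_coe.2 (Finset.mem_image_of_mem p (Finset.mem_univ i0)))
          (Finset.mem_coe.2 (Finset.mem_image_of_mem p (Finset.mem_univ j0))) ?_)
        rw [hq i0, hq j0]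
        show p₁ i0 = p₁ j0
        simp only [hp₁def]
        exact hcol
      -- recursive solution from the collision time on
      obtain ⟨γ', rd', ld', F', hg1, hg2, hg3, hg4, hg5, hg6, hg7, hg8⟩ :=
        IH T p₁ v₁ hcard₁ hcompat₁
      -- assembled trajectories
      set γ : Fin N → ℝ → ℝ := fun i t => if t < T then γleg i t else γ' i t with hγdef
      set rd : Fin N → ℝ → ℝ := fun i t => if t < T then wleg i t else rd' i t with hrddef
      set ld : Fin N → ℝ → ℝ := fun i t => if t ≤ T then wleg i t else ld' i t with hlddef
      have hγ'T : ∀ i, γ' i T = γleg i T := by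
        intro i
        refine (hg5 i).trans ?_
        simp only [hp₁def]
      have hγlow : ∀ i t, t < T → γ i t = γleg i t := by
        intro i t ht; simp only [hγdef]; rw [if_pos ht]
      have hγhigh : ∀ i t, T ≤ t → γ i t = γ' i t := by
        intro i t ht; simp only [hγdef]; rw [if_neg (not_lt.2 ht)]
      have hγIic : ∀ i t, t ≤ T → γ i t = γleg i t := by
        intro i t ht
        rcases lt_or_eq_of_le ht with h | h
        · exact hγlow i t h
        · subst h
          rw [hγhigh i T le_rfl, hγ'T i]
      have hrdlow : ∀ i t, t < T → rd i t = wleg i t := by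
        intro i t ht; simp only [hrddef]; rw [if_pos ht]
      have hrdhigh : ∀ i t, T ≤ t → rd i t = rd' i t := by
        intro i t ht; simp only [hrddef]; rw [if_neg (not_lt.2 ht)]
      have hldlow : ∀ i t, t ≤ T → ld i t = wleg i t := by
        intro i t ht; simp only [hlddef]; rw [if_pos ht]
      have hldhigh : ∀ i t, T < t → ld i t = ld' i t := by
        intro i t ht; simp only [hlddef]; rw [if_neg (not_le.2 ht)]
      have hevlow : ∀ i t, t < T → γ i =ᶠ[𝓝 t] γleg i := by
        intro i t ht
        filter_upwards [Iio_mem_nhds ht] with s hs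
        exact hγlow i s hs
      have hevlowrd : ∀ i t, t < T → rd i =ᶠ[𝓝 t] wleg i := by
        intro i t ht
        filter_upwards [Iio_mem_nhds ht] with s hs
        exact hrdlow i s hs
      have hevhigh : ∀ i t, T < t → γ i =ᶠ[𝓝 t] γ' i := by
        intro i t ht
        filter_upwards [Ioi_mem_nhds ht] with s hs
        exact hγhigh i s hs.le
      refine ⟨γ, rd, ld, insert T F', ?_, ?_, ?_, ?_, ?_, ?_, ?_, ?_⟩
      · -- (1) continuity
        intro i t ht
        rcases lt_trichotomy t T with h | h | h
        · exact ((hγcont i t ht).congr_of_eventuallyEq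
            ((hevlow i t h).filter_mono nhdsWithin_le_nhds) (hγlow i t h))
        · subst h
          have hWL : ContinuousWithinAt (γ i) (Icc t₀ T) T :=
            (((hγcont i) T ht).mono Icc_subset_Ici_self).congr
              (fun s hs => hγIic i s hs.2) (hγIic i T le_rfl)
          have hWR : ContinuousWithinAt (γ i) (Ici T) T :=
            ((hg1 i) T self_mem_Ici).congr (fun s hs => hγhigh i s hs) (hγhigh i T le_rfl)
          refine (hWL.union hWR).mono fun s hs => ?_
          rcases le_total s T with h' | h'
          · exact Or.inl ⟨hs, h'⟩
          · exact Or.inr h'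
        · have hCA : ContinuousAt (γ' i) t :=
            ((hg1 i) t h.le).continuousAt (Ici_mem_nhds h)
          exact (hCA.congr (hevhigh i t h).symm).continuousWithinAt
      · -- (2) right derivatives
        intro i t ht
        rcases lt_trichotomy t T with h | h | h
        · rw [hrdlow i t h]
          have base : HasDerivWithinAt (γleg i) (wleg i t) (Ici t) t := by
            rcases eq_or_lt_of_le ht with h0 | h0
            · subst h0
              rw [hwleg0 i]
              exact hγd0 i
            · exact (hγd i t h0).hasDerivWithinAt
          exact base.congr_of_eventuallyEq
            ((hevlow i t h).filter_mono nhdsWithin_le_nhds) (hγlow i t h)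
        · subst h
          rw [hrdhigh i T le_rfl]
          exact (hg2 i T le_rfl).congr (fun s hs => hγhigh i s hs) (hγhigh i T le_rfl)
        · rw [hrdhigh i t h.le]
          exact (hg2 i t h.le).congr (fun s hs => hγhigh i s (le_trans h.le hs))
            (hγhigh i t h.le)
      · -- (3) left derivatives
        intro i t ht
        rcases le_or_gt t T with h | h
        · rw [hldlow i t h]
          have base : HasDerivWithinAt (γleg i) (wleg i t) (Iic t) t :=
            (hγd i t ht).hasDerivWithinAt
          refine base.congr_of_eventuallyEq ?_ (hγIic i t h)
          filter_upwards [self_mem_nhdsWithin] with s hs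
          exact hγIic i s (le_trans hs h)
        · rw [hldhigh i t h]
          refine (hg3 i t h).congr_of_eventuallyEq ?_ (hγhigh i t h.le)
          filter_upwards [mem_nhdsWithin_of_mem_nhds (Ioi_mem_nhds h)] with s hs
          exact hγhigh i s hs.le
      · -- (4) Newton's equations off `insert T F'`
        intro i t ht htF
        have hTne2 : t ≠ T := fun hh => htF (by rw [hh]; exact Finset.mem_insert_self T F')
        have hF' : t ∉ F' := fun hh => htF (Finset.mem_insert_of_mem hh)
        rcases lt_or_gt_of_ne hTne2 with h | h
        · constructor
          · rw [hrdlow i t h]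
            exact (hγd i t ht).congr_of_eventuallyEq (hevlow i t h)
          · have hval : (-∑ j, m j * deriv W (γ i t - γ j t))
                = Gf m r (deriv W) ((y t).1) (r i) := by
              rw [hGfval t i]
              congr 1
              refine Finset.sum_congr rfl fun j _ => ?_
              rw [hγlow i t h, hγlow j t h]
            rw [hval]
            exact (hwd i t ht).congr_of_eventuallyEq (hevlowrd i t h)
        · have hN := hg4 i t h hF'
          constructor
          · rw [hrdhigh i t h.le]
            exact hN.1.congr_of_eventuallyEq (hevhigh i t h)
          · have hval : (-∑ j, m j * deriv W (γ i t - γ j t))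
                = (-∑ j, m j * deriv W (γ' i t - γ' j t)) := by
              congr 1
              exact Finset.sum_congr rfl fun j _ => by
                rw [hγhigh i t h.le, hγhigh j t h.le]
            rw [hval]
            have hevrd : rd i =ᶠ[𝓝 t] rd' i := by
              filter_upwards [Ioi_mem_nhds h] with s hs
              exact hrdhigh i s hs.le
            exact hN.2.congr_of_eventuallyEq hevrd
      · -- (5) initial positions
        intro i
        rw [hγlow i t₀ hTgt]
        exact hγleg0 i
      · -- (6) initial velocities
        intro i
        rw [hrdlow i t₀ hTgt]
        exact hwleg0 i
      · -- (7) stickiness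
        intro i j s t hs hst heq
        by_cases hpij : p i = p j
        · have hr : r i = r j := hreq i j hpij
          have hall : ∀ u, γ i u = γ j u := by
            intro u
            rcases le_or_gt u T with h | h
            · rw [hγIic i u h, hγIic j u h]
              simp only [hγlegdef]
              rw [hr]
            · rw [hγhigh i u h.le, hγhigh j u h.le]
              have hp1 : p₁ i = p₁ j := by
                simp only [hp₁def, hγlegdef]; rw [hr]
              exact hg7 i j T u le_rfl h.le (by rw [hg5 i, hg5 j, hp1])
          exact hall t
        · rcases lt_or_ge s T with h | h
          · exact absurd heq (by
              have := hpre s hs h i j hpij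
              rw [hγlow i s h, hγlow j s h]
              exact this)
          · have heq' : γ' i s = γ' j s := by
              rw [← hγhigh i s h, ← hγhigh j s h]; exact heq
            have := hg7 i j s t h hst heq'
            rw [hγhigh i t (le_trans h hst), hγhigh j t (le_trans h hst)]
            exact this
      · -- (8) collisions are perfectly inelastic
        intro t ht I hI h1 h2 j hj
        rcases lt_trichotomy t T with h | h | h
        · -- before the collision: the group I is an initial cluster, no velocity jump
          have hclass : ∀ i, i ∈ I → r i = r j := by
            intro i hi
            by_contra hne
            have hpij : p i ≠ p j := fun hp => hne (hreq i j hp)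
            have heq : γleg i t = γleg j t := by
              rw [← hγlow i t h, ← hγlow j t h]; exact h1 i hi j hj
            exact hpre t ht.le h i j hpij heq
          have hld : ∀ i ∈ I, ld i t = wleg j t := by
            intro i hi
            rw [hldlow i t h.le]
            simp only [hwlegdef]
            rw [hclass i hi]
          have hSpos : 0 < ∑ i ∈ I, m i := Finset.sum_pos (fun i _ => hm i) hI
          have hsum2 : (∑ i ∈ I, m i * ld i t) = (∑ i ∈ I, m i) * wleg j t := by
            rw [Finset.sum_mul]
            exact Finset.sum_congr rfl fun i hi => by rw [hld i hi]
          rw [hsum2, mul_div_cancel_left₀ _ hSpos.ne', hrdlow j t h]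
        · -- at the collision time: momentum averaging by construction
          subst h
          have hclass : I = fib j := by
            ext i
            simp only [hfibdef, Finset.mem_filter, Finset.mem_univ, true_and]
            constructor
            · intro hi
              have hh : γ i T = γ j T := h1 i hi j hj
              rw [hγhigh i T le_rfl, hγhigh j T le_rfl, hg5 i, hg5 j] at hh
              exact hh
            · intro hp1
              by_contra hni
              refine h2 i hni j hj ?_
              rw [hγhigh i T le_rfl, hγhigh j T le_rfl, hg5 i, hg5 j]
              exact hp1
          rw [hrdhigh j T le_rfl, hg6 j]
          simp only [hv₁def]
          rw [hclass]
          congr 1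
          exact Finset.sum_congr rfl fun i _ => by rw [hldlow i T le_rfl]
        · -- after the collision: inherited from the recursive solution
          have hγt : ∀ i, γ i t = γ' i t := fun i => hγhigh i t h.le
          have h1' : ∀ i ∈ I, ∀ k ∈ I, γ' i t = γ' k t := by
            intro i hi k hk
            rw [← hγt i, ← hγt k]
            exact h1 i hi k hk
          have h2' : ∀ i, i ∉ I → ∀ k ∈ I, γ' i t ≠ γ' k t := by
            intro i hni k hk hne
            exact h2 i hni k hk (by rw [hγt i, hγt k]; exact hne)
          have hrec := hg8 t h I hI h1' h2' j hj
          rw [hrdhigh j t h.le, hrec]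
          congr 1
          exact Finset.sum_congr rfl fun i _ => by rw [hldhigh i t h]



end Sticky

end StickyAux

open MeasureTheory Real Filter Set Topology

noncomputable section

/-- Proposition 3.1: existence of sticky particle trajectories. -/
theorem sticky_particle_trajectories_exist
    (N : ℕ) (x m v : Fin N → ℝ) (W : ℝ → ℝ) (c : ℝ)
    (hx : Function.Injective x)
    (hm : ∀ i, 0 < m i) (hsum : ∑ i, m i = 1)
    (hW : WHyp W c) :
    ∃ γ rd ld : Fin N → ℝ → ℝ, StickyTrajectories N x m v W γ rd ld := by
  obtain ⟨hW1, hW2, ⟨K, hKb⟩, hc0, hcv⟩ := hW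
  have hdc : Continuous (deriv W) := hW1.continuous_deriv le_rfl
  set K' : ℝ := max K 1 with hK'def
  have hK'1 : (1:ℝ) ≤ K' := le_max_right _ _
  have hgb : ∀ y : ℝ, |deriv W y| ≤ K' * (1 + |y|) := by
    intro y
    refine le_trans (hKb y) (mul_le_mul_of_nonneg_right (le_max_left _ _) ?_)
    positivity
  have hcompat : ∀ i j, x i = x j → v i = v j := fun i j hij => by rw [hx hij]
  obtain ⟨γ, rd, ld, F, h1, h2, h3, h4, h5, h6, h7, h8⟩ :=
    StickyAux.good_exists m W hm hsum hdc K' hK'1 hgb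
      (Finset.univ.image x).card 0 x v le_rfl hcompat
  exact ⟨γ, rd, ld, h1, h2, h3, ⟨F, fun i t ht htF => h4 i t ht htF⟩, h5, h6, h7, h8⟩

end
end
end

section
/- Let γ₁,…,γ_N: [0,∞) → ℝ be sticky particle trajectories for distinct initial positions x₁,…,x_N, masses m₁,…,m_N > 0 with Σᵢ mᵢ = 1, initial velocities v₁,…,v_N, and potential W. Then for every function g: ℝ → ℝ and every 0 ≤ s < t, Σ_{i=1}^N mᵢ g(γᵢ(t)) γ̇ᵢ(t+) = Σ_{i=1}^N mᵢ g(γᵢ(t)) [γ̇ᵢ(s+) − ∫_s^t (Σ_{j=1}^N mⱼ W'(γᵢ(τ) − γⱼ(τ))) dτ]. -/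
open MeasureTheory Real Filter Set Topology

noncomputable section

/-- If `γ' = r` and `r' = A` on `(u,v)` with `A`, `γ` continuous on `[u,v]`, then `r` has
one-sided limits at `u` and `v`, which are one-sided derivatives of `γ` there. -/
lemma onesided_limits (γ r A : ℝ → ℝ) {u v : ℝ} (huv : u < v)
    (hd1 : ∀ τ ∈ Set.Ioo u v, HasDerivAt γ (r τ) τ)
    (hd2 : ∀ τ ∈ Set.Ioo u v, HasDerivAt r (A τ) τ)
    (hA : ContinuousOn A (Set.Icc u v))
    (hγc : ContinuousOn γ (Set.Icc u v)) :
    (∃ L, Filter.Tendsto r (𝓝[<] v) (𝓝 L) ∧ HasDerivWithinAt γ L (Set.Iic v) v) ∧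
    (∃ R, Filter.Tendsto r (𝓝[>] u) (𝓝 R) ∧ HasDerivWithinAt γ R (Set.Ici u) u) := by
  set mid := (u + v) / 2 with hmiddef
  have hum : u < mid := by simp only [hmiddef]; linarith
  have hmv : mid < v := by simp only [hmiddef]; linarith
  have hmidmem : mid ∈ Ioo u v := ⟨hum, hmv⟩
  set G : ℝ → ℝ := fun τ => r mid + ∫ x in mid..τ, A x with hGdef
  have hsub : ∀ τ ∈ Ioo u v, uIcc mid τ ⊆ Ioo u v := fun τ hτ =>
    (Set.ordConnected_Ioo).uIcc_subset hmidmem hτ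
  have hrG : ∀ τ ∈ Ioo u v, r τ = G τ := by
    intro τ hτ
    have h1 : ∀ x ∈ uIcc mid τ, HasDerivAt r (A x) x := fun x hx => hd2 x (hsub τ hτ hx)
    have h2 : IntervalIntegrable A volume mid τ :=
      (hA.mono ((hsub τ hτ).trans Ioo_subset_Icc_self)).intervalIntegrable
    have h3 := intervalIntegral.integral_eq_sub_of_hasDerivAt h1 h2
    show r τ = r mid + ∫ x in mid..τ, A x
    rw [h3]; ring
  have hGc : ContinuousOn G (Icc u v) := by
    apply continuousOn_const.add
    have hint : IntervalIntegrable A volume u v := by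
      apply ContinuousOn.intervalIntegrable
      rwa [uIcc_of_le huv.le]
    have := intervalIntegral.continuousOn_primitive_interval'
      (f := A) (μ := volume) (b₁ := u) (b₂ := v) (a := mid) hint
      (by rw [uIcc_of_le huv.le]; exact ⟨hum.le, hmv.le⟩)
    rwa [uIcc_of_le huv.le] at this
  -- left limit at v
  have hIoo_v : Ioo u v ∈ 𝓝[<] v := Ioo_mem_nhdsLT_of_mem ⟨huv, le_rfl⟩
  have hL : Tendsto G (𝓝[<] v) (𝓝 (G v)) := by
    have h := (hGc v (right_mem_Icc.2 huv.le)).mono (Ioo_subset_Icc_self : Ioo u v ⊆ Icc u v)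
    rwa [ContinuousWithinAt, nhdsWithin_Ioo_eq_nhdsLT huv] at h
  have hrL : Tendsto r (𝓝[<] v) (𝓝 (G v)) := by
    apply hL.congr'
    filter_upwards [hIoo_v] with τ hτ
    exact (hrG τ hτ).symm
  have hdL : HasDerivWithinAt γ (G v) (Set.Iic v) v := by
    apply hasDerivWithinAt_Iic_of_tendsto_deriv (s := Ioo u v)
    · exact fun τ hτ => (hd1 τ hτ).differentiableAt.differentiableWithinAt
    · exact (hγc v (right_mem_Icc.2 huv.le)).mono Ioo_subset_Icc_self
    · exact hIoo_v
    · apply hrL.congr'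
      filter_upwards [hIoo_v] with τ hτ
      exact ((hd1 τ hτ).deriv).symm
  -- right limit at u
  have hIoo_u : Ioo u v ∈ 𝓝[>] u := Ioo_mem_nhdsGT_of_mem ⟨le_rfl, huv⟩
  have hR : Tendsto G (𝓝[>] u) (𝓝 (G u)) := by
    have h := (hGc u (left_mem_Icc.2 huv.le)).mono (Ioo_subset_Icc_self : Ioo u v ⊆ Icc u v)
    rwa [ContinuousWithinAt, nhdsWithin_Ioo_eq_nhdsGT huv] at h
  have hrR : Tendsto r (𝓝[>] u) (𝓝 (G u)) := by
    apply hR.congr'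
    filter_upwards [hIoo_u] with τ hτ
    exact (hrG τ hτ).symm
  have hdR : HasDerivWithinAt γ (G u) (Set.Ici u) u := by
    apply hasDerivWithinAt_Ici_of_tendsto_deriv (s := Ioo u v)
    · exact fun τ hτ => (hd1 τ hτ).differentiableAt.differentiableWithinAt
    · exact (hγc u (left_mem_Icc.2 huv.le)).mono Ioo_subset_Icc_self
    · exact hIoo_u
    · apply hrR.congr'
      filter_upwards [hIoo_u] with τ hτ
      exact ((hd1 τ hτ).deriv).symm
  exact ⟨⟨G v, hrL, hdL⟩, ⟨G u, hrR, hdR⟩⟩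


theorem sticky_particle_averaging_property'
    (N : ℕ) (x m v : Fin N → ℝ) (W : ℝ → ℝ) (c : ℝ)
    (hm : ∀ i, 0 < m i)
    (hW1 : ContDiff ℝ 1 W)
    (γ rd ld : Fin N → ℝ → ℝ)
    (hc : ∀ i, ContinuousOn (γ i) (Ici (0:ℝ)))
    (hRd : ∀ i, ∀ t : ℝ, 0 ≤ t → HasDerivWithinAt (γ i) (rd i t) (Ici t) t)
    (hLd : ∀ i, ∀ t : ℝ, 0 < t → HasDerivWithinAt (γ i) (ld i t) (Iic t) t)
    (F : Finset ℝ)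
    (hF : ∀ i, ∀ t : ℝ, 0 < t → t ∉ F →
      HasDerivAt (γ i) (rd i t) t ∧
      HasDerivAt (rd i) (-∑ j, m j * deriv W (γ i t - γ j t)) t)
    (hstick : ∀ i j, ∀ s t : ℝ, 0 ≤ s → s ≤ t → γ i s = γ j s → γ i t = γ j t)
    (hcol : ∀ t : ℝ, 0 < t → ∀ I : Finset (Fin N), I.Nonempty →
      (∀ i ∈ I, ∀ j ∈ I, γ i t = γ j t) →
      (∀ i, i ∉ I → ∀ j ∈ I, γ i t ≠ γ j t) →
      ∀ j ∈ I, rd j t = (∑ i ∈ I, m i * ld i t) / ∑ i ∈ I, m i) :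
    ∀ g : ℝ → ℝ, ∀ s t : ℝ, 0 ≤ s → s < t →
      ∑ i, m i * g (γ i t) * rd i t =
        ∑ i, m i * g (γ i t) *
          (rd i s - ∫ τ in s..t, ∑ j, m j * deriv W (γ i τ - γ j τ)) := by
  classical
  intro g s t hs hst
  set A : Fin N → ℝ → ℝ := fun i τ => -∑ j, m j * deriv W (γ i τ - γ j τ) with hAdef
  have hW' : Continuous (deriv W) := hW1.continuous_deriv le_rfl
  have hAcont : ∀ i, ContinuousOn (A i) (Ici (0:ℝ)) := by
    intro i
    simp only [hAdef]
    apply ContinuousOn.neg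
    apply continuousOn_finset_sum
    intro j _
    exact continuousOn_const.mul (hW'.comp_continuousOn ((hc i).sub (hc j)))
  -- right continuity of rd
  have factR : ∀ i, ∀ τ₀ : ℝ, 0 ≤ τ₀ → Tendsto (rd i) (𝓝[>] τ₀) (𝓝 (rd i τ₀)) := by
    intro i τ₀ hτ₀
    set S := (insert (τ₀ + 1) F).filter (fun w => τ₀ < w) with hS
    have hSne : S.Nonempty := ⟨τ₀ + 1, Finset.mem_filter.2 ⟨Finset.mem_insert_self _ _, by linarith⟩⟩
    set v := S.min' hSne with hv
    have hv1 : τ₀ < v := (Finset.mem_filter.1 (S.min'_mem hSne)).2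
    have hnotF : ∀ τ ∈ Ioo τ₀ v, τ ∉ F := by
      intro τ hτ hmemF
      have : v ≤ τ := S.min'_le τ (Finset.mem_filter.2 ⟨Finset.mem_insert_of_mem hmemF, hτ.1⟩)
      exact absurd this (not_le.2 hτ.2)
    have hIccsub : Icc τ₀ v ⊆ Ici (0:ℝ) := fun z hz => le_trans hτ₀ hz.1
    obtain ⟨R, hRt, hRder⟩ := (onesided_limits (γ i) (rd i) (A i) hv1
      (fun τ hτ => (hF i τ (lt_of_le_of_lt hτ₀ hτ.1) (hnotF τ hτ)).1)
      (fun τ hτ => by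
        simp only [hAdef]
        exact (hF i τ (lt_of_le_of_lt hτ₀ hτ.1) (hnotF τ hτ)).2)
      ((hAcont i).mono hIccsub) ((hc i).mono hIccsub)).2
    have huni : UniqueDiffWithinAt ℝ (Ici τ₀) τ₀ := uniqueDiffOn_Ici τ₀ τ₀ self_mem_Ici
    have : rd i τ₀ = R := by
      rw [← (hRd i τ₀ hτ₀).derivWithin huni, hRder.derivWithin huni]
    rwa [this]
  -- left limit of rd is ld
  have factL : ∀ i, ∀ τ₀ : ℝ, 0 < τ₀ → Tendsto (rd i) (𝓝[<] τ₀) (𝓝 (ld i τ₀)) := by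
    intro i τ₀ hτ₀
    set S := (insert (τ₀ / 2) F).filter (fun w => 0 < w ∧ w < τ₀) with hS
    have hSne : S.Nonempty := ⟨τ₀ / 2, Finset.mem_filter.2
      ⟨Finset.mem_insert_self _ _, half_pos hτ₀, half_lt_self hτ₀⟩⟩
    set u := S.max' hSne with hu
    have humem := Finset.mem_filter.1 (S.max'_mem hSne)
    have hu0 : 0 < u := humem.2.1
    have hu1 : u < τ₀ := humem.2.2
    have hnotF : ∀ τ ∈ Ioo u τ₀, τ ∉ F := by
      intro τ hτ hmemF
      have : τ ≤ u := S.le_max' τ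
        (Finset.mem_filter.2 ⟨Finset.mem_insert_of_mem hmemF, lt_trans hu0 hτ.1, hτ.2⟩)
      exact absurd this (not_le.2 hτ.1)
    have hIccsub : Icc u τ₀ ⊆ Ici (0:ℝ) := fun z hz => le_trans hu0.le hz.1
    obtain ⟨L, hLt, hLder⟩ := (onesided_limits (γ i) (rd i) (A i) hu1
      (fun τ hτ => (hF i τ (lt_trans hu0 hτ.1) (hnotF τ hτ)).1)
      (fun τ hτ => by
        simp only [hAdef]
        exact (hF i τ (lt_trans hu0 hτ.1) (hnotF τ hτ)).2)
      ((hAcont i).mono hIccsub) ((hc i).mono hIccsub)).1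
    have huni : UniqueDiffWithinAt ℝ (Iic τ₀) τ₀ := uniqueDiffOn_Iic τ₀ τ₀ self_mem_Iic
    have : ld i τ₀ = L := by
      rw [← (hLd i τ₀ hτ₀).derivWithin huni, hLder.derivWithin huni]
    rwa [this]
  -- conservation of cluster momentum at collisions
  have hcons : ∀ τ₀ : ℝ, 0 < τ₀ → τ₀ ≤ t → ∀ b : ℝ,
      ∑ j ∈ Finset.univ.filter (fun j => γ j t = b), m j * rd j τ₀ =
      ∑ j ∈ Finset.univ.filter (fun j => γ j t = b), m j * ld j τ₀ := by
    intro τ₀ hpos hle b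
    set C := Finset.univ.filter (fun j => γ j t = b) with hC
    rw [← Finset.sum_fiberwise_of_maps_to (g := fun j => γ j τ₀)
        (t := C.image (fun j => γ j τ₀)) (fun j hj => Finset.mem_image_of_mem _ hj)
        (fun j => m j * rd j τ₀),
      ← Finset.sum_fiberwise_of_maps_to (g := fun j => γ j τ₀)
        (t := C.image (fun j => γ j τ₀)) (fun j hj => Finset.mem_image_of_mem _ hj)
        (fun j => m j * ld j τ₀)]
    apply Finset.sum_congr rfl
    intro y hy
    obtain ⟨j₀, hj₀C, hj₀y⟩ := Finset.mem_image.1 hy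
    have hj₀b : γ j₀ t = b := (Finset.mem_filter.1 hj₀C).2
    have hfib : C.filter (fun j => γ j τ₀ = y) = Finset.univ.filter (fun j => γ j τ₀ = y) := by
      ext j
      simp only [hC, Finset.mem_filter, Finset.mem_univ, true_and, Finset.filter_filter]
      constructor
      · rintro ⟨-, h2⟩; exact h2
      · intro h2
        refine ⟨?_, h2⟩
        have heq : γ j t = γ j₀ t := hstick j j₀ τ₀ t hpos.le hle (by rw [h2, ← hj₀y])
        rw [heq, hj₀b]
    rw [hfib]
    set I := Finset.univ.filter (fun j => γ j τ₀ = y) with hI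
    have hj₀I : j₀ ∈ I := Finset.mem_filter.2 ⟨Finset.mem_univ _, hj₀y⟩
    have hpair : ∀ i ∈ I, ∀ j ∈ I, γ i τ₀ = γ j τ₀ := by
      intro i hi j hj
      rw [(Finset.mem_filter.1 hi).2, (Finset.mem_filter.1 hj).2]
    have hcompl : ∀ i, i ∉ I → ∀ j ∈ I, γ i τ₀ ≠ γ j τ₀ := by
      intro i hi j hj
      rw [(Finset.mem_filter.1 hj).2]
      intro hcontra
      exact hi (Finset.mem_filter.2 ⟨Finset.mem_univ _, hcontra⟩)
    have havg := hcol τ₀ hpos I ⟨j₀, hj₀I⟩ hpair hcompl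
    have hMpos : (0:ℝ) < ∑ i ∈ I, m i := Finset.sum_pos (fun i _ => hm i) ⟨j₀, hj₀I⟩
    calc ∑ j ∈ I, m j * rd j τ₀
        = ∑ j ∈ I, m j * ((∑ i ∈ I, m i * ld i τ₀) / ∑ i ∈ I, m i) :=
          Finset.sum_congr rfl (fun j hj => by rw [havg j hj])
      _ = (∑ j ∈ I, m j) * ((∑ i ∈ I, m i * ld i τ₀) / ∑ i ∈ I, m i) := by
          rw [← Finset.sum_mul]
      _ = ∑ i ∈ I, m i * ld i τ₀ := by field_simp
  -- cluster momentum balance between times s and t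
  have hclust : ∀ b : ℝ,
      ∑ j ∈ Finset.univ.filter (fun j => γ j t = b), m j * rd j t
        = ∑ j ∈ Finset.univ.filter (fun j => γ j t = b), m j * rd j s
          + ∫ τ in s..t, ∑ j ∈ Finset.univ.filter (fun j => γ j t = b), m j * A j τ := by
    intro b
    set C := Finset.univ.filter (fun j => γ j t = b) with hC
    set P : ℝ → ℝ := fun τ => ∑ j ∈ C, m j * rd j τ with hP
    set Q : ℝ → ℝ := fun τ => ∑ j ∈ C, m j * A j τ with hQ
    have hQc : ContinuousOn Q (Icc s t) := by
      simp only [hQ]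
      apply continuousOn_finset_sum
      intro j _
      exact continuousOn_const.mul ((hAcont j).mono (fun z hz => le_trans hs hz.1))
    have hPc : ContinuousOn P (Icc s t) := by
      intro τ₀ hτ₀
      have h0τ : 0 ≤ τ₀ := hs.trans hτ₀.1
      have hright : ContinuousWithinAt P (Ici τ₀) τ₀ := by
        rw [← continuousWithinAt_Ioi_iff_Ici]
        exact tendsto_finset_sum _ (fun j _ => (factR j τ₀ h0τ).const_mul (m j))
      rcases eq_or_lt_of_le hτ₀.1 with heq | hlt
      · exact hright.mono (fun z hz => heq ▸ hz.1)
      · have hpos : 0 < τ₀ := lt_of_le_of_lt hs hlt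
        have hleft : ContinuousWithinAt P (Iic τ₀) τ₀ := by
          rw [← continuousWithinAt_Iio_iff_Iic]
          have h1 : Tendsto P (𝓝[<] τ₀) (𝓝 (∑ j ∈ C, m j * ld j τ₀)) :=
            tendsto_finset_sum _ (fun j _ => (factL j τ₀ hpos).const_mul (m j))
          have h2 : ∑ j ∈ C, m j * ld j τ₀ = P τ₀ := (hcons τ₀ hpos hτ₀.2 b).symm
          rwa [h2] at h1
        exact (hleft.union hright).mono
          (fun z _ => by rcases le_total z τ₀ with h | h
                         · exact Or.inl h
                         · exact Or.inr h)
    have hQint : IntervalIntegrable Q volume s t := by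
      apply ContinuousOn.intervalIntegrable
      rwa [uIcc_of_le hst.le]
    have hftc := integral_eq_of_hasDerivAt_off_countable P Q
      (s := (F : Set ℝ)) F.countable_toSet ?_ ?_ hQint
    · show P t = P s + ∫ τ in s..t, Q τ
      rw [hftc]; ring
    · rwa [uIcc_of_le hst.le]
    · intro τ hτ
      rw [min_eq_left hst.le, max_eq_right hst.le] at hτ
      obtain ⟨hτIoo, hτF⟩ := hτ
      have hpos : 0 < τ := lt_of_le_of_lt hs hτIoo.1
      have hτF' : τ ∉ F := by simpa using hτF
      have : HasDerivAt (fun y => ∑ j ∈ C, m j * rd j y) (∑ j ∈ C, m j * A j τ) τ := by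
        apply HasDerivAt.fun_sum
        intro j _
        have := (hF j τ hpos hτF').2
        simp only [hAdef]
        exact this.const_mul (m j)
      exact this
  -- assemble
  rw [← Finset.sum_fiberwise_of_maps_to (g := fun i => γ i t)
      (t := Finset.univ.image (fun i => γ i t))
      (fun i _ => Finset.mem_image_of_mem _ (Finset.mem_univ i))
      (fun i => m i * g (γ i t) * rd i t),
    ← Finset.sum_fiberwise_of_maps_to (g := fun i => γ i t)
      (t := Finset.univ.image (fun i => γ i t))
      (fun i _ => Finset.mem_image_of_mem _ (Finset.mem_univ i))
      (fun i => m i * g (γ i t) *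
        (rd i s - ∫ τ in s..t, ∑ j, m j * deriv W (γ i τ - γ j τ)))]
  apply Finset.sum_congr rfl
  intro b hbT
  set C := Finset.univ.filter (fun j => γ j t = b) with hC
  have hmem : ∀ j ∈ C, γ j t = b := fun j hj => (Finset.mem_filter.1 hj).2
  have hintA : ∀ j : Fin N, IntervalIntegrable (fun τ => m j * A j τ) volume s t := by
    intro j
    apply ContinuousOn.intervalIntegrable
    rw [uIcc_of_le hst.le]
    exact continuousOn_const.mul ((hAcont j).mono (fun z hz => le_trans hs hz.1))
  calc ∑ j ∈ C, m j * g (γ j t) * rd j t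
      = ∑ j ∈ C, g b * (m j * rd j t) :=
        Finset.sum_congr rfl (fun j hj => by rw [hmem j hj]; ring)
    _ = g b * ∑ j ∈ C, m j * rd j t := by rw [Finset.mul_sum]
    _ = g b * (∑ j ∈ C, m j * rd j s + ∫ τ in s..t, ∑ j ∈ C, m j * A j τ) := by
        rw [hclust b]
    _ = g b * (∑ j ∈ C, m j * rd j s + ∑ j ∈ C, ∫ τ in s..t, m j * A j τ) := by
        rw [intervalIntegral.integral_finset_sum (fun j _ => hintA j)]
    _ = ∑ j ∈ C, g b * (m j * rd j s + ∫ τ in s..t, m j * A j τ) := by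
        rw [← Finset.sum_add_distrib, Finset.mul_sum]
    _ = ∑ j ∈ C, m j * g (γ j t) *
          (rd j s - ∫ τ in s..t, ∑ k, m k * deriv W (γ j τ - γ k τ)) := by
        apply Finset.sum_congr rfl
        intro j hj
        have h1 : (fun τ => m j * A j τ)
            = fun τ => -(m j * ∑ k, m k * deriv W (γ j τ - γ k τ)) := by
          funext τ; simp only [hAdef]; ring
        rw [hmem j hj, h1, intervalIntegral.integral_neg,
          intervalIntegral.integral_const_mul]
        ring


/-- Corollary 3.3 (averaging property / conservation of momentum). -/
theorem sticky_particle_averaging_property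
    (N : ℕ) (x m v : Fin N → ℝ) (W : ℝ → ℝ) (c : ℝ)
    (hx : Function.Injective x)
    (hm : ∀ i, 0 < m i) (hsum : ∑ i, m i = 1)
    (hW : WHyp W c)
    (γ rd ld : Fin N → ℝ → ℝ)
    (hγ : StickyTrajectories N x m v W γ rd ld) :
    ∀ g : ℝ → ℝ, ∀ s t : ℝ, 0 ≤ s → s < t →
      ∑ i, m i * g (γ i t) * rd i t =
        ∑ i, m i * g (γ i t) *
          (rd i s - ∫ τ in s..t, ∑ j, m j * deriv W (γ i τ - γ j τ)) := by
  obtain ⟨hc, hRd, hLd, ⟨F, hF⟩, -, -, hstick, hcol⟩ := hγ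
  exact sticky_particle_averaging_property' N x m v W c hm hW.1 γ rd ld hc hRd hLd F hF
    hstick hcol


end
end

section
/- Let γ₁,…,γ_N: [0,∞) → ℝ be sticky particle trajectories for distinct initial positions x₁,…,x_N, masses m₁,…,m_N > 0 with Σᵢ mᵢ = 1, initial velocities v₁,…,v_N, and potential W with semiconvexity constant c > 0. Then for each i, j ∈ {1,…,N} and all 0 < s ≤ t, |γᵢ(t) − γⱼ(t)|/sinh(√c t) ≤ |γᵢ(s) − γⱼ(s)|/sinh(√c s). -/
open MeasureTheory Real Filter Set Topology

noncomputable section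

namespace StickyAux

variable {N : ℕ} {x m v : Fin N → ℝ} {W : ℝ → ℝ} {c : ℝ}
  {γ rd ld : Fin N → ℝ → ℝ} {F : Finset ℝ}

/-- The auxiliary function `h(r) = (γ̇ⱼ-γ̇ᵢ)(r+)·sinh(√c r) − √c·(γⱼ-γᵢ)(r)·cosh(√c r)`. -/
def hfun (c : ℝ) (γ rd : Fin N → ℝ → ℝ) (i j : Fin N) (r : ℝ) : ℝ :=
  (rd j r - rd i r) * Real.sinh (Real.sqrt c * r) -
    Real.sqrt c * ((γ j r - γ i r) * Real.cosh (Real.sqrt c * r))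

lemma sinh_pos' (hc : 0 < c) {r : ℝ} (hr : 0 < r) :
    0 < Real.sinh (Real.sqrt c * r) :=
  Real.sinh_pos_iff.2 (mul_pos (Real.sqrt_pos.2 hc) hr)

lemma gamma_le
    (hcont : ∀ i, ContinuousOn (γ i) (Ici (0:ℝ)))
    (hstick : ∀ i j, ∀ s t : ℝ, 0 ≤ s → s ≤ t → γ i s = γ j s → γ i t = γ j t)
    (hx0 : ∀ i, γ i 0 = x i)
    {i j : Fin N} (hij : x i ≤ x j) {r : ℝ} (hr : 0 ≤ r) :
    γ i r ≤ γ j r := by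
  by_contra h
  push_neg at h
  have hco : ContinuousOn (fun u => γ i u - γ j u) (Icc 0 r) :=
    ((hcont i).sub (hcont j)).mono Icc_subset_Ici_self
  have h0 : γ i 0 - γ j 0 ≤ 0 := by rw [hx0 i, hx0 j]; linarith
  obtain ⟨z, hz, hz0⟩ := intermediate_value_Icc hr hco
    (show (0:ℝ) ∈ Icc (γ i 0 - γ j 0) (γ i r - γ j r) from ⟨h0, by linarith⟩)
  simp only at hz0
  have hzeq : γ i z = γ j z := by linarith
  have := hstick i j z r hz.1 hz.2 hzeq
  linarith

lemma gamma_lt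
    (hcont : ∀ i, ContinuousOn (γ i) (Ici (0:ℝ)))
    (hstick : ∀ i j, ∀ s t : ℝ, 0 ≤ s → s ≤ t → γ i s = γ j s → γ i t = γ j t)
    {i j : Fin N} {t : ℝ} (hlt : γ i t < γ j t) {r : ℝ} (hr : 0 ≤ r) (hrt : r ≤ t) :
    γ i r < γ j r := by
  by_contra h
  push_neg at h
  have key : ∃ z, z ∈ Icc r t ∧ γ i z = γ j z := by
    rcases eq_or_lt_of_le h with heq | hlt2
    · exact ⟨r, ⟨le_refl r, hrt⟩, heq.symm⟩
    · have hco : ContinuousOn (fun u => γ i u - γ j u) (Icc r t) :=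
        ((hcont i).sub (hcont j)).mono fun u hu => le_trans hr hu.1
      obtain ⟨z, hz, hz0⟩ := intermediate_value_Icc' hrt hco
        (show (0:ℝ) ∈ Icc (γ i t - γ j t) (γ i r - γ j r) from ⟨by linarith, by linarith⟩)
      simp only at hz0
      exact ⟨z, hz, by linarith⟩
  obtain ⟨z, hz, hzeq⟩ := key
  have := hstick i j z t (le_trans hr hz.1) hz.2 hzeq
  exact absurd this hlt.ne

lemma force_contOn
    (hcont : ∀ i, ContinuousOn (γ i) (Ici (0:ℝ)))
    (hWsm : ContDiff ℝ 1 W) (i : Fin N) :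
    ContinuousOn (fun r => -∑ k, m k * deriv W (γ i r - γ k r)) (Ici (0:ℝ)) := by
  have hd : Continuous (deriv W) := hWsm.continuous_deriv le_rfl
  refine ContinuousOn.neg ?_
  refine continuousOn_finset_sum _ fun k _ => ?_
  exact continuousOn_const.mul (hd.comp_continuousOn ((hcont i).sub (hcont k)))

lemma rd_tendsto
    (hcont : ∀ i, ContinuousOn (γ i) (Ici (0:ℝ)))
    (hrd : ∀ i, ∀ t : ℝ, 0 ≤ t → HasDerivWithinAt (γ i) (rd i t) (Ici t) t)
    (hF : ∀ i, ∀ t : ℝ, 0 < t → t ∉ F →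
      HasDerivAt (γ i) (rd i t) t ∧
      HasDerivAt (rd i) (-∑ j, m j * deriv W (γ i t - γ j t)) t)
    (hWsm : ContDiff ℝ 1 W)
    (i : Fin N) {a b : ℝ} (ha : 0 ≤ a) (hab : a < b)
    (hfree : ∀ p ∈ F, p ≤ a ∨ b ≤ p) :
    Tendsto (rd i) (𝓝[>] a) (𝓝 (rd i a)) := by
  set φ : ℝ → ℝ := fun r => -∑ k, m k * deriv W (γ i r - γ k r) with hφ
  set b₁ : ℝ := (a + b) / 2 with hb₁
  have hab₁ : a < b₁ := by rw [hb₁]; linarith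
  have hb₁b : b₁ < b := by rw [hb₁]; linarith
  have hIoo : ∀ r ∈ Ioo a b, HasDerivAt (γ i) (rd i r) r ∧ HasDerivAt (rd i) (φ r) r := by
    intro r hr
    have hr0 : 0 < r := lt_of_le_of_lt ha hr.1
    have hrF : r ∉ F := fun hmem => by rcases hfree r hmem with h | h <;> linarith [hr.1, hr.2]
    exact hF i r hr0 hrF
  have hφc : ContinuousOn φ (Icc a b₁) :=
    (force_contOn hcont hWsm i).mono fun u hu => le_trans ha hu.1
  obtain ⟨M, hM⟩ := (isCompact_Icc (a := a) (b := b₁)).exists_bound_of_continuousOn hφc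
  have hint : ∀ r ∈ Ioc a b₁, IntervalIntegrable φ volume r b₁ := by
    intro r hr
    apply ContinuousOn.intervalIntegrable
    apply hφc.mono
    rw [uIcc_of_le hr.2]
    exact fun u hu => ⟨le_trans hr.1.le hu.1, hu.2⟩
  have hinta : ∀ r ∈ Icc a b₁, IntervalIntegrable φ volume a r := by
    intro r hr
    apply ContinuousOn.intervalIntegrable
    apply hφc.mono
    rw [uIcc_of_le hr.1]
    exact fun u hu => ⟨hu.1, le_trans hu.2 hr.2⟩
  set L : ℝ := rd i b₁ - ∫ u in a..b₁, φ u with hL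
  have key : ∀ r ∈ Ioc a b₁, rd i r = L + ∫ u in a..r, φ u := by
    intro r hr
    have hftc : ∫ u in r..b₁, φ u = rd i b₁ - rd i r := by
      apply intervalIntegral.integral_eq_sub_of_hasDerivAt
      · intro u hu
        rw [uIcc_of_le hr.2] at hu
        exact (hIoo u ⟨lt_of_lt_of_le hr.1 hu.1, lt_of_le_of_lt hu.2 hb₁b⟩).2
      · exact hint r hr
    have hsplit : (∫ u in a..r, φ u) + ∫ u in r..b₁, φ u = ∫ u in a..b₁, φ u :=
      intervalIntegral.integral_add_adjacent_intervals (hinta r ⟨hr.1.le, hr.2⟩) (hint r hr)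
    rw [hL]
    linarith [hftc, hsplit]
  have htint : Tendsto (fun r => ∫ u in a..r, φ u) (𝓝[>] a) (𝓝 0) := by
    apply squeeze_zero_norm' (a := fun r => M * (r - a))
    · filter_upwards [Ioc_mem_nhdsGT_of_mem ⟨le_refl a, hab₁⟩] with r hr
      have hbd : ∀ u ∈ Set.uIoc a r, ‖φ u‖ ≤ M := by
        intro u hu
        rw [uIoc_of_le hr.1.le] at hu
        exact hM u ⟨hu.1.le, le_trans hu.2 hr.2⟩
      calc ‖∫ u in a..r, φ u‖ ≤ M * |r - a| :=
            intervalIntegral.norm_integral_le_of_norm_le_const hbd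
        _ = M * (r - a) := by rw [abs_of_nonneg (by linarith [hr.1] : (0:ℝ) ≤ r - a)]
    · have h1 : Tendsto (fun r : ℝ => M * (r - a)) (𝓝 a) (𝓝 (M * (a - a))) :=
        (tendsto_id.sub tendsto_const_nhds).const_mul M
      simpa using h1.mono_left nhdsWithin_le_nhds
  have hrdt : Tendsto (rd i) (𝓝[>] a) (𝓝 L) := by
    have h2 : Tendsto (fun r => L + ∫ u in a..r, φ u) (𝓝[>] a) (𝓝 (L + 0)) :=
      tendsto_const_nhds.add htint
    rw [add_zero] at h2
    apply h2.congr'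
    filter_upwards [Ioc_mem_nhdsGT_of_mem ⟨le_refl a, hab₁⟩] with r hr
    exact (key r hr).symm
  have hDiff : DifferentiableOn ℝ (γ i) (Ioo a b₁) := fun u hu =>
    ((hIoo u ⟨hu.1, lt_trans hu.2 hb₁b⟩).1.differentiableAt).differentiableWithinAt
  have hends : HasDerivWithinAt (γ i) L (Ici a) a := by
    apply hasDerivWithinAt_Ici_of_tendsto_deriv hDiff
    · exact ((hcont i) a ha).mono fun u hu => le_trans ha hu.1.le
    · exact Ioo_mem_nhdsGT_of_mem ⟨le_refl a, hab₁⟩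
    · apply hrdt.congr'
      filter_upwards [Ioo_mem_nhdsGT_of_mem ⟨le_refl a, hab₁⟩] with r hr
      exact ((hIoo r ⟨hr.1, lt_trans hr.2 hb₁b⟩).1.deriv).symm
  have hLa : L = rd i a :=
    (uniqueDiffOn_Ici a a self_mem_Ici).eq_deriv _ hends (hrd i a ha)
  rwa [hLa] at hrdt

lemma Wprime_bound (hWsm : ContDiff ℝ 1 W) (hc : 0 < c)
    (hconv : ConvexOn ℝ Set.univ (fun x => W x + c / 2 * x ^ 2))
    {y z : ℝ} (hzy : z ≤ y) : -(deriv W y - deriv W z) ≤ c * (y - z) := by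
  have hdW : Differentiable ℝ W := hWsm.differentiable one_ne_zero
  have hg : ∀ u : ℝ, HasDerivAt (fun y => W y + c / 2 * y ^ 2) (deriv W u + c * u) u := by
    intro u
    have h1 := (hdW u).hasDerivAt
    have h2 : HasDerivAt (fun y : ℝ => c / 2 * y ^ 2) (c / 2 * (↑2 * u ^ 1)) u :=
      (hasDerivAt_pow 2 u).const_mul (c / 2)
    exact (h1.add h2).congr_deriv (by ring)
  have hmono := hconv.monotoneOn_deriv (fun u _ => (hg u).differentiableAt)
  have h2 := hmono (mem_univ z) (mem_univ y) hzy
  rw [(hg z).deriv, (hg y).deriv] at h2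
  linarith

lemma hfun_le
    (hcont : ∀ i, ContinuousOn (γ i) (Ici (0:ℝ)))
    (hrd : ∀ i, ∀ t : ℝ, 0 ≤ t → HasDerivWithinAt (γ i) (rd i t) (Ici t) t)
    (hF : ∀ i, ∀ t : ℝ, 0 < t → t ∉ F →
      HasDerivAt (γ i) (rd i t) t ∧
      HasDerivAt (rd i) (-∑ j, m j * deriv W (γ i t - γ j t)) t)
    (hWsm : ContDiff ℝ 1 W) (hc : 0 < c)
    (hconv : ConvexOn ℝ Set.univ (fun x => W x + c / 2 * x ^ 2))
    (hm : ∀ i, 0 < m i) (hsum : ∑ i, m i = 1)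
    {i j : Fin N} {a b r : ℝ} (ha : 0 ≤ a)
    (hfree : ∀ p ∈ F, p ≤ a ∨ b ≤ p)
    (hha : hfun c γ rd i j a ≤ 0)
    (hord : ∀ u : ℝ, 0 ≤ u → γ i u ≤ γ j u)
    (har : a < r) (hrb : r < b) :
    hfun c γ rd i j r ≤ 0 := by
  have hsqc : (0:ℝ) ≤ Real.sqrt c := Real.sqrt_nonneg c
  have hcc : Real.sqrt c * Real.sqrt c = c := Real.mul_self_sqrt hc.le
  set φ : Fin N → ℝ → ℝ := fun l u => -∑ k, m k * deriv W (γ l u - γ k u) with hφdef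
  have hIoo : ∀ l : Fin N, ∀ u ∈ Ioo a b,
      HasDerivAt (γ l) (rd l u) u ∧ HasDerivAt (rd l) (φ l u) u := fun l u hu =>
    hF l u (lt_of_le_of_lt ha hu.1)
      (fun hmem => by rcases hfree u hmem with h | h <;> linarith [hu.1, hu.2])
  have hder : ∀ u ∈ Ioo a b, HasDerivAt (hfun c γ rd i j)
      ((φ j u - φ i u - c * (γ j u - γ i u)) * Real.sinh (Real.sqrt c * u)) u := by
    intro u hu
    have h1 := (hIoo j u hu).2.sub (hIoo i u hu).2
    have hγd := (hIoo j u hu).1.sub (hIoo i u hu).1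
    have hlin : HasDerivAt (fun y : ℝ => Real.sqrt c * y) (Real.sqrt c) u := by
      simpa using (hasDerivAt_id u).const_mul (Real.sqrt c)
    have hsinh := (Real.hasDerivAt_sinh _).comp u hlin
    have hcosh := (Real.hasDerivAt_cosh _).comp u hlin
    have hcomb := (h1.mul hsinh).sub ((hγd.mul hcosh).const_mul (Real.sqrt c))
    have heq : (φ j u - φ i u - c * (γ j u - γ i u)) * Real.sinh (Real.sqrt c * u) =
        (φ j u - φ i u) * Real.sinh (Real.sqrt c * u) +
          (rd j u - rd i u) * (Real.cosh (Real.sqrt c * u) * Real.sqrt c) -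
          Real.sqrt c * ((rd j u - rd i u) * Real.cosh (Real.sqrt c * u) +
            (γ j u - γ i u) * (Real.sinh (Real.sqrt c * u) * Real.sqrt c)) := by
      linear_combination ((γ j u - γ i u) * Real.sinh (Real.sqrt c * u)) * hcc
    rw [hfun] at *
    exact heq ▸ hcomb
  have hφbound : ∀ u ∈ Ioo a b, φ j u - φ i u - c * (γ j u - γ i u) ≤ 0 := by
    intro u hu
    have h0u : (0:ℝ) ≤ u := le_trans ha hu.1.le
    have hord' := hord u h0u
    have hterm : ∀ k : Fin N, m k * deriv W (γ i u - γ k u) - m k * deriv W (γ j u - γ k u)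
        ≤ m k * (c * (γ j u - γ i u)) := by
      intro k
      have hb1 := Wprime_bound hWsm hc hconv
        (y := γ j u - γ k u) (z := γ i u - γ k u) (by linarith)
      have hm' := (hm k).le
      nlinarith [hb1]
    have hsum' := Finset.sum_le_sum fun k (_ : k ∈ Finset.univ) => hterm k
    have e1 : φ j u - φ i u =
        ∑ k, (m k * deriv W (γ i u - γ k u) - m k * deriv W (γ j u - γ k u)) := by
      simp only [hφdef]
      rw [Finset.sum_sub_distrib]
      ring
    have e2 : ∑ k : Fin N, m k * (c * (γ j u - γ i u)) = c * (γ j u - γ i u) := by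
      rw [← Finset.sum_mul, hsum, one_mul]
    rw [e2] at hsum'
    rw [e1]
    linarith
  have hanti : AntitoneOn (hfun c γ rd i j) (Ioc a r) := by
    apply antitoneOn_of_deriv_nonpos (convex_Ioc a r)
    · exact fun u hu => ((hder u ⟨hu.1, lt_of_le_of_lt hu.2 hrb⟩).differentiableAt)
        |>.continuousAt.continuousWithinAt
    · intro u hu
      rw [interior_Ioc] at hu
      exact ((hder u ⟨hu.1, lt_trans hu.2 hrb⟩).differentiableAt).differentiableWithinAt
    · intro u hu
      rw [interior_Ioc] at hu
      rw [(hder u ⟨hu.1, lt_trans hu.2 hrb⟩).deriv]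
      exact mul_nonpos_of_nonpos_of_nonneg (hφbound u ⟨hu.1, lt_trans hu.2 hrb⟩)
        (Real.sinh_nonneg_iff.2 (mul_nonneg hsqc (le_trans ha hu.1.le)))
  have hb' : a < b := lt_trans har hrb
  have hrdti := rd_tendsto hcont hrd hF hWsm i ha hb' hfree
  have hrdtj := rd_tendsto hcont hrd hF hWsm j ha hb' hfree
  have hγti : Tendsto (γ i) (𝓝[>] a) (𝓝 (γ i a)) :=
    ((hcont i) a ha).mono_left (nhdsWithin_mono a fun u hu => le_trans ha (le_of_lt hu))
  have hγtj : Tendsto (γ j) (𝓝[>] a) (𝓝 (γ j a)) :=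
    ((hcont j) a ha).mono_left (nhdsWithin_mono a fun u hu => le_trans ha (le_of_lt hu))
  have hsinht : Tendsto (fun u => Real.sinh (Real.sqrt c * u)) (𝓝[>] a)
      (𝓝 (Real.sinh (Real.sqrt c * a))) :=
    ((Real.continuous_sinh.comp (continuous_const.mul continuous_id)).tendsto a).mono_left
      nhdsWithin_le_nhds
  have hcosht : Tendsto (fun u => Real.cosh (Real.sqrt c * u)) (𝓝[>] a)
      (𝓝 (Real.cosh (Real.sqrt c * a))) :=
    ((Real.continuous_cosh.comp (continuous_const.mul continuous_id)).tendsto a).mono_left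
      nhdsWithin_le_nhds
  have htd : Tendsto (hfun c γ rd i j) (𝓝[>] a) (𝓝 (hfun c γ rd i j a)) := by
    simp only [hfun]
    exact ((hrdtj.sub hrdti).mul hsinht).sub
      (((hγtj.sub hγti).mul hcosht).const_mul (Real.sqrt c))
  have hev : ∀ᶠ u in 𝓝[>] a, hfun c γ rd i j r ≤ hfun c γ rd i j u := by
    filter_upwards [Ioc_mem_nhdsGT_of_mem ⟨le_refl a, har⟩] with u hu
    exact hanti hu (right_mem_Ioc.2 har) hu.2
  exact le_trans (ge_of_tendsto htd hev) hha

lemma ratio_mono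
    (hcont : ∀ i, ContinuousOn (γ i) (Ici (0:ℝ)))
    (hrd : ∀ i, ∀ t : ℝ, 0 ≤ t → HasDerivWithinAt (γ i) (rd i t) (Ici t) t)
    (hc : 0 < c)
    {i j : Fin N} {σ t : ℝ} (hσ : 0 < σ) (hσt : σ ≤ t)
    (hh : ∀ r, σ ≤ r → r < t → hfun c γ rd i j r ≤ 0) :
    (γ j t - γ i t) * Real.sinh (Real.sqrt c * σ) ≤
      (γ j σ - γ i σ) * Real.sinh (Real.sqrt c * t) := by
  have hsqc : 0 < Real.sqrt c := Real.sqrt_pos.2 hc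
  set G : ℝ → ℝ := fun r => (γ j r - γ i r) / Real.sinh (Real.sqrt c * r) with hG
  have hsinh_ne : ∀ r ∈ Icc σ t, Real.sinh (Real.sqrt c * r) ≠ 0 :=
    fun r hr => (sinh_pos' hc (lt_of_lt_of_le hσ hr.1)).ne'
  have hGcont : ContinuousOn G (Icc σ t) := by
    apply ContinuousOn.div
    · exact ((hcont j).sub (hcont i)).mono fun u hu => le_trans hσ.le hu.1
    · exact (Real.continuous_sinh.comp (continuous_const.mul continuous_id)).continuousOn
    · exact hsinh_ne
  have hG' : ∀ r ∈ Ico σ t, HasDerivWithinAt G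
      (((rd j r - rd i r) * Real.sinh (Real.sqrt c * r) -
        (γ j r - γ i r) * (Real.cosh (Real.sqrt c * r) * Real.sqrt c)) /
        (Real.sinh (Real.sqrt c * r))^2) (Ici r) r := by
    intro r hr
    have h0r : (0:ℝ) ≤ r := le_trans hσ.le hr.1
    have hu : HasDerivWithinAt (fun u => γ j u - γ i u) (rd j r - rd i r) (Ici r) r :=
      (hrd j r h0r).sub (hrd i r h0r)
    have hlin : HasDerivAt (fun u : ℝ => Real.sqrt c * u) (Real.sqrt c) r := by
      simpa using (hasDerivAt_id r).const_mul (Real.sqrt c)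
    have hs2 : HasDerivWithinAt (fun u => Real.sinh (Real.sqrt c * u))
        (Real.cosh (Real.sqrt c * r) * Real.sqrt c) (Ici r) r :=
      ((Real.hasDerivAt_sinh _).comp r hlin).hasDerivWithinAt
    exact hu.div hs2 (hsinh_ne r ⟨hr.1, hr.2.le⟩)
  have key : ∀ ⦃r⦄, r ∈ Icc σ t → G r ≤ G σ := by
    apply image_le_of_deriv_right_le_deriv_boundary (B := fun _ => G σ) (B' := fun _ => 0)
      hGcont hG' (le_refl _) continuousOn_const (fun r _ => hasDerivWithinAt_const r _ _)
    intro r hr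
    apply div_nonpos_of_nonpos_of_nonneg
    · have h1 := hh r hr.1 hr.2
      simp only [hfun] at h1
      nlinarith [h1]
    · positivity
  have hfin := key (right_mem_Icc.2 hσt)
  have h1 := sinh_pos' hc hσ
  have h2 := sinh_pos' hc (lt_of_lt_of_le hσ hσt)
  rw [hG, div_le_div_iff₀ h2 h1] at hfin
  exact hfin

lemma ineq_limit
    (hcont : ∀ i, ContinuousOn (γ i) (Ici (0:ℝ)))
    {i j : Fin N} {s T : ℝ} (hs : 0 < s) (hsT : s < T)
    (hall : ∀ t', s ≤ t' → t' < T →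
      (γ j t' - γ i t') * Real.sinh (Real.sqrt c * s) ≤
        (γ j s - γ i s) * Real.sinh (Real.sqrt c * t')) :
    (γ j T - γ i T) * Real.sinh (Real.sqrt c * s) ≤
      (γ j s - γ i s) * Real.sinh (Real.sqrt c * T) := by
  have hT0 : (0:ℝ) ≤ T := le_trans hs.le hsT.le
  set Φ : ℝ → ℝ := fun t' => (γ j t' - γ i t') * Real.sinh (Real.sqrt c * s) -
      (γ j s - γ i s) * Real.sinh (Real.sqrt c * t') with hΦ
  have hsub : Ico s T ⊆ Ici (0:ℝ) := fun u hu => le_trans hs.le hu.1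
  have hγcw : ContinuousWithinAt (fun t' => γ j t' - γ i t') (Ico s T) T :=
    (((hcont j) T hT0).sub ((hcont i) T hT0)).mono hsub
  have hΦcw : ContinuousWithinAt Φ (Ico s T) T :=
    (hγcw.mul continuousWithinAt_const).sub
      (continuousWithinAt_const.mul
        ((Real.continuous_sinh.comp (continuous_const.mul continuous_id)).continuousWithinAt))
  have hmemc : T ∈ closure (Ico s T) := by
    rw [closure_Ico hsT.ne]; exact ⟨hsT.le, le_refl T⟩
  haveI hne := mem_closure_iff_nhdsWithin_neBot.1 hmemc
  have hev : ∀ᶠ t' in 𝓝[Ico s T] T, Φ t' ≤ 0 :=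
    eventually_nhdsWithin_of_forall fun t' ht' => by
      have := hall t' ht'.1 ht'.2; simp only [hΦ]; linarith
  have hlim : Φ T ≤ 0 := le_of_tendsto hΦcw hev
  simp only [hΦ] at hlim; linarith

lemma hfun_collision
    (hcont : ∀ i, ContinuousOn (γ i) (Ici (0:ℝ)))
    (hrd : ∀ i, ∀ t : ℝ, 0 ≤ t → HasDerivWithinAt (γ i) (rd i t) (Ici t) t)
    (hld : ∀ i, ∀ t : ℝ, 0 < t → HasDerivWithinAt (γ i) (ld i t) (Iic t) t)
    (hstick : ∀ i j, ∀ s t : ℝ, 0 ≤ s → s ≤ t → γ i s = γ j s → γ i t = γ j t)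
    (hcoll : ∀ t : ℝ, 0 < t → ∀ I : Finset (Fin N), I.Nonempty →
      (∀ i ∈ I, ∀ j ∈ I, γ i t = γ j t) →
      (∀ i, i ∉ I → ∀ j ∈ I, γ i t ≠ γ j t) →
      ∀ j ∈ I, rd j t = (∑ i ∈ I, m i * ld i t) / ∑ i ∈ I, m i)
    (hx0 : ∀ i, γ i 0 = x i)
    (hm : ∀ i, 0 < m i) (hc : 0 < c)
    {i j : Fin N} {T : ℝ} (hT : 0 < T) (hij : γ i T < γ j T)
    (IH : ∀ l p : Fin N, x l ≤ x p → ∀ s t' : ℝ, 0 < s → s ≤ t' → t' < T →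
      (γ p t' - γ l t') * Real.sinh (Real.sqrt c * s) ≤
        (γ p s - γ l s) * Real.sinh (Real.sqrt c * t')) :
    hfun c γ rd i j T ≤ 0 := by
  have hsqc : (0:ℝ) ≤ Real.sqrt c := Real.sqrt_nonneg c
  have hS : 0 < Real.sinh (Real.sqrt c * T) := sinh_pos' hc hT
  set S := Real.sinh (Real.sqrt c * T) with hSdef
  set C := Real.cosh (Real.sqrt c * T) with hCdef
  set B : ℝ := Real.sqrt c * (γ j T - γ i T) * C / S with hB
  have hld_bound : ∀ l p : Fin N, γ l T = γ i T → γ p T = γ j T →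
      ld p T - ld l T ≤ B := by
    intro l p hl hp
    have hlpT : γ l T < γ p T := by rw [hl, hp]; exact hij
    have hxlp : x l ≤ x p := by
      have h0 := gamma_lt hcont hstick hlpT le_rfl hT.le
      rw [hx0 l, hx0 p] at h0; exact h0.le
    have key : ∀ s, 0 < s → s < T →
        (γ p T - γ l T) * Real.sinh (Real.sqrt c * s) ≤
          (γ p s - γ l s) * Real.sinh (Real.sqrt c * T) := fun s h1 h2 =>
      ineq_limit hcont h1 h2 fun t' h3 h4 => IH l p hxlp s t' h1 h3 h4
    have hDlp : HasDerivWithinAt (fun u => γ p u - γ l u) (ld p T - ld l T) (Iic T) T :=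
      (hld p T hT).sub (hld l T hT)
    set q : ℝ := (γ p T - γ l T) / S with hq
    have hψ : HasDerivAt (fun u => q * Real.sinh (Real.sqrt c * u))
        (q * (Real.cosh (Real.sqrt c * T) * Real.sqrt c)) T := by
      have hlin : HasDerivAt (fun y : ℝ => Real.sqrt c * y) (Real.sqrt c) T := by
        simpa using (hasDerivAt_id T).const_mul (Real.sqrt c)
      exact ((Real.hasDerivAt_sinh _).comp T hlin).const_mul q
    have hset : Iic T \ {T} = Iio T := Iic_diff_right
    haveI : (𝓝[Iic T \ {T}] T).NeBot := by rw [hset]; infer_instance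
    have hslope1 : Tendsto (slope (fun u => γ p u - γ l u) T) (𝓝[Iic T \ {T}] T)
        (𝓝 (ld p T - ld l T)) := hasDerivWithinAt_iff_tendsto_slope.1 hDlp
    have hslope2 : Tendsto (slope (fun u => q * Real.sinh (Real.sqrt c * u)) T)
        (𝓝[Iic T \ {T}] T) (𝓝 (q * (Real.cosh (Real.sqrt c * T) * Real.sqrt c))) :=
      hasDerivWithinAt_iff_tendsto_slope.1 (hψ.hasDerivWithinAt (s := Iic T))
    have hev : slope (fun u => γ p u - γ l u) T ≤ᶠ[𝓝[Iic T \ {T}] T]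
        slope (fun u => q * Real.sinh (Real.sqrt c * u)) T := by
      have hmem : Ioo (0:ℝ) T ∈ 𝓝[Iic T \ {T}] T := by
        rw [hset]; exact Ioo_mem_nhdsLT_of_mem ⟨hT, le_refl T⟩
      filter_upwards [hmem] with z hz
      have h2 : z < T := hz.2
      have hfz : q * Real.sinh (Real.sqrt c * z) ≤ γ p z - γ l z := by
        have hk := key z hz.1 h2
        rw [hq, div_mul_eq_mul_div, div_le_iff₀ hS]
        linarith
      have hfT : q * Real.sinh (Real.sqrt c * T) = γ p T - γ l T := by
        rw [hq, div_mul_cancel₀ _ hS.ne']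
      rw [slope_def_field, slope_def_field, div_le_div_right_of_neg (by linarith : z - T < 0)]
      linarith
    have hfin := le_of_tendsto_of_tendsto hslope1 hslope2 hev
    calc ld p T - ld l T ≤ q * (Real.cosh (Real.sqrt c * T) * Real.sqrt c) := hfin
      _ = B := by rw [hq, hB, hp, hl, ← hCdef]; ring
  set I : Finset (Fin N) := Finset.univ.filter (fun l => γ l T = γ i T) with hI
  set J : Finset (Fin N) := Finset.univ.filter (fun p => γ p T = γ j T) with hJ
  have hiI : i ∈ I := by simp [hI]
  have hjJ : j ∈ J := by simp [hJ]
  have hrdi : rd i T = (∑ l ∈ I, m l * ld l T) / ∑ l ∈ I, m l := by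
    refine hcoll T hT I ⟨i, hiI⟩ ?_ ?_ i hiI
    · intro a ha b hb
      simp only [hI, Finset.mem_filter, Finset.mem_univ, true_and] at ha hb
      rw [ha, hb]
    · intro a ha b hb
      simp only [hI, Finset.mem_filter, Finset.mem_univ, true_and] at ha hb
      rw [hb]; exact ha
  have hrdj : rd j T = (∑ p ∈ J, m p * ld p T) / ∑ p ∈ J, m p := by
    refine hcoll T hT J ⟨j, hjJ⟩ ?_ ?_ j hjJ
    · intro a ha b hb
      simp only [hJ, Finset.mem_filter, Finset.mem_univ, true_and] at ha hb
      rw [ha, hb]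
    · intro a ha b hb
      simp only [hJ, Finset.mem_filter, Finset.mem_univ, true_and] at ha hb
      rw [hb]; exact ha
  have hMI : 0 < ∑ l ∈ I, m l := Finset.sum_pos (fun l _ => hm l) ⟨i, hiI⟩
  have hMJ : 0 < ∑ p ∈ J, m p := Finset.sum_pos (fun p _ => hm p) ⟨j, hjJ⟩
  have hdouble : (∑ l ∈ I, m l) * (∑ p ∈ J, m p * ld p T) -
      (∑ p ∈ J, m p) * (∑ l ∈ I, m l * ld l T) ≤
      ((∑ l ∈ I, m l) * (∑ p ∈ J, m p)) * B := by
    have e : (∑ l ∈ I, m l) * (∑ p ∈ J, m p * ld p T) -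
        (∑ p ∈ J, m p) * (∑ l ∈ I, m l * ld l T) =
        ∑ l ∈ I, ∑ p ∈ J, m l * m p * (ld p T - ld l T) := by
      have e1 : ∀ l ∈ I, ∑ p ∈ J, m l * m p * (ld p T - ld l T) =
          m l * (∑ p ∈ J, m p * ld p T) - m l * ld l T * (∑ p ∈ J, m p) := by
        intro l _
        have h2 : ∀ p : Fin N, m l * m p * (ld p T - ld l T) =
            m l * (m p * ld p T) - m l * ld l T * m p := fun p => by ring
        simp_rw [h2]
        rw [Finset.sum_sub_distrib, ← Finset.mul_sum, ← Finset.mul_sum]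
      rw [Finset.sum_congr rfl e1, Finset.sum_sub_distrib, ← Finset.sum_mul, ← Finset.sum_mul]
      ring
    rw [e]
    have hb2 : ∑ l ∈ I, ∑ p ∈ J, m l * m p * (ld p T - ld l T) ≤
        ∑ l ∈ I, ∑ p ∈ J, m l * m p * B := by
      refine Finset.sum_le_sum fun l hlmem => Finset.sum_le_sum fun p hpmem => ?_
      have hlI : γ l T = γ i T := by
        have := hlmem; simp only [hI, Finset.mem_filter, Finset.mem_univ, true_and] at this
        exact this
      have hpJ : γ p T = γ j T := by
        have := hpmem; simp only [hJ, Finset.mem_filter, Finset.mem_univ, true_and] at this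
        exact this
      exact mul_le_mul_of_nonneg_left (hld_bound l p hlI hpJ)
        (mul_nonneg (hm l).le (hm p).le)
    refine le_trans hb2 (le_of_eq ?_)
    rw [Finset.sum_mul_sum]
    rw [Finset.sum_mul]
    refine Finset.sum_congr rfl fun l _ => ?_
    rw [Finset.sum_mul]
  have hdiff : rd j T - rd i T ≤ B := by
    rw [hrdi, hrdj, div_sub_div _ _ hMJ.ne' hMI.ne', div_le_iff₀ (mul_pos hMJ hMI)]
    nlinarith [hdouble]
  have hfe : hfun c γ rd i j T = (rd j T - rd i T) * S -
      Real.sqrt c * ((γ j T - γ i T) * C) := rfl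
  rw [hfe]
  have hBS : B * S = Real.sqrt c * ((γ j T - γ i T) * C) := by
    rw [hB, div_mul_cancel₀ _ hS.ne']; ring
  nlinarith [mul_le_mul_of_nonneg_right hdiff hS.le, hBS]

lemma mainQ
    (hcont : ∀ i, ContinuousOn (γ i) (Ici (0:ℝ)))
    (hrd : ∀ i, ∀ t : ℝ, 0 ≤ t → HasDerivWithinAt (γ i) (rd i t) (Ici t) t)
    (hld : ∀ i, ∀ t : ℝ, 0 < t → HasDerivWithinAt (γ i) (ld i t) (Iic t) t)
    (hF : ∀ i, ∀ t : ℝ, 0 < t → t ∉ F →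
      HasDerivAt (γ i) (rd i t) t ∧
      HasDerivAt (rd i) (-∑ j, m j * deriv W (γ i t - γ j t)) t)
    (hx0 : ∀ i, γ i 0 = x i)
    (hstick : ∀ i j, ∀ s t : ℝ, 0 ≤ s → s ≤ t → γ i s = γ j s → γ i t = γ j t)
    (hcoll : ∀ t : ℝ, 0 < t → ∀ I : Finset (Fin N), I.Nonempty →
      (∀ i ∈ I, ∀ j ∈ I, γ i t = γ j t) →
      (∀ i, i ∉ I → ∀ j ∈ I, γ i t ≠ γ j t) →
      ∀ j ∈ I, rd j t = (∑ i ∈ I, m i * ld i t) / ∑ i ∈ I, m i)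
    (hWsm : ContDiff ℝ 1 W) (hc : 0 < c)
    (hconv : ConvexOn ℝ Set.univ (fun x => W x + c / 2 * x ^ 2))
    (hm : ∀ i, 0 < m i) (hsum : ∑ i, m i = 1) :
    ∀ n : ℕ, ∀ t : ℝ, 0 < t → (F.filter (fun r => 0 < r ∧ r ≤ t)).card ≤ n →
      ∀ i j : Fin N, x i ≤ x j → ∀ s : ℝ, 0 < s → s ≤ t →
        (γ j t - γ i t) * Real.sinh (Real.sqrt c * s) ≤
          (γ j s - γ i s) * Real.sinh (Real.sqrt c * t) := by
  intro n
  induction n using Nat.strong_induction_on with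
  | _ n IHn =>
  intro t ht hcard i j hij s hs hst
  have hord : ∀ u : ℝ, 0 ≤ u → γ i u ≤ γ j u := fun u hu =>
    gamma_le hcont hstick hx0 hij hu
  rcases eq_or_lt_of_le (hord t ht.le) with heq | hlt
  · calc (γ j t - γ i t) * Real.sinh (Real.sqrt c * s) = 0 := by
          rw [← heq, sub_self, zero_mul]
      _ ≤ (γ j s - γ i s) * Real.sinh (Real.sqrt c * t) :=
          mul_nonneg (sub_nonneg.2 (hord s hs.le)) (sinh_pos' hc ht).le
  · set S0 : Finset ℝ := (insert (0:ℝ) F).filter (fun r => 0 ≤ r ∧ r < t) with hS0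
    have h0S : (0:ℝ) ∈ S0 := by
      rw [hS0, Finset.mem_filter]
      exact ⟨Finset.mem_insert_self _ _, le_refl 0, ht⟩
    set T := S0.max' ⟨0, h0S⟩ with hTdef
    have hTS : T ∈ S0 := S0.max'_mem _
    have hT0 : 0 ≤ T := (Finset.mem_filter.1 hTS).2.1
    have hTt : T < t := (Finset.mem_filter.1 hTS).2.2
    have hTF : T = 0 ∨ T ∈ F := by
      rcases Finset.mem_insert.1 (Finset.mem_filter.1 hTS).1 with h | h
      · exact Or.inl h
      · exact Or.inr h
    have hfree : ∀ p ∈ F, p ≤ T ∨ t ≤ p := by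
      intro p hp
      by_cases h1 : p < t
      · by_cases h2 : 0 ≤ p
        · refine Or.inl (S0.le_max' p ?_)
          rw [hS0, Finset.mem_filter]
          exact ⟨Finset.mem_insert_of_mem hp, h2, h1⟩
        · exact Or.inl (le_trans (not_le.1 h2).le hT0)
      · exact Or.inr (not_lt.1 h1)
    have IHlow : T ∈ F → 0 < T → ∀ l p : Fin N, x l ≤ x p →
        ∀ s' t' : ℝ, 0 < s' → s' ≤ t' → t' < T →
          (γ p t' - γ l t') * Real.sinh (Real.sqrt c * s') ≤
            (γ p s' - γ l s') * Real.sinh (Real.sqrt c * t') := by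
      intro hTF' hTpos l p hlp s' t' h1 h2 h3
      have hTmem : T ∈ F.filter (fun r => 0 < r ∧ r ≤ t) :=
        Finset.mem_filter.2 ⟨hTF', hTpos, hTt.le⟩
      have hsubset : F.filter (fun r => 0 < r ∧ r ≤ t') ⊆
          (F.filter (fun r => 0 < r ∧ r ≤ t)).erase T := by
        intro r hr
        rw [Finset.mem_filter] at hr
        rw [Finset.mem_erase, Finset.mem_filter]
        refine ⟨by linarith [hr.2.2], hr.1, hr.2.1, by linarith [hr.2.2]⟩
      have hcard' : (F.filter (fun r => 0 < r ∧ r ≤ t')).card < n :=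
        lt_of_le_of_lt (Finset.card_le_card hsubset)
          (lt_of_lt_of_le (Finset.card_erase_lt_of_mem hTmem) hcard)
      exact IHn _ hcard' t' (lt_of_lt_of_le h1 h2) le_rfl l p hlp s' h1 h2
    have hhT : hfun c γ rd i j T ≤ 0 := by
      by_cases hTz : T = 0
      · rw [hTz]
        have h2 : Real.sqrt c * 0 = 0 := mul_zero _
        simp only [hfun, h2, Real.sinh_zero, Real.cosh_zero, mul_zero, zero_sub, mul_one]
        have h1 := hord 0 le_rfl
        have h3 := Real.sqrt_nonneg c
        nlinarith
      · have hTpos : 0 < T := lt_of_le_of_ne hT0 (Ne.symm hTz)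
        have hTF' : T ∈ F := by
          rcases hTF with h | h
          · exact absurd h hTz
          · exact h
        have hltT : γ i T < γ j T := gamma_lt hcont hstick hlt hT0 hTt.le
        exact hfun_collision hcont hrd hld hstick hcoll hx0 hm hc hTpos hltT
          (IHlow hTF' hTpos)
    have hstep : ∀ r, T ≤ r → r < t → hfun c γ rd i j r ≤ 0 := by
      intro r h1 h2
      rcases eq_or_lt_of_le h1 with rfl | h1'
      · exact hhT
      · exact hfun_le hcont hrd hF hWsm hc hconv hm hsum hT0 hfree hhT hord h1' h2
    rcases le_or_gt T s with hTs | hsT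
    · exact ratio_mono hcont hrd hc hs hst fun r hr1 hr2 => hstep r (le_trans hTs hr1) hr2
    · have hTpos : 0 < T := lt_trans hs hsT
      have hTF' : T ∈ F := by
        rcases hTF with h | h
        · exact absurd h (ne_of_gt hTpos)
        · exact h
      have part1 : (γ j T - γ i T) * Real.sinh (Real.sqrt c * s) ≤
          (γ j s - γ i s) * Real.sinh (Real.sqrt c * T) := by
        apply ineq_limit hcont hs hsT
        intro t' h3 h4
        exact IHlow hTF' hTpos i j hij s t' hs h3 h4
      have part2 : (γ j t - γ i t) * Real.sinh (Real.sqrt c * T) ≤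
          (γ j T - γ i T) * Real.sinh (Real.sqrt c * t) :=
        ratio_mono hcont hrd hc hTpos hTt.le fun r hr1 hr2 => hstep r hr1 hr2
      have hsinhT := sinh_pos' hc hTpos
      have hsinhs := sinh_pos' hc hs
      have hsinht := sinh_pos' hc ht
      nlinarith [mul_le_mul_of_nonneg_right part2 hsinhs.le,
        mul_le_mul_of_nonneg_right part1 hsinht.le]

end StickyAux

/-- Proposition 3.4 (quantitative sticky particle property). -/
theorem sticky_particle_quantitative_stickiness
    (N : ℕ) (x m v : Fin N → ℝ) (W : ℝ → ℝ) (c : ℝ)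
    (hx : Function.Injective x)
    (hm : ∀ i, 0 < m i) (hsum : ∑ i, m i = 1)
    (hW : WHyp W c)
    (γ rd ld : Fin N → ℝ → ℝ)
    (hγ : StickyTrajectories N x m v W γ rd ld) :
    ∀ i j : Fin N, ∀ s t : ℝ, 0 < s → s ≤ t →
      |γ i t - γ j t| / Real.sinh (Real.sqrt c * t) ≤
        |γ i s - γ j s| / Real.sinh (Real.sqrt c * s) := by
  obtain ⟨hcont, hrd, hld, ⟨F, hF⟩, hx0, hv0, hstick, hcoll⟩ := hγ
  obtain ⟨hWsm, -, -, hc, hconv⟩ := hW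
  intro i j s t hs hst
  have ht : 0 < t := lt_of_lt_of_le hs hst
  have hsinh_s := StickyAux.sinh_pos' hc hs
  have hsinh_t := StickyAux.sinh_pos' hc ht
  rw [div_le_div_iff₀ hsinh_t hsinh_s]
  rcases le_total (x i) (x j) with hij | hij
  · have h1 : γ i t ≤ γ j t := StickyAux.gamma_le hcont hstick hx0 hij ht.le
    have h2 : γ i s ≤ γ j s := StickyAux.gamma_le hcont hstick hx0 hij hs.le
    rw [abs_sub_comm (γ i t), abs_sub_comm (γ i s),
      abs_of_nonneg (sub_nonneg.2 h1), abs_of_nonneg (sub_nonneg.2 h2)]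
    exact StickyAux.mainQ hcont hrd hld hF hx0 hstick hcoll hWsm hc hconv hm hsum
      _ t ht le_rfl i j hij s hs hst
  · have h1 : γ j t ≤ γ i t := StickyAux.gamma_le hcont hstick hx0 hij ht.le
    have h2 : γ j s ≤ γ i s := StickyAux.gamma_le hcont hstick hx0 hij hs.le
    rw [abs_of_nonneg (sub_nonneg.2 h1), abs_of_nonneg (sub_nonneg.2 h2)]
    exact StickyAux.mainQ hcont hrd hld hF hx0 hstick hcoll hWsm hc hconv hm hsum
      _ t ht le_rfl j i hij s hs hst

end
end

section
/- Let γ₁,…,γ_N: [0,∞) → ℝ be sticky particle trajectories for distinct initial positions x₁,…,x_N, masses m₁,…,m_N > 0 with Σᵢ mᵢ = 1, initial velocities v₁,…,v_N, and potential W with semiconvexity constant c > 0. Then for each 0 < s ≤ t there is a function f_{t,s}: ℝ → ℝ such that γᵢ(t) = f_{t,s}(γᵢ(s)) for every i = 1,…,N, and |f_{t,s}(x) − f_{t,s}(y)| ≤ (sinh(√c t)/sinh(√c s)) |x − y| for all x, y ∈ ℝ. -/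
open MeasureTheory Real Filter Set Topology

noncomputable section

lemma sticky_Wmono {W : ℝ → ℝ} {c : ℝ} (hW1 : ContDiff ℝ 1 W)
    (hWc : ConvexOn ℝ Set.univ (fun x => W x + c / 2 * x ^ 2)) :
    ∀ {A B : ℝ}, B ≤ A → deriv W B + c * B ≤ deriv W A + c * A := by
  intro A B hBA
  have hd : ∀ z : ℝ, HasDerivAt (fun x => W x + c / 2 * x ^ 2) (deriv W z + c * z) z := by
    intro z
    have h1 : HasDerivAt W (deriv W z) z := ((hW1.differentiable one_ne_zero) z).hasDerivAt
    have h2 : HasDerivAt (fun x : ℝ => c / 2 * x ^ 2) (c * z) z := by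
      have := ((hasDerivAt_pow 2 z).const_mul (c / 2))
      refine this.congr_deriv ?_
      rw [show (2:ℕ) - 1 = 1 from rfl]
      push_cast
      ring
    exact h1.add h2
  have hm := hWc.monotoneOn_deriv (fun z _ => (hd z).differentiableAt)
  have e : ∀ z : ℝ, deriv (fun x => W x + c / 2 * x ^ 2) z = deriv W z + c * z :=
    fun z => (hd z).deriv
  have h := hm (Set.mem_univ B) (Set.mem_univ A) hBA
  rwa [e, e] at h

-- no-crossing
lemma sticky_order {N : ℕ} {γ : Fin N → ℝ → ℝ}
    (hcont : ∀ i, ContinuousOn (γ i) (Ici (0:ℝ)))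
    (hst : ∀ i j, ∀ s t : ℝ, 0 ≤ s → s ≤ t → γ i s = γ j s → γ i t = γ j t)
    {i j : Fin N} {u u' : ℝ} (hu : 0 ≤ u) (huu : u ≤ u')
    (hle : γ i u ≤ γ j u) : γ i u' ≤ γ j u' := by
  by_contra hlt
  push_neg at hlt
  rcases eq_or_lt_of_le hle with heq | hstrict
  · exact absurd (hst i j u u' hu huu heq) (ne_of_gt hlt)
  · have hρ : ContinuousOn (fun z => γ j z - γ i z) (Icc u u') :=
      ((hcont j).mono (Icc_subset_Ici_self.trans (Ici_subset_Ici.mpr hu))).sub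
        ((hcont i).mono (Icc_subset_Ici_self.trans (Ici_subset_Ici.mpr hu)))
    have h0 : (0:ℝ) ∈ Icc (γ j u' - γ i u') (γ j u - γ i u) :=
      ⟨by linarith, by linarith⟩
    obtain ⟨w, hw, hw0⟩ := intermediate_value_Icc' huu hρ h0
    have : γ j w = γ i w := by linarith [hw0, sub_eq_zero.mp hw0]
    have := hst j i w u' (hu.trans hw.1) hw.2 this
    linarith
noncomputable section

lemma sticky_ld_nonpos {δ : ℝ → ℝ} {u d w : ℝ} (hw : w < u)
    (hd : HasDerivWithinAt δ d (Iic u) u) (h0 : δ u = 0)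
    (hnn : ∀ z ∈ Icc w u, 0 ≤ δ z) : d ≤ 0 := by
  have hT : Tendsto (slope δ u) (𝓝[Iio u] u) (𝓝 d) :=
    (hasDerivWithinAt_iff_tendsto_slope.mp hd).mono_left
      (nhdsWithin_mono _ (fun z hz => ⟨mem_Iic.mpr (le_of_lt hz), by simp only [Set.mem_singleton_iff]; exact ne_of_lt hz⟩))
  refine le_of_tendsto hT ?_
  have hev : ∀ᶠ z in 𝓝[Iio u] u, w < z :=
    eventually_nhdsWithin_of_eventually_nhds (eventually_gt_nhds hw)
  filter_upwards [hev, self_mem_nhdsWithin] with z hz (hz' : z < u)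
  rw [slope_def_field, h0, sub_zero]
  exact div_nonpos_of_nonneg_of_nonpos (hnn z ⟨hz.le, hz'.le⟩) (by linarith)

lemma sticky_tendsto_right {ρ r : ℝ → ℝ} {p q d M : ℝ} (hpq : p < q) (hM : 0 ≤ M)
    (hcont : ContinuousOn ρ (Icc p q))
    (hder : ∀ z ∈ Ioo p q, HasDerivAt ρ (r z) z)
    (hlip : ∀ z ∈ Ioo p q, ∀ w ∈ Ioo p q, |r z - r w| ≤ M * |z - w|)
    (hd : HasDerivWithinAt ρ d (Ici p) p) :
    Tendsto r (𝓝[Ioo p q] p) (𝓝 d) := by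
  have hslope : Tendsto (slope ρ p) (𝓝[Ioo p q] p) (𝓝 d) :=
    (hasDerivWithinAt_iff_tendsto_slope.mp hd).mono_left
      (nhdsWithin_mono _ (fun z hz => ⟨mem_Ici.mpr hz.1.le, by simp only [Set.mem_singleton_iff]; exact ne_of_gt hz.1⟩))
  have herr : ∀ u ∈ Ioo p q, |r u - slope ρ p u| ≤ M * (u - p) := by
    intro u hu
    obtain ⟨ξ, hξ, hξe⟩ := exists_hasDerivAt_eq_slope ρ r hu.1
      (hcont.mono (Icc_subset_Icc le_rfl hu.2.le))
      (fun z hz => hder z ⟨hz.1, hz.2.trans hu.2⟩)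
    have hs : slope ρ p u = r ξ := by rw [slope_def_field, hξe]
    rw [hs]
    calc |r u - r ξ| ≤ M * |u - ξ| := hlip u hu ξ ⟨hξ.1, hξ.2.trans hu.2⟩
      _ ≤ M * (u - p) := by
          apply mul_le_mul_of_nonneg_left _ hM
          rw [abs_of_nonneg (by linarith [hξ.2] : (0:ℝ) ≤ u - ξ)]
          linarith [hξ.1]
  have h0 : Tendsto (fun u => r u - slope ρ p u) (𝓝[Ioo p q] p) (𝓝 0) := by
    apply squeeze_zero_norm' _ ?_
    · exact fun u => M * (u - p)
    · filter_upwards [self_mem_nhdsWithin] with u hu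
      simpa [Real.norm_eq_abs] using herr u hu
    · have : Tendsto (fun u : ℝ => M * (u - p)) (𝓝 p) (𝓝 (M * (p - p))) := by
        exact (continuous_const.mul (continuous_id.sub continuous_const)).tendsto p
      simpa using this.mono_left nhdsWithin_le_nhds
  have := h0.add hslope
  simp only [zero_add] at this
  exact this.congr (fun u => by ring)

lemma sticky_tendsto_left {ρ r : ℝ → ℝ} {p q d M : ℝ} (hpq : p < q) (hM : 0 ≤ M)
    (hcont : ContinuousOn ρ (Icc p q))
    (hder : ∀ z ∈ Ioo p q, HasDerivAt ρ (r z) z)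
    (hlip : ∀ z ∈ Ioo p q, ∀ w ∈ Ioo p q, |r z - r w| ≤ M * |z - w|)
    (hd : HasDerivWithinAt ρ d (Iic q) q) :
    Tendsto r (𝓝[Ioo p q] q) (𝓝 d) := by
  have hslope : Tendsto (slope ρ q) (𝓝[Ioo p q] q) (𝓝 d) :=
    (hasDerivWithinAt_iff_tendsto_slope.mp hd).mono_left
      (nhdsWithin_mono _ (fun z hz => ⟨mem_Iic.mpr hz.2.le, by simp only [Set.mem_singleton_iff]; exact ne_of_lt hz.2⟩))
  have herr : ∀ u ∈ Ioo p q, |r u - slope ρ q u| ≤ M * (q - u) := by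
    intro u hu
    obtain ⟨ξ, hξ, hξe⟩ := exists_hasDerivAt_eq_slope ρ r hu.2
      (hcont.mono (Icc_subset_Icc hu.1.le le_rfl))
      (fun z hz => hder z ⟨hu.1.trans hz.1, hz.2⟩)
    have hs : slope ρ q u = r ξ := by
      rw [slope_comm, slope_def_field, hξe]
    rw [hs]
    calc |r u - r ξ| ≤ M * |u - ξ| := hlip u hu ξ ⟨hu.1.trans hξ.1, hξ.2⟩
      _ ≤ M * (q - u) := by
          apply mul_le_mul_of_nonneg_left _ hM
          rw [abs_of_nonpos (by linarith [hξ.1] : u - ξ ≤ 0)]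
          linarith [hξ.2]
  have h0 : Tendsto (fun u => r u - slope ρ q u) (𝓝[Ioo p q] q) (𝓝 0) := by
    apply squeeze_zero_norm' _ ?_
    · exact fun u => M * (q - u)
    · filter_upwards [self_mem_nhdsWithin] with u hu
      simpa [Real.norm_eq_abs] using herr u hu
    · have : Tendsto (fun u : ℝ => M * (q - u)) (𝓝 q) (𝓝 (M * (q - q))) :=
        (continuous_const.mul (continuous_const.sub continuous_id)).tendsto q
      simpa using this.mono_left nhdsWithin_le_nhds
  have := h0.add hslope
  simp only [zero_add] at this
  exact this.congr (fun u => by ring)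

lemma sticky_gap {N : ℕ} {x m : Fin N → ℝ} {W : ℝ → ℝ} {c : ℝ} {γ rd ld : Fin N → ℝ → ℝ}
    (hm : ∀ i, 0 < m i) (hsum : ∑ i, m i = 1)
    (hW1 : ContDiff ℝ 1 W) (hc : 0 < c)
    (hWc : ConvexOn ℝ Set.univ (fun z => W z + c / 2 * z ^ 2))
    (hcont : ∀ i, ContinuousOn (γ i) (Ici (0:ℝ)))
    (hrd : ∀ i, ∀ u : ℝ, 0 ≤ u → HasDerivWithinAt (γ i) (rd i u) (Ici u) u)
    (hld : ∀ i, ∀ u : ℝ, 0 < u → HasDerivWithinAt (γ i) (ld i u) (Iic u) u)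
    (F : Finset ℝ)
    (hNew : ∀ i, ∀ u : ℝ, 0 < u → u ∉ F →
      HasDerivAt (γ i) (rd i u) u ∧
      HasDerivAt (rd i) (-∑ j, m j * deriv W (γ i u - γ j u)) u)
    (hinit : ∀ i, γ i 0 = x i)
    (hstick : ∀ i j, ∀ s t : ℝ, 0 ≤ s → s ≤ t → γ i s = γ j s → γ i t = γ j t)
    (hcol : ∀ u : ℝ, 0 < u → ∀ I : Finset (Fin N), I.Nonempty →
      (∀ i ∈ I, ∀ j ∈ I, γ i u = γ j u) →
      (∀ i, i ∉ I → ∀ j ∈ I, γ i u ≠ γ j u) →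
      ∀ j ∈ I, rd j u = (∑ i ∈ I, m i * ld i u) / ∑ i ∈ I, m i)
    {a b : Fin N} (hab : x a < x b) (hadj : ∀ l, ¬(x a < x l ∧ x l < x b))
    {s t : ℝ} (hs : 0 < s) (hstt : s ≤ t) :
    γ b t - γ a t ≤
      Real.sinh (Real.sqrt c * t) / Real.sinh (Real.sqrt c * s) * (γ b s - γ a s) := by
  have hord : ∀ i j, x i ≤ x j → ∀ u : ℝ, 0 ≤ u → γ i u ≤ γ j u := by
    intro i j hij u hu
    exact sticky_order hcont hstick le_rfl hu (by rw [hinit, hinit]; exact hij)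
  set sc := Real.sqrt c with hscdef
  have hsc : 0 < sc := Real.sqrt_pos.mpr hc
  have hscsq : sc * sc = c := Real.mul_self_sqrt hc.le
  have hshs : 0 < Real.sinh (sc * s) := Real.sinh_pos_iff.mpr (mul_pos hsc hs)
  have hsht : 0 < Real.sinh (sc * t) := Real.sinh_pos_iff.mpr (mul_pos hsc (hs.trans_le hstt))
  -- trivial case : the two particles meet in [s,t]
  by_cases hmeet : ∃ u, u ∈ Icc s t ∧ γ a u = γ b u
  · obtain ⟨u, hu, he⟩ := hmeet
    have hbt : γ a t = γ b t := hstick a b u t (hs.le.trans hu.1) hu.2 he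
    have h1 : γ a s ≤ γ b s := hord a b hab.le s hs.le
    have hL : 0 ≤ Real.sinh (sc * t) / Real.sinh (sc * s) := div_nonneg hsht.le hshs.le
    nlinarith [mul_nonneg hL (by linarith : (0:ℝ) ≤ γ b s - γ a s)]
  · -- main case
    push_neg at hmeet
    have hpos : ∀ u ∈ Icc (0:ℝ) t, γ a u < γ b u := by
      intro u hu
      rcases (hord a b hab.le u hu.1).lt_or_eq with h | h
      · exact h
      · exfalso
        rcases le_total u s with h' | h'
        · exact hmeet s ⟨le_rfl, hstt⟩ (hstick a b u s hu.1 h' h)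
        · exact hmeet u ⟨h', hu.2⟩ h
    -- abbreviations
    set ρ : ℝ → ℝ := fun u => γ b u - γ a u with hρdef
    set rdd : ℝ → ℝ := fun u => rd b u - rd a u with hrdddef
    set ldd : ℝ → ℝ := fun u => ld b u - ld a u with hldddef
    set g : ℝ → ℝ := fun u =>
      (∑ j, m j * deriv W (γ a u - γ j u)) - (∑ j, m j * deriv W (γ b u - γ j u)) with hgdef
    set A : ℝ → ℝ := fun u => rdd u * Real.sinh (sc * u) - ρ u * (sc * Real.cosh (sc * u))
      with hAdef
    set Al : ℝ → ℝ := fun u => ldd u * Real.sinh (sc * u) - ρ u * (sc * Real.cosh (sc * u))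
      with hAldef
    have hsh_deriv : ∀ u : ℝ, HasDerivAt (fun z => Real.sinh (sc * z))
        (Real.cosh (sc * u) * sc) u := by
      intro u
      have := (Real.hasDerivAt_sinh (sc * u)).comp u ((hasDerivAt_id u).const_mul sc)
      simpa [Function.comp_def] using this
    have hch_deriv : ∀ u : ℝ, HasDerivAt (fun z => sc * Real.cosh (sc * z))
        (sc * (Real.sinh (sc * u) * sc)) u := by
      intro u
      have := ((Real.hasDerivAt_cosh (sc * u)).comp u
        ((hasDerivAt_id u).const_mul sc)).const_mul sc
      simpa using this
    have hρcont : ContinuousOn ρ (Ici (0:ℝ)) := (hcont b).sub (hcont a)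
    have hρr : ∀ u : ℝ, 0 ≤ u → HasDerivWithinAt ρ (rdd u) (Ici u) u :=
      fun u hu => (hrd b u hu).sub (hrd a u hu)
    have hρl : ∀ u : ℝ, 0 < u → HasDerivWithinAt ρ (ldd u) (Iic u) u :=
      fun u hu => (hld b u hu).sub (hld a u hu)
    have hρder : ∀ u : ℝ, 0 < u → u ∉ F → HasDerivAt ρ (rdd u) u :=
      fun u h1 h2 => ((hNew b u h1 h2).1).sub ((hNew a u h1 h2).1)
    have hrddder : ∀ u : ℝ, 0 < u → u ∉ F → HasDerivAt rdd (g u) u := by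
      intro u h1 h2
      have h := ((hNew b u h1 h2).2).sub ((hNew a u h1 h2).2)
      refine h.congr_deriv ?_
      rw [hgdef]
      ring
    -- continuity and boundedness of g on [0, t]
    have hdW : Continuous (deriv W) := hW1.continuous_deriv le_rfl
    have hgcont : ContinuousOn g (Icc (0:ℝ) t) := by
      rw [hgdef]
      apply ContinuousOn.sub <;>
      · apply continuousOn_finset_sum
        intro j _
        apply continuousOn_const.mul
        apply hdW.comp_continuousOn
        exact (((hcont _).mono Icc_subset_Ici_self).sub ((hcont j).mono Icc_subset_Ici_self))
    obtain ⟨M0, hM0⟩ := isCompact_Icc.exists_bound_of_continuousOn hgcont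
    set M : ℝ := max M0 0 with hMdef
    have hM : 0 ≤ M := le_max_right _ _
    have hMg : ∀ u ∈ Icc (0:ℝ) t, |g u| ≤ M := by
      intro u hu
      calc |g u| = ‖g u‖ := (Real.norm_eq_abs _).symm
        _ ≤ M0 := hM0 u hu
        _ ≤ M := le_max_left _ _
    -- semiconvexity bound : g ≤ c ρ on [0,t]
    have hgb : ∀ u ∈ Icc (0:ℝ) t, g u ≤ c * ρ u := by
      intro u hu
      have hterm : ∀ j : Fin N,
          m j * deriv W (γ a u - γ j u) - m j * deriv W (γ b u - γ j u)
            ≤ m j * (c * ρ u) := by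
        intro j
        have hBA : γ a u - γ j u ≤ γ b u - γ j u := by
          have := hord a b hab.le u hu.1
          linarith
        have hkey := sticky_Wmono hW1 hWc hBA
        have hρu : ρ u = (γ b u - γ j u) - (γ a u - γ j u) := by rw [hρdef]; ring
        have h2 : deriv W (γ a u - γ j u) - deriv W (γ b u - γ j u) ≤ c * ρ u := by
          rw [hρu]; linarith
        calc m j * deriv W (γ a u - γ j u) - m j * deriv W (γ b u - γ j u)
            = m j * (deriv W (γ a u - γ j u) - deriv W (γ b u - γ j u)) := by ring
          _ ≤ m j * (c * ρ u) := mul_le_mul_of_nonneg_left h2 (hm j).le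
      have hsumle : ∑ j, (m j * deriv W (γ a u - γ j u) - m j * deriv W (γ b u - γ j u))
          ≤ ∑ j, m j * (c * ρ u) := Finset.sum_le_sum (fun j _ => hterm j)
      rw [Finset.sum_sub_distrib] at hsumle
      rw [← Finset.sum_mul, hsum, one_mul] at hsumle
      rw [hgdef]
      exact hsumle
    -- jump inequality
    have hjump : ∀ u : ℝ, 0 < u → u ≤ t → rdd u ≤ ldd u := by
      intro u hu hut
      have hu0 : (0:ℝ) ≤ u := hu.le
      have hpu : γ a u < γ b u := hpos u ⟨hu0, hut⟩
      -- upper cluster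
      have hbub : rd b u ≤ ld b u := by
        set Ib : Finset (Fin N) := Finset.univ.filter (fun l => γ l u = γ b u) with hIbdef
        have hmemb : ∀ l, l ∈ Ib ↔ γ l u = γ b u := by
          intro l; rw [hIbdef]; simp
        have hbIb : b ∈ Ib := (hmemb b).mpr rfl
        have havg := hcol u hu Ib ⟨b, hbIb⟩
          (fun i hi j hj => by rw [(hmemb i).mp hi, (hmemb j).mp hj])
          (fun i hi j hj hij => hi ((hmemb i).mpr (hij.trans ((hmemb j).mp hj))))
          b hbIb
        have hldle : ∀ l ∈ Ib, ld l u ≤ ld b u := by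
          intro l hl
          have hlu : γ l u = γ b u := (hmemb l).mp hl
          have hxl : x b ≤ x l := by
            by_contra hxl
            push_neg at hxl
            have h2 : x l ≤ x a := le_of_not_gt (fun h => hadj l ⟨h, hxl⟩)
            have := hord l a h2 u hu0
            linarith
          have hge : ∀ z ∈ Icc (0:ℝ) u, 0 ≤ γ l z - γ b z :=
            fun z hz => by linarith [hord b l hxl z hz.1]
          have := sticky_ld_nonpos hu ((hld l u hu).sub (hld b u hu))
            (by rw [Pi.sub_apply, hlu]; ring) hge
          linarith
        have hsp : 0 < ∑ i ∈ Ib, m i := Finset.sum_pos (fun i _ => hm i) ⟨b, hbIb⟩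
        rw [havg, div_le_iff₀ hsp]
        calc ∑ i ∈ Ib, m i * ld i u ≤ ∑ i ∈ Ib, m i * ld b u :=
              Finset.sum_le_sum (fun i hi => mul_le_mul_of_nonneg_left (hldle i hi) (hm i).le)
          _ = ld b u * ∑ i ∈ Ib, m i := by rw [← Finset.sum_mul]; ring
      -- lower cluster
      have haub : ld a u ≤ rd a u := by
        set Ia : Finset (Fin N) := Finset.univ.filter (fun l => γ l u = γ a u) with hIadef
        have hmema : ∀ l, l ∈ Ia ↔ γ l u = γ a u := by
          intro l; rw [hIadef]; simp
        have haIa : a ∈ Ia := (hmema a).mpr rfl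
        have havg := hcol u hu Ia ⟨a, haIa⟩
          (fun i hi j hj => by rw [(hmema i).mp hi, (hmema j).mp hj])
          (fun i hi j hj hij => hi ((hmema i).mpr (hij.trans ((hmema j).mp hj))))
          a haIa
        have hldge : ∀ l ∈ Ia, ld a u ≤ ld l u := by
          intro l hl
          have hlu : γ l u = γ a u := (hmema l).mp hl
          have hxl : x l ≤ x a := by
            by_contra hxl
            push_neg at hxl
            have hlb : x b ≤ x l → False := by
              intro h
              have := hord b l h u hu0
              linarith
            have h2 : x l < x b := lt_of_not_ge (fun h => hlb h)
            exact hadj l ⟨hxl, h2⟩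
          have hge : ∀ z ∈ Icc (0:ℝ) u, 0 ≤ γ a z - γ l z :=
            fun z hz => by linarith [hord l a hxl z hz.1]
          have := sticky_ld_nonpos hu ((hld a u hu).sub (hld l u hu))
            (by rw [Pi.sub_apply, hlu]; ring) hge
          linarith
        have hsp : 0 < ∑ i ∈ Ia, m i := Finset.sum_pos (fun i _ => hm i) ⟨a, haIa⟩
        rw [havg, le_div_iff₀ hsp]
        calc ld a u * ∑ i ∈ Ia, m i = ∑ i ∈ Ia, m i * ld a u := by
              rw [← Finset.sum_mul]; ring
          _ ≤ ∑ i ∈ Ia, m i * ld i u :=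
              Finset.sum_le_sum (fun i hi => mul_le_mul_of_nonneg_left (hldge i hi) (hm i).le)
      rw [hrdddef, hldddef]
      dsimp only
      linarith
    -- piece monotonicity
    have hpiece : ∀ p q : ℝ, 0 ≤ p → q ≤ t → p < q → (∀ z ∈ Ioo p q, z ∉ F) →
        Al q ≤ A p := by
      intro p q hp hqt hpq hF
      have hq0 : 0 < q := lt_of_le_of_lt hp hpq
      have hIoo0 : ∀ z ∈ Ioo p q, 0 < z := fun z hz => lt_of_le_of_lt hp hz.1
      have hIoo0t : ∀ z ∈ Ioo p q, z ∈ Icc (0:ℝ) t :=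
        fun z hz => ⟨(hIoo0 z hz).le, hz.2.le.trans hqt⟩
      have hργ : ∀ z ∈ Ioo p q, HasDerivAt ρ (rdd z) z :=
        fun z hz => hρder z (hIoo0 z hz) (hF z hz)
      have hrg : ∀ z ∈ Ioo p q, HasDerivAt rdd (g z) z :=
        fun z hz => hrddder z (hIoo0 z hz) (hF z hz)
      have hlip : ∀ z ∈ Ioo p q, ∀ w ∈ Ioo p q, |rdd z - rdd w| ≤ M * |z - w| := by
        have key : ∀ z ∈ Ioo p q, ∀ w ∈ Ioo p q, z < w →
            |rdd w - rdd z| ≤ M * |w - z| := by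
          intro z hz w hw hzw
          obtain ⟨ξ, hξ, hξe⟩ := exists_hasDerivAt_eq_slope rdd g hzw
            (fun y hy => (hrg y ⟨lt_of_lt_of_le hz.1 hy.1,
              lt_of_le_of_lt hy.2 hw.2⟩).continuousAt.continuousWithinAt)
            (fun y hy => hrg y ⟨hz.1.trans hy.1, hy.2.trans hw.2⟩)
          have he : rdd w - rdd z = g ξ * (w - z) := by
            have hne : w - z ≠ 0 := sub_ne_zero.mpr hzw.ne'
            rw [hξe, div_mul_cancel₀ _ hne]
          rw [he, abs_mul]
          have hξ' : ξ ∈ Icc (0:ℝ) t := hIoo0t ξ ⟨hz.1.trans hξ.1, hξ.2.trans hw.2⟩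
          exact mul_le_mul_of_nonneg_right (hMg ξ hξ') (abs_nonneg _)
        intro z hz w hw
        rcases lt_trichotomy z w with h | h | h
        · rw [abs_sub_comm, abs_sub_comm z w]
          exact key z hz w hw h
        · subst h
          simp
        · exact key w hw z hz h
      have hρc : ContinuousOn ρ (Icc p q) :=
        hρcont.mono (fun z hz => hp.trans hz.1)
      have hTr : Tendsto rdd (𝓝[Ioo p q] p) (𝓝 (rdd p)) :=
        sticky_tendsto_right hpq hM hρc hργ hlip (hρr p hp)
      have hTl : Tendsto rdd (𝓝[Ioo p q] q) (𝓝 (ldd q)) :=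
        sticky_tendsto_left hpq hM hρc hργ hlip (hρl q hq0)
      have hsub : Ioo p q ⊆ Ici (0:ℝ) := fun z hz => (hIoo0 z hz).le
      have hρtp : Tendsto ρ (𝓝[Ioo p q] p) (𝓝 (ρ p)) :=
        (hρcont p (mem_Ici.mpr hp)).mono_left (nhdsWithin_mono _ hsub)
      have hρtq : Tendsto ρ (𝓝[Ioo p q] q) (𝓝 (ρ q)) :=
        (hρcont q (mem_Ici.mpr hq0.le)).mono_left (nhdsWithin_mono _ hsub)
      have hshc : Continuous fun z : ℝ => Real.sinh (sc * z) :=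
        Real.continuous_sinh.comp (continuous_const.mul continuous_id)
      have hchc : Continuous fun z : ℝ => sc * Real.cosh (sc * z) :=
        continuous_const.mul (Real.continuous_cosh.comp (continuous_const.mul continuous_id))
      have hcA : Tendsto A (𝓝[Ioo p q] p) (𝓝 (A p)) := by
        rw [hAdef]
        exact (hTr.mul ((hshc.tendsto p).mono_left nhdsWithin_le_nhds)).sub
          (hρtp.mul ((hchc.tendsto p).mono_left nhdsWithin_le_nhds))
      have hcAl : Tendsto A (𝓝[Ioo p q] q) (𝓝 (Al q)) := by
        rw [hAdef, hAldef]
        exact (hTl.mul ((hshc.tendsto q).mono_left nhdsWithin_le_nhds)).sub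
          (hρtq.mul ((hchc.tendsto q).mono_left nhdsWithin_le_nhds))
      have hantA : ∀ z ∈ Ioo p q, ∀ w ∈ Ioo p q, z ≤ w → A w ≤ A z := by
        intro z hz w hw hzw
        have hder : ∀ y ∈ Icc z w, HasDerivAt A ((g y - c * ρ y) * Real.sinh (sc * y)) y := by
          intro y hy
          have hy' : y ∈ Ioo p q := ⟨lt_of_lt_of_le hz.1 hy.1, lt_of_le_of_lt hy.2 hw.2⟩
          have h1 := (hrg y hy').mul (hsh_deriv y)
          have h2 := (hργ y hy').mul (hch_deriv y)
          have h3 := h1.sub h2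
          rw [hAdef]
          refine h3.congr_deriv ?_
          rw [← hscsq]
          ring
        have hcont' : ContinuousOn A (Icc z w) :=
          fun y hy => ((hder y hy).continuousAt).continuousWithinAt
        have hdiff : DifferentiableOn ℝ A (interior (Icc z w)) := by
          intro y hy
          rw [interior_Icc] at hy
          exact ((hder y (Ioo_subset_Icc_self hy)).differentiableAt).differentiableWithinAt
        have hds : ∀ y ∈ interior (Icc z w), deriv A y ≤ 0 := by
          intro y hy
          rw [interior_Icc] at hy
          rw [(hder y (Ioo_subset_Icc_self hy)).deriv]
          have hy' : y ∈ Ioo p q := ⟨lt_of_lt_of_le hz.1 hy.1.le, lt_of_le_of_lt hy.2.le hw.2⟩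
          have h1 : g y - c * ρ y ≤ 0 := by
            have := hgb y (hIoo0t y hy')
            linarith
          have h2 : 0 ≤ Real.sinh (sc * y) :=
            (Real.sinh_pos_iff.mpr (mul_pos hsc (hIoo0 y hy'))).le
          exact mul_nonpos_of_nonpos_of_nonneg h1 h2
        exact antitoneOn_of_deriv_nonpos (convex_Icc z w) hcont' hdiff hds
          (left_mem_Icc.mpr hzw) (right_mem_Icc.mpr hzw) hzw
      have hnbq : (𝓝[Ioo p q] q).NeBot := right_nhdsWithin_Ioo_neBot hpq
      have hnbp : (𝓝[Ioo p q] p).NeBot := left_nhdsWithin_Ioo_neBot hpq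
      have step1 : ∀ z ∈ Ioo p q, Al q ≤ A z := by
        intro z hz
        apply le_of_tendsto hcAl
        have hev : ∀ᶠ w in 𝓝[Ioo p q] q, z < w :=
          eventually_nhdsWithin_of_eventually_nhds (eventually_gt_nhds hz.2)
        filter_upwards [hev, self_mem_nhdsWithin] with w h1 h2
        exact hantA z hz w h2 h1.le
      apply ge_of_tendsto hcA
      filter_upwards [self_mem_nhdsWithin] with z hz
      exact step1 z hz
    -- A at time 0
    have hA0 : A 0 ≤ 0 := by
      rw [hAdef]
      simp only [mul_zero, Real.sinh_zero, Real.cosh_zero, mul_one, zero_mul]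
      have hρ0 : ρ 0 = x b - x a := by rw [hρdef]; simp [hinit]
      rw [hρ0]
      nlinarith
    -- A u ≤ Al u for 0 < u ≤ t
    have hAAl : ∀ u : ℝ, 0 < u → u ≤ t → A u ≤ Al u := by
      intro u hu hut
      have h1 := hjump u hu hut
      have h2 : 0 ≤ Real.sinh (sc * u) := (Real.sinh_pos_iff.mpr (mul_pos hsc hu)).le
      rw [hAdef, hAldef]
      dsimp only
      nlinarith
    -- induction over collision times
    have hkey : ∀ n : ℕ, ∀ u : ℝ, 0 < u → u ≤ t →
        (F.filter (fun z => z ∈ Ioo (0:ℝ) u)).card ≤ n → Al u ≤ 0 := by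
      intro n
      induction n with
      | zero =>
        intro u h1 h2 hcard
        have hF0 : ∀ z ∈ Ioo (0:ℝ) u, z ∉ F := by
          intro z hz hzF
          have hmem : z ∈ F.filter (fun z => z ∈ Ioo (0:ℝ) u) :=
            Finset.mem_filter.mpr ⟨hzF, hz⟩
          have := Finset.card_pos.mpr ⟨z, hmem⟩
          omega
        exact (hpiece 0 u le_rfl h2 h1 hF0).trans hA0
      | succ n ih =>
        intro u h1 h2 hcard
        by_cases hE : (F.filter (fun z => z ∈ Ioo (0:ℝ) u)).Nonempty
        · set τ := (F.filter (fun z => z ∈ Ioo (0:ℝ) u)).max' hE with hτdef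
          have hτmem := Finset.mem_filter.mp
            ((F.filter (fun z => z ∈ Ioo (0:ℝ) u)).max'_mem hE)
          have hτF : τ ∈ F := hτmem.1
          have hτIoo : τ ∈ Ioo (0:ℝ) u := hτmem.2
          have hFτ : ∀ z ∈ Ioo τ u, z ∉ F := by
            intro z hz hzF
            have hmem : z ∈ F.filter (fun z => z ∈ Ioo (0:ℝ) u) :=
              Finset.mem_filter.mpr ⟨hzF, ⟨hτIoo.1.trans hz.1, hz.2⟩⟩
            have := Finset.le_max' _ z hmem
            rw [← hτdef] at this
            linarith [hz.1]
          have h5 : Al u ≤ A τ := hpiece τ u hτIoo.1.le h2 hτIoo.2 hFτ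
          have h6 : A τ ≤ Al τ := hAAl τ hτIoo.1 (hτIoo.2.le.trans h2)
          have h7 : Al τ ≤ 0 := by
            apply ih τ hτIoo.1 (hτIoo.2.le.trans h2)
            have hsub : F.filter (fun z => z ∈ Ioo (0:ℝ) τ) ⊆
                (F.filter (fun z => z ∈ Ioo (0:ℝ) u)).erase τ := by
              intro z hz
              obtain ⟨hzF, hzI⟩ := Finset.mem_filter.mp hz
              exact Finset.mem_erase.mpr ⟨ne_of_lt hzI.2,
                Finset.mem_filter.mpr ⟨hzF, ⟨hzI.1, hzI.2.trans hτIoo.2⟩⟩⟩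
            have h8 := Finset.card_le_card hsub
            rw [Finset.card_erase_of_mem ((F.filter (fun z => z ∈ Ioo (0:ℝ) u)).max'_mem hE)]
              at h8
            omega
          linarith
        · have hF0 : ∀ z ∈ Ioo (0:ℝ) u, z ∉ F :=
            fun z hz hzF => hE ⟨z, Finset.mem_filter.mpr ⟨hzF, hz⟩⟩
          exact (hpiece 0 u le_rfl h2 h1 hF0).trans hA0
    have hAneg : ∀ u : ℝ, 0 < u → u ≤ t → A u ≤ 0 := by
      intro u h1 h2
      exact (hAAl u h1 h2).trans (hkey _ u h1 h2 le_rfl)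
    -- final fencing argument on [s, t]
    have hshne : ∀ z ∈ Icc s t, Real.sinh (sc * z) ≠ 0 :=
      fun z hz => (Real.sinh_pos_iff.mpr (mul_pos hsc (hs.trans_le hz.1))).ne'
    have hshc : Continuous fun z : ℝ => Real.sinh (sc * z) :=
      Real.continuous_sinh.comp (continuous_const.mul continuous_id)
    have hfcont : ContinuousOn (fun u => ρ u / Real.sinh (sc * u)) (Icc s t) :=
      ContinuousOn.div (hρcont.mono (fun z hz => (hs.le.trans hz.1 : (0:ℝ) ≤ z)))
        hshc.continuousOn hshne
    have hfder : ∀ z ∈ Ico s t, HasDerivWithinAt (fun u => ρ u / Real.sinh (sc * u))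
        (A z / (Real.sinh (sc * z)) ^ 2) (Ici z) z := by
      intro z hz
      have hz0 : (0:ℝ) ≤ z := (hs.trans_le hz.1).le
      have hne : Real.sinh (sc * z) ≠ 0 := hshne z ⟨hz.1, hz.2.le⟩
      have := (hρr z hz0).div ((hsh_deriv z).hasDerivWithinAt) hne
      refine this.congr_deriv ?_
      rw [hAdef]
      ring
    have hbound : ∀ z ∈ Ico s t, A z / (Real.sinh (sc * z)) ^ 2 ≤ 0 := by
      intro z hz
      exact div_nonpos_of_nonpos_of_nonneg (hAneg z (hs.trans_le hz.1) hz.2.le) (sq_nonneg _)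
    have hmain := image_le_of_deriv_right_le_deriv_boundary hfcont hfder
      (le_refl (ρ s / Real.sinh (sc * s))) continuousOn_const
      (fun z _ => hasDerivWithinAt_const z _ (ρ s / Real.sinh (sc * s))) hbound
      (right_mem_Icc.mpr hstt)
    have hfin : ρ t / Real.sinh (sc * t) ≤ ρ s / Real.sinh (sc * s) := hmain
    rw [div_le_div_iff₀ hsht hshs] at hfin
    have e1 : ρ t = γ b t - γ a t := rfl
    have e2 : ρ s = γ b s - γ a s := rfl
    rw [e1, e2] at hfin
    rw [div_mul_eq_mul_div, le_div_iff₀ hshs]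
    linarith

/-- Proposition 3.5: existence of the Lipschitz transition maps `f_{t,s}`. -/
theorem sticky_particle_transition_maps
    (N : ℕ) (x m v : Fin N → ℝ) (W : ℝ → ℝ) (c : ℝ)
    (hx : Function.Injective x)
    (hm : ∀ i, 0 < m i) (hsum : ∑ i, m i = 1)
    (hW : WHyp W c)
    (γ rd ld : Fin N → ℝ → ℝ)
    (hγ : StickyTrajectories N x m v W γ rd ld) :
    ∀ s t : ℝ, 0 < s → s ≤ t →
      ∃ f : ℝ → ℝ,
        (∀ i, γ i t = f (γ i s)) ∧
        (∀ a b : ℝ, |f a - f b| ≤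
          (Real.sinh (Real.sqrt c * t) / Real.sinh (Real.sqrt c * s)) * |a - b|) := by
  intro s t hs hstt
  obtain ⟨hW1, _hWeven, _hWgrow, hc, hWc⟩ := hW
  obtain ⟨hcont, hrd, hld, ⟨F, hNew⟩, hinit, _hv, hstick, hcol⟩ := hγ
  set L := Real.sinh (Real.sqrt c * t) / Real.sinh (Real.sqrt c * s) with hLdef
  have hsc : 0 < Real.sqrt c := Real.sqrt_pos.mpr hc
  have hshs : 0 < Real.sinh (Real.sqrt c * s) := Real.sinh_pos_iff.mpr (mul_pos hsc hs)
  have hsht : 0 < Real.sinh (Real.sqrt c * t) :=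
    Real.sinh_pos_iff.mpr (mul_pos hsc (hs.trans_le hstt))
  have hL0 : 0 ≤ L := div_nonneg hsht.le hshs.le
  have hord : ∀ i j, x i ≤ x j → ∀ u : ℝ, 0 ≤ u → γ i u ≤ γ j u := by
    intro i j hij u hu
    exact sticky_order hcont hstick le_rfl hu (by rw [hinit, hinit]; exact hij)
  have hEord : ∀ n : ℕ, ∀ i j, x i < x j →
      (Finset.univ.filter (fun l => x i < x l ∧ x l < x j)).card ≤ n →
      γ j t - γ i t ≤ L * (γ j s - γ i s) := by
    intro n
    induction n with
    | zero =>
      intro i j hij hcard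
      apply sticky_gap hm hsum hW1 hc hWc hcont hrd hld F hNew hinit hstick hcol hij ?_ hs hstt
      intro l hl
      have hmem : l ∈ Finset.univ.filter (fun l => x i < x l ∧ x l < x j) :=
        Finset.mem_filter.mpr ⟨Finset.mem_univ l, hl⟩
      have := Finset.card_pos.mpr ⟨l, hmem⟩
      omega
    | succ n ih =>
      intro i j hij hcard
      by_cases hne : (Finset.univ.filter (fun l => x i < x l ∧ x l < x j)).Nonempty
      · obtain ⟨l, hl⟩ := hne
        have hl' := (Finset.mem_filter.mp hl).2
        have hcard1 : (Finset.univ.filter (fun z => x i < x z ∧ x z < x l)).card ≤ n := by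
          have hsub : Finset.univ.filter (fun z => x i < x z ∧ x z < x l) ⊆
              (Finset.univ.filter (fun z => x i < x z ∧ x z < x j)).erase l := by
            intro z hz
            have hz' := (Finset.mem_filter.mp hz).2
            refine Finset.mem_erase.mpr ⟨?_, Finset.mem_filter.mpr
              ⟨Finset.mem_univ z, ⟨hz'.1, hz'.2.trans hl'.2⟩⟩⟩
            intro h
            subst h
            exact lt_irrefl _ hz'.2
          have h8 := Finset.card_le_card hsub
          rw [Finset.card_erase_of_mem hl] at h8
          omega
        have hcard2 : (Finset.univ.filter (fun z => x l < x z ∧ x z < x j)).card ≤ n := by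
          have hsub : Finset.univ.filter (fun z => x l < x z ∧ x z < x j) ⊆
              (Finset.univ.filter (fun z => x i < x z ∧ x z < x j)).erase l := by
            intro z hz
            have hz' := (Finset.mem_filter.mp hz).2
            refine Finset.mem_erase.mpr ⟨?_, Finset.mem_filter.mpr
              ⟨Finset.mem_univ z, ⟨hl'.1.trans hz'.1, hz'.2⟩⟩⟩
            intro h
            subst h
            exact lt_irrefl _ hz'.1
          have h8 := Finset.card_le_card hsub
          rw [Finset.card_erase_of_mem hl] at h8
          omega
        have e1 := ih i l hl'.1 hcard1
        have e2 := ih l j hl'.2 hcard2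
        linarith
      · apply sticky_gap hm hsum hW1 hc hWc hcont hrd hld F hNew hinit hstick hcol hij ?_ hs hstt
        intro l hl
        exact hne ⟨l, Finset.mem_filter.mpr ⟨Finset.mem_univ l, hl⟩⟩
  have hpair : ∀ i j, |γ i t - γ j t| ≤ L * |γ i s - γ j s| := by
    have hone : ∀ i j, x i < x j → |γ i t - γ j t| ≤ L * |γ i s - γ j s| := by
      intro i j h
      have h1 : γ i t ≤ γ j t := hord i j h.le t (hs.le.trans hstt)
      have h2 : γ i s ≤ γ j s := hord i j h.le s hs.le
      have h3 := hEord _ i j h le_rfl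
      rw [abs_sub_comm, abs_of_nonneg (by linarith), abs_sub_comm (γ i s),
        abs_of_nonneg (by linarith)]
      exact h3
    intro i j
    rcases lt_trichotomy (x i) (x j) with h | h | h
    · exact hone i j h
    · have : i = j := hx h
      subst this
      simp [mul_zero]
    · rw [abs_sub_comm, abs_sub_comm (γ i s)]
      exact hone j i h
  classical
  set f0 : ℝ → ℝ := fun z => if hz : ∃ i, γ i s = z then γ (hz.choose) t else 0 with hf0
  have hf0val : ∀ i, f0 (γ i s) = γ i t := by
    intro i
    have hz : ∃ i', γ i' s = γ i s := ⟨i, rfl⟩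
    rw [hf0]
    dsimp only
    rw [dif_pos hz]
    exact hstick hz.choose i s t hs.le hstt hz.choose_spec
  have hlipon : LipschitzOnWith (Real.toNNReal L) f0 (Set.range (fun i => γ i s)) := by
    rw [lipschitzOnWith_iff_dist_le_mul]
    rintro z hz w hw
    obtain ⟨i, rfl⟩ := hz
    obtain ⟨j, rfl⟩ := hw
    rw [Real.dist_eq, Real.dist_eq, hf0val i, hf0val j, Real.coe_toNNReal L hL0]
    exact hpair i j
  obtain ⟨f, hf, hEq⟩ := hlipon.extend_real
  refine ⟨f, ?_, ?_⟩
  · intro i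
    rw [← hEq (Set.mem_range_self i), hf0val i]
  · intro p q
    have hd := hf.dist_le_mul p q
    rw [Real.dist_eq, Real.dist_eq, Real.coe_toNNReal L hL0] at hd
    exact hd

end
end
end
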